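/- arXiv:1803.06816 — 11 statements merged into one kernel-verified Lean document; each statement's English description precedes it below -/
import Mathlib

section
/- If two token-placements f and f' on a graph G assign, for every connected component of G and every color, the same number of tokens of that color to that component, then f can be transformed into f' by a swapping sequence of length at most n(n-1)/2, where n is the number of vertices of G. -/
/-- `f'` is obtained from `f` by swapping the tokens on two adjacent vertices. -/
def SwapStep {V C : Type*} (G : SimpleGraph V) (f f' : V → C) : Prop :=
  ∃ u v, G.Adj u v ∧ f' u = f v ∧ f' v = f u ∧ ∀ w, w ≠ u → w ≠ v → f' w = f w

/-- There is a swapping sequence of length `k` transforming `f` into `f'`. -/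
def Reach {V C : Type*} (G : SimpleGraph V) (f f' : V → C) (k : ℕ) : Prop :=
  ∃ g : ℕ → V → C, g 0 = f ∧ g k = f' ∧ ∀ i < k, SwapStep G (g i) (g (i + 1))

lemma Reach.trans' {V C : Type*} {G : SimpleGraph V} {f₁ f₂ f₃ : V → C} {k₁ k₂ : ℕ}
    (h1 : Reach G f₁ f₂ k₁) (h2 : Reach G f₂ f₃ k₂) : Reach G f₁ f₃ (k₁ + k₂) := by
  obtain ⟨g1, hg10, hg1k, hg1s⟩ := h1
  obtain ⟨g2, hg20, hg2k, hg2s⟩ := h2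
  classical
  refine ⟨fun i => if i ≤ k₁ then g1 i else g2 (i - k₁), by simp [hg10], ?_, ?_⟩
  · by_cases hk : k₂ = 0
    · subst hk
      simp only [Nat.add_zero, le_refl, if_pos]
      rw [hg1k, ← hg20, hg2k]
    · have : ¬ (k₁ + k₂ ≤ k₁) := by omega
      simp only [this, if_neg, Nat.add_sub_cancel_left, hg2k, if_false]
  · have hmid : ∀ i, k₁ ≤ i → (if i ≤ k₁ then g1 i else g2 (i - k₁)) = g2 (i - k₁) := by
      intro i hi
      rcases eq_or_lt_of_le hi with h | h
      · subst h
        simp [hg1k, ← hg20]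
      · simp [Nat.not_le.mpr h]
    intro i hi
    by_cases h : i + 1 ≤ k₁
    · have h' : i ≤ k₁ := by omega
      simp only [h, h', if_pos]
      exact hg1s i (by omega)
    · have h' : k₁ ≤ i := by omega
      simp only [hmid i h', hmid (i + 1) (by omega)]
      have he : i + 1 - k₁ = (i - k₁) + 1 := by omega
      rw [he]
      exact hg2s (i - k₁) (by omega)

lemma SwapStep.reach {V C : Type*} {G : SimpleGraph V} {f f₁ : V → C}
    (h : SwapStep G f f₁) : Reach G f f₁ 1 := by
  classical
  refine ⟨fun i => if i = 0 then f else f₁, by simp, by simp, ?_⟩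
  intro i hi
  have : i = 0 := by omega
  subst this
  simpa using h

/-- Moving a token along a walk: we obtain a placement whose value at the end of the
walk is the original value at the start, in `p.length` swaps. -/
lemma reach_walk {V C : Type*} {G : SimpleGraph V} {u v : V} (p : G.Walk u v) (f : V → C) :
    ∃ f₁ : V → C, f₁ v = f u ∧ Reach G f f₁ p.length := by
  classical
  induction p generalizing f with
  | nil => exact ⟨f, rfl, fun _ => f, rfl, rfl, fun i hi => absurd hi (Nat.not_lt_zero i)⟩
  | @cons a b c h q ih =>
    set f₂ : V → C := fun x => if x = a then f b else if x = b then f a else f x with hf₂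
    have hab : a ≠ b := h.ne
    have hstep : SwapStep G f f₂ := by
      refine ⟨a, b, h, by simp [hf₂], by simp [hf₂, hab.symm], ?_⟩
      intro w hwa hwb
      simp [hf₂, hwa, hwb]
    obtain ⟨f₁, hf₁, hr⟩ := ih f₂
    refine ⟨f₁, ?_, ?_⟩
    · rw [hf₁]
      simp [hf₂, hab.symm]
    · have := Reach.trans' hstep.reach hr
      simpa [SimpleGraph.Walk.length_cons, Nat.add_comm] using this

lemma SwapStep.count {V C : Type*} {G : SimpleGraph V} {f f₁ : V → C}
    (h : SwapStep G f f₁) (w : V) (a : C) :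
    Nat.card {x : V | G.Reachable w x ∧ f x = a} =
    Nat.card {x : V | G.Reachable w x ∧ f₁ x = a} := by
  classical
  obtain ⟨u, v, huv, h1, h2, h3⟩ := h
  have hr : G.Reachable w u ↔ G.Reachable w v :=
    ⟨fun h => h.trans huv.reachable, fun h => h.trans huv.symm.reachable⟩
  refine Nat.card_congr ((Equiv.swap u v).subtypeEquiv fun x => ?_)
  simp only [Set.mem_setOf_eq]
  rcases eq_or_ne x u with rfl | hxu
  · rw [Equiv.swap_apply_left, h2, hr]
  rcases eq_or_ne x v with rfl | hxv
  · rw [Equiv.swap_apply_right, h1, hr]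
  · rw [Equiv.swap_apply_of_ne_of_ne hxu hxv, h3 x hxu hxv]

lemma Reach.count {V C : Type*} {G : SimpleGraph V} {f f' : V → C} {k : ℕ}
    (h : Reach G f f' k) (w : V) (a : C) :
    Nat.card {x : V | G.Reachable w x ∧ f x = a} =
    Nat.card {x : V | G.Reachable w x ∧ f' x = a} := by
  obtain ⟨g, h0, hk, hs⟩ := h
  rw [← h0, ← hk]
  have H : ∀ i ≤ k,
      Nat.card {x : V | G.Reachable w x ∧ g 0 x = a} =
      Nat.card {x : V | G.Reachable w x ∧ g i x = a} := by
    intro i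
    induction i with
    | zero => intro _; rfl
    | succ i ihi =>
      intro hik
      exact (ihi (by omega)).trans ((hs i (by omega)).count w a)
  exact H k le_rfl

/-- Lifting a swapping sequence from the induced subgraph on `{w // w ≠ v}` to `G`,
keeping a fixed token `c` on `v`. -/
lemma reach_lift {V C : Type*} [DecidableEq V] {G : SimpleGraph V} (v : V) (c : C)
    {g g' : {w : V // w ≠ v} → C} {k : ℕ}
    (h : Reach (G.comap (Subtype.val : {w : V // w ≠ v} → V)) g g' k) :
    Reach G (fun x => if hx : x = v then c else g ⟨x, hx⟩)
            (fun x => if hx : x = v then c else g' ⟨x, hx⟩) k := by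
  obtain ⟨s, h0, hk, hs⟩ := h
  refine ⟨fun i x => if hx : x = v then c else s i ⟨x, hx⟩, by simp [h0], by simp [hk], ?_⟩
  intro i hi
  obtain ⟨p, q, hpq, h1, h2, h3⟩ := hs i hi
  refine ⟨p.val, q.val, hpq, ?_, ?_, ?_⟩
  · simp only [dif_neg p.prop, dif_neg q.prop, Subtype.coe_eta]
    exact h1
  · simp only [dif_neg p.prop, dif_neg q.prop, Subtype.coe_eta]
    exact h2
  · intro x hxp hxq
    by_cases hx : x = v
    · simp [hx]
    · simp only [dif_neg hx]
      exact h3 ⟨x, hx⟩ (fun he => hxp (congrArg Subtype.val he))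
        (fun he => hxq (congrArg Subtype.val he))

/-- A walk avoiding `v` gives reachability in the induced subgraph on `{w // w ≠ v}`. -/
lemma reachable_comap_of_walk {V : Type*} {G : SimpleGraph V} {v : V} :
    ∀ {a b : V} (p : G.Walk a b) (ha : a ≠ v) (hb : b ≠ v), (∀ x ∈ p.support, x ≠ v) →
    (G.comap (Subtype.val : {w : V // w ≠ v} → V)).Reachable ⟨a, ha⟩ ⟨b, hb⟩ := by
  intro a b p
  induction p with
  | nil => intro ha hb _; rfl
  | @cons a c b h q ih =>
    intro ha hb hsup
    have hc : c ≠ v := hsup c (by simp [SimpleGraph.Walk.support_cons,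
      SimpleGraph.Walk.start_mem_support])
    have hadj : (G.comap (Subtype.val : {w : V // w ≠ v} → V)).Adj ⟨a, ha⟩ ⟨c, hc⟩ := h
    refine hadj.reachable.trans (ih hc hb ?_)
    intro x hx
    exact hsup x (by simp [SimpleGraph.Walk.support_cons, hx])

theorem reach_aux {C : Type u_1} : ∀ (n : ℕ) {V : Type u_2} [Fintype V],
    Fintype.card V = n →
    ∀ (G : SimpleGraph V) (f f' : V → C),
    (∀ (w : V) (a : C),
      Nat.card {x : V | G.Reachable w x ∧ f x = a} =
      Nat.card {x : V | G.Reachable w x ∧ f' x = a}) →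
    ∃ k ≤ n * (n - 1) / 2, Reach G f f' k := by
  intro n
  induction n with
  | zero =>
    intro V _ hcard G f f' h
    have hE : IsEmpty V := Fintype.card_eq_zero_iff.mp hcard
    have hf : f = f' := funext fun x => (hE.false x).elim
    exact ⟨0, by simp, fun _ => f, rfl, hf, fun i hi => absurd hi (Nat.not_lt_zero i)⟩
  | succ m ih =>
    intro V _ hcard G f f' h
    classical
    have hne : Nonempty V := Fintype.card_pos_iff.mp (by omega)
    obtain ⟨r⟩ := hne
    obtain ⟨v, hvmem, hvmax⟩ := Finset.exists_max_image
      (Finset.univ.filter fun x => G.Reachable r x) (G.dist r)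
      ⟨r, by simpa using SimpleGraph.Reachable.refl r⟩
    have hrv : G.Reachable r v := by simpa using hvmem
    have hvmax' : ∀ x, G.Reachable r x → G.dist r x ≤ G.dist r v := by
      intro x hx
      exact hvmax x (by simpa using hx)
    -- any vertex ≠ v reachable from r has a walk to r avoiding v
    have avoid : ∀ w, w ≠ v → G.Reachable r w → ∃ p : G.Walk w r, v ∉ p.support := by
      intro w hwv hrw
      obtain ⟨p, hp⟩ := hrw.symm.exists_walk_length_eq_dist
      refine ⟨p, fun hvp => ?_⟩
      have hsplit := SimpleGraph.Walk.take_spec p hvp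
      have hlen : (p.takeUntil v hvp).length + (p.dropUntil v hvp).length = p.length := by
        conv_rhs => rw [← hsplit]
        rw [SimpleGraph.Walk.length_append]
      have h2 : G.dist v r ≤ (p.dropUntil v hvp).length := SimpleGraph.dist_le _
      have h3 : 1 ≤ (p.takeUntil v hvp).length := by
        rcases Nat.eq_zero_or_pos (p.takeUntil v hvp).length with h0 | h0
        · exact absurd (SimpleGraph.Walk.eq_of_length_eq_zero h0) hwv
        · exact h0
      have h4 : G.dist r w ≤ G.dist r v := hvmax' w hrw
      have h5 : G.dist v r = G.dist r v := SimpleGraph.dist_comm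
      have h6 : G.dist w r = G.dist r w := SimpleGraph.dist_comm
      omega
    -- removing v does not disconnect anything else
    have ncut : ∀ (w x : V) (hw : w ≠ v) (hx : x ≠ v), G.Reachable w x →
        (G.comap (Subtype.val : {y : V // y ≠ v} → V)).Reachable ⟨w, hw⟩ ⟨x, hx⟩ := by
      intro w x hw hx hwx
      by_cases hr : G.Reachable r w
      · obtain ⟨p, hp⟩ := avoid w hw hr
        obtain ⟨q, hq⟩ := avoid x hx (hr.trans hwx)
        refine reachable_comap_of_walk (p.append q.reverse) hw hx ?_
        intro y hy
        rintro rfl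
        rw [SimpleGraph.Walk.mem_support_append_iff] at hy
        rcases hy with hy | hy
        · exact hp hy
        · rw [SimpleGraph.Walk.support_reverse, List.mem_reverse] at hy
          exact hq hy
      · obtain ⟨p⟩ := hwx
        refine reachable_comap_of_walk p hw hx ?_
        intro y hy hyv
        have hy' : v ∈ p.support := hyv ▸ hy
        have hw' : G.Reachable w v := ⟨p.takeUntil v hy'⟩
        exact hr (hrv.trans hw'.symm)
    -- forward reachability
    have fwd : ∀ {a b : {y : V // y ≠ v}},
        (G.comap (Subtype.val : {y : V // y ≠ v} → V)).Reachable a b →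
        G.Reachable a.val b.val := by
      intro a b hab
      exact hab.map (⟨Subtype.val, fun h => h⟩ :
        G.comap (Subtype.val : {y : V // y ≠ v} → V) →g G)
    -- find a token of color f' v reachable from v
    have hcnt := h v (f' v)
    have hpos : 0 < Nat.card {x : V | G.Reachable v x ∧ f x = f' v} := by
      rw [hcnt]
      exact Nat.card_pos_iff.mpr ⟨⟨⟨v, SimpleGraph.Reachable.refl v, rfl⟩⟩, inferInstance⟩
    obtain ⟨⟨u, hu1, hu2⟩⟩ := (Nat.card_pos_iff.mp hpos).1
    -- bring the token at u to v
    obtain ⟨p0⟩ := hu1.symm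
    set P := p0.toPath with hP
    have hlenP : P.val.length ≤ m := by
      have := P.prop.length_lt
      omega
    obtain ⟨f₁, hf₁v, hreach1⟩ := reach_walk P.val f
    have hf₁v' : f₁ v = f' v := by rw [hf₁v, hu2]
    have hcount1 : ∀ w a,
        Nat.card {x : V | G.Reachable w x ∧ f₁ x = a} =
        Nat.card {x : V | G.Reachable w x ∧ f' x = a} := by
      intro w a
      exact (hreach1.count w a).symm.trans (h w a)
    -- set up the induced subgraph
    set G' := G.comap (Subtype.val : {y : V // y ≠ v} → V) with hG'
    have hcard' : Fintype.card {y : V // y ≠ v} = m := by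
      have h1 : Fintype.card {y : V // ¬ (y = v)} = Fintype.card V - Fintype.card {y : V // y = v} :=
        Fintype.card_subtype_compl _
      rw [Fintype.card_subtype_eq] at h1
      have : Fintype.card {y : V // y ≠ v} = Fintype.card {y : V // ¬ (y = v)} := rfl
      omega
    -- transfer the counting hypothesis
    have key : ∀ (F : V → C) (w : {y : V // y ≠ v}) (a : C),
        Nat.card {x : {y : V // y ≠ v} | G'.Reachable w x ∧ F x.val = a} =
        ({x : V | G.Reachable w.val x ∧ F x = a} \ {v}).ncard := by
      intro F w a
      rw [← Nat.card_coe_set_eq]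
      refine Nat.card_congr ⟨fun x => ⟨x.val.val, ⟨fwd x.prop.1, x.prop.2⟩, x.val.prop⟩,
        fun y => ⟨⟨y.val, y.prop.2⟩, ncut w.val y.val w.prop y.prop.2 y.prop.1.1, y.prop.1.2⟩,
        fun x => rfl, fun y => rfl⟩
    have h' : ∀ (w : {y : V // y ≠ v}) (a : C),
        Nat.card {x : {y : V // y ≠ v} | G'.Reachable w x ∧ f₁ x.val = a} =
        Nat.card {x : {y : V // y ≠ v} | G'.Reachable w x ∧ f' x.val = a} := by
      intro w a
      rw [key f₁ w a, key f' w a]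
      have hAB : ({x : V | G.Reachable w.val x ∧ f₁ x = a}).ncard =
          ({x : V | G.Reachable w.val x ∧ f' x = a}).ncard := by
        rw [← Nat.card_coe_set_eq, ← Nat.card_coe_set_eq]
        exact hcount1 w.val a
      by_cases hv : G.Reachable w.val v ∧ f₁ v = a
      · have hvA : v ∈ {x : V | G.Reachable w.val x ∧ f₁ x = a} := hv
        have hvB : v ∈ {x : V | G.Reachable w.val x ∧ f' x = a} :=
          ⟨hv.1, by rw [← hf₁v']; exact hv.2⟩
        rw [Set.ncard_diff_singleton_of_mem hvA,
          Set.ncard_diff_singleton_of_mem hvB, hAB]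
      · have hvA : v ∉ {x : V | G.Reachable w.val x ∧ f₁ x = a} := hv
        have hvB : v ∉ {x : V | G.Reachable w.val x ∧ f' x = a} := by
          intro hc
          exact hv ⟨hc.1, by rw [hf₁v']; exact hc.2⟩
        rw [Set.diff_singleton_eq_self hvA, Set.diff_singleton_eq_self hvB, hAB]
    obtain ⟨k, hk, hreach2⟩ := ih hcard' G' (fun x => f₁ x.val) (fun x => f' x.val) h'
    have hlift := reach_lift v (f' v) hreach2
    have hreach2' : Reach G f₁ f' k := by
      have e1 : (fun x => if hx : x = v then f' v else (fun y : {y : V // y ≠ v} => f₁ y.val) ⟨x, hx⟩) = f₁ := by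
        funext x
        by_cases hx : x = v
        · subst hx; simp [hf₁v'.symm]
        · simp [hx]
      have e2 : (fun x => if hx : x = v then f' v else (fun y : {y : V // y ≠ v} => f' y.val) ⟨x, hx⟩) = f' := by
        funext x
        by_cases hx : x = v
        · subst hx; simp
        · simp [hx]
      rwa [e1, e2] at hlift
    refine ⟨P.val.length + k, ?_, Reach.trans' hreach1 hreach2'⟩
    have heven : 2 ∣ m * (m - 1) := by
      rcases m with _ | m
      · simp
      · have he : (m + 1) * (m + 1 - 1) = m * (m + 1) := by
          simp only [Nat.add_sub_cancel]
          ring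
        rw [he]
        exact (Nat.even_mul_succ_self m).two_dvd
    have hsq : (m + 1) * m = 2 * m + m * (m - 1) := by
      rcases m with _ | m
      · rfl
      · simp only [Nat.add_sub_cancel]
        ring
    have hgoal : (m + 1) * (m + 1 - 1) = (m + 1) * m := rfl
    rw [hgoal]
    obtain ⟨A, hA⟩ : ∃ A, m * (m - 1) = A := ⟨_, rfl⟩
    obtain ⟨B, hB⟩ : ∃ B, (m + 1) * m = B := ⟨_, rfl⟩
    rw [hA] at heven hsq hk
    rw [hB] at hsq ⊢
    omega

/-- If two token-placements agree, on every connected component, on the number of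
tokens of each color, then one can be transformed into the other by a swapping
sequence of length at most `n(n-1)/2`. -/
theorem reach_of_component_counts {V C : Type*} [Fintype V] (G : SimpleGraph V)
    (f f' : V → C)
    (h : ∀ (w : V) (a : C),
      Nat.card {v : V | G.Reachable w v ∧ f v = a} =
      Nat.card {v : V | G.Reachable w v ∧ f' v = a}) :
    ∃ k ≤ Fintype.card V * (Fintype.card V - 1) / 2, Reach G f f' k :=
  reach_aux (Fintype.card V) rfl G f f' h
end

section
/- Let T be a tree and f_0, f_t token-placements with colors in {1,2} such that f_0 ≃ f_t. For each edge e = (x,y), let diff(e) = |n1_0(e) - n1_t(e)|, where n1_0(e) and n1_t(e) are the numbers of color-1 tokens in the component of T - e containing x, under f_0 and f_t respectively. Then OPT(f_0, f_t) ≥ Σ_{e ∈ E(T)} diff(e). -/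
/-- For an edge `e` of `T`, the absolute difference between the numbers of
color-1 tokens, under `f0` and under `ft`, in the component of `T - e`
containing a fixed endpoint of `e`. -/
noncomputable def diffE {V : Type*} (T : SimpleGraph V) (f0 ft : V → Fin 2)
    (e : Sym2 V) : ℕ :=
  Nat.dist
    (Nat.card {v : V | (T.deleteEdges {e}).Reachable (Quot.out e).1 v ∧ f0 v = 1})
    (Nat.card {v : V | (T.deleteEdges {e}).Reachable (Quot.out e).1 v ∧ ft v = 1})

/-- The number of color-1 tokens, under `f`, in the component of `T - e`
containing a fixed endpoint of `e`. -/
noncomputable def numOne {V : Type*} (T : SimpleGraph V) (f : V → Fin 2)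
    (e : Sym2 V) : ℕ :=
  Nat.card {v : V | (T.deleteEdges {e}).Reachable (Quot.out e).1 v ∧ f v = 1}

lemma diffE_eq_dist {V : Type*} (T : SimpleGraph V) (f0 ft : V → Fin 2)
    (e : Sym2 V) : diffE T f0 ft e = Nat.dist (numOne T f0 e) (numOne T ft e) := rfl

lemma ncard_le_succ_of_almost {V : Type*} [Fintype V] (S S' : Set V) (u v : V)
    (hsub : S' \ S ⊆ {u, v}) (hnot : ¬(u ∈ S' \ S ∧ v ∈ S' \ S)) :
    S'.ncard ≤ S.ncard + 1 := by
  have h1 : S' ⊆ S ∪ (S' \ S) := fun x hx => by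
    by_cases hxS : x ∈ S
    · exact Or.inl hxS
    · exact Or.inr ⟨hx, hxS⟩
  by_cases hu : u ∈ S' \ S
  · have hv : v ∉ S' \ S := fun hv => hnot ⟨hu, hv⟩
    have h2 : S' ⊆ insert u S := by
      intro x hx
      rcases h1 hx with h | h
      · exact Set.mem_insert_of_mem _ h
      · rcases hsub h with rfl | rfl
        · exact Set.mem_insert _ _
        · exact absurd h hv
    calc S'.ncard ≤ (insert u S).ncard := Set.ncard_le_ncard h2 (Set.toFinite _)
      _ ≤ S.ncard + 1 := Set.ncard_insert_le _ _
  · have h2 : S' ⊆ insert v S := by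
      intro x hx
      rcases h1 hx with h | h
      · exact Set.mem_insert_of_mem _ h
      · rcases hsub h with rfl | rfl
        · exact absurd h hu
        · exact Set.mem_insert _ _
    calc S'.ncard ≤ (insert v S).ncard := Set.ncard_le_ncard h2 (Set.toFinite _)
      _ ≤ S.ncard + 1 := Set.ncard_insert_le _ _

/-- A swap across `u v` changes the color-1 count of any region by at most 1. -/
lemma count_dist_le_one {V : Type*} [Fintype V] [DecidableEq V]
    (R : V → Prop) {f f' : V → Fin 2} (u v : V)
    (hu : f' u = f v) (hv : f' v = f u) (hw : ∀ w, w ≠ u → w ≠ v → f' w = f w) :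
    Nat.dist (Nat.card {w : V | R w ∧ f w = 1}) (Nat.card {w : V | R w ∧ f' w = 1}) ≤ 1 := by
  set S : Set V := {w : V | R w ∧ f w = 1} with hS
  set S' : Set V := {w : V | R w ∧ f' w = 1} with hS'
  have hsub1 : S' \ S ⊆ {u, v} := by
    intro x hx
    by_contra hxc
    simp only [Set.mem_insert_iff, Set.mem_singleton_iff, not_or] at hxc
    have := hw x hxc.1 hxc.2
    exact hx.2 ⟨hx.1.1, this ▸ hx.1.2⟩
  have hsub2 : S \ S' ⊆ {u, v} := by
    intro x hx
    by_contra hxc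
    simp only [Set.mem_insert_iff, Set.mem_singleton_iff, not_or] at hxc
    have := hw x hxc.1 hxc.2
    exact hx.2 ⟨hx.1.1, this.symm ▸ hx.1.2⟩
  have hnot1 : ¬(u ∈ S' \ S ∧ v ∈ S' \ S) := by
    rintro ⟨⟨⟨_, hu1⟩, hus⟩, ⟨⟨hvR, _⟩, hvs⟩⟩
    exact hvs ⟨hvR, hu ▸ hu1⟩
  have hnot2 : ¬(u ∈ S \ S' ∧ v ∈ S \ S') := by
    rintro ⟨⟨⟨_, hu1⟩, hus⟩, ⟨⟨hvR, _⟩, hvs⟩⟩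
    exact hvs ⟨hvR, hv ▸ hu1⟩
  have h1 : S'.ncard ≤ S.ncard + 1 := ncard_le_succ_of_almost S S' u v hsub1 hnot1
  have h2 : S.ncard ≤ S'.ncard + 1 := ncard_le_succ_of_almost S' S u v hsub2 hnot2
  rw [Nat.card_coe_set_eq, Nat.card_coe_set_eq]
  simp only [Nat.dist]
  omega

/-- A swap across `u v` does not change the color-1 count of either component of
`T - e` when `e ≠ s(u,v)`. -/
lemma numOne_eq_of_ne {V : Type*} [Fintype V] [DecidableEq V]
    (T : SimpleGraph V) {f f' : V → Fin 2} {u v : V} (hadj : T.Adj u v)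
    (hu : f' u = f v) (hv : f' v = f u) (hw : ∀ w, w ≠ u → w ≠ v → f' w = f w)
    (e : Sym2 V) (hne : e ≠ s(u, v)) :
    numOne T f' e = numOne T f e := by
  set G := T.deleteEdges {e} with hG
  set a := (Quot.out e).1 with ha
  have hGadj : G.Adj u v := by
    rw [hG, SimpleGraph.deleteEdges_adj]
    exact ⟨hadj, by simpa using fun h => hne h.symm⟩
  have hRuv : G.Reachable a u ↔ G.Reachable a v :=
    ⟨fun h => h.trans hGadj.reachable, fun h => h.trans hGadj.symm.reachable⟩
  set σ : Equiv.Perm V := Equiv.swap u v with hσ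
  have hfcomp : ∀ w, f' w = f (σ w) := by
    intro w
    by_cases h1 : w = u
    · subst h1; rwa [hσ, Equiv.swap_apply_left]
    by_cases h2 : w = v
    · subst h2; rwa [hσ, Equiv.swap_apply_right]
    · rw [hσ, Equiv.swap_apply_of_ne_of_ne h1 h2]; exact hw w h1 h2
  have hRcomp : ∀ w, G.Reachable a (σ w) ↔ G.Reachable a w := by
    intro w
    by_cases h1 : w = u
    · subst h1; rw [hσ, Equiv.swap_apply_left]; exact hRuv.symm
    by_cases h2 : w = v
    · subst h2; rw [hσ, Equiv.swap_apply_right]; exact hRuv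
    · rw [hσ, Equiv.swap_apply_of_ne_of_ne h1 h2]
  have hset : {w : V | G.Reachable a w ∧ f' w = 1} =
      σ ⁻¹' {w : V | G.Reachable a w ∧ f w = 1} := by
    ext w
    simp only [Set.mem_setOf_eq, Set.mem_preimage, hRcomp w, hfcomp w]
  unfold numOne
  rw [← hG, ← ha, hset, Nat.card_coe_set_eq, Nat.card_coe_set_eq,
    Set.ncard_preimage_of_injective_subset_range σ.injective
      (by rw [Set.range_eq_univ.mpr σ.surjective]; exact Set.subset_univ _)]

lemma sum_diff_step {V : Type*} [Fintype V] [DecidableEq V]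
    (T : SimpleGraph V) [Fintype T.edgeSet] (ft : V → Fin 2)
    {f f' : V → Fin 2} (h : SwapStep T f f') :
    ∑ e ∈ T.edgeFinset, diffE T f ft e ≤ 1 + ∑ e ∈ T.edgeFinset, diffE T f' ft e := by
  obtain ⟨u, v, hadj, hu, hv, hw⟩ := h
  have htri : ∀ e ∈ T.edgeFinset, diffE T f ft e ≤
      Nat.dist (numOne T f e) (numOne T f' e) + diffE T f' ft e := by
    intro e _
    rw [diffE_eq_dist, diffE_eq_dist]
    exact Nat.dist.triangle_inequality _ _ _
  calc ∑ e ∈ T.edgeFinset, diffE T f ft e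
      ≤ ∑ e ∈ T.edgeFinset, (Nat.dist (numOne T f e) (numOne T f' e) + diffE T f' ft e) :=
        Finset.sum_le_sum htri
    _ = (∑ e ∈ T.edgeFinset, Nat.dist (numOne T f e) (numOne T f' e)) +
        ∑ e ∈ T.edgeFinset, diffE T f' ft e := Finset.sum_add_distrib
    _ ≤ 1 + ∑ e ∈ T.edgeFinset, diffE T f' ft e := by
        gcongr
        have he0 : s(u, v) ∈ T.edgeFinset := by
          rw [SimpleGraph.mem_edgeFinset]; exact hadj
        rw [Finset.sum_eq_single_of_mem s(u, v) he0]
        · exact count_dist_le_one _ u v hu hv hw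
        · intro e _ hne
          rw [numOne_eq_of_ne T hadj hu hv hw e hne, Nat.dist_self]

/-- On a tree, the minimum number of swaps is at least `Σ_e diff(e)`. -/
theorem tree_opt_ge_sum_diff {V : Type*} [Fintype V] [DecidableEq V]
    (T : SimpleGraph V) [Fintype T.edgeSet] (hT : T.IsTree) (f0 ft : V → Fin 2)
    (hsim : Nat.card {v : V | f0 v = 1} = Nat.card {v : V | ft v = 1})
    (k : ℕ) (hk : Reach T f0 ft k) :
    ∑ e ∈ T.edgeFinset, diffE T f0 ft e ≤ k := by
  obtain ⟨g, hg0, hgk, hstep⟩ := hk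
  have key : ∀ j, j ≤ k → ∑ e ∈ T.edgeFinset, diffE T (g (k - j)) ft e ≤ j := by
    intro j
    induction j with
    | zero =>
      intro _
      simp only [Nat.sub_zero, hgk]
      have : ∀ e ∈ T.edgeFinset, diffE T ft ft e = 0 := by
        intro e _
        rw [diffE_eq_dist, Nat.dist_self]
      rw [Finset.sum_congr rfl this]
      simp
    | succ j ih =>
      intro hj
      have hj' : j ≤ k := Nat.le_of_succ_le hj
      have hlt : k - (j + 1) < k := by omega
      have heq : k - (j + 1) + 1 = k - j := by omega
      have hstep' : SwapStep T (g (k - (j + 1))) (g (k - j)) := by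
        have := hstep (k - (j + 1)) hlt
        rwa [heq] at this
      calc ∑ e ∈ T.edgeFinset, diffE T (g (k - (j + 1))) ft e
          ≤ 1 + ∑ e ∈ T.edgeFinset, diffE T (g (k - j)) ft e :=
            sum_diff_step T ft hstep'
        _ ≤ 1 + j := by gcongr; exact ih hj'
        _ = j + 1 := by omega
  have := key k le_rfl
  simpa [hg0] using this
end

section
/- Let T be a tree with 2-colored token-placements f_0 ≃ f_t and D = Σ_{e ∈ E(T)} diff(e). If D ≠ 0, then there exists an edge e = (u,v) in T such that f_0(u) ≠ f_0(v), and swapping the tokens on u and v yields a placement f' with Σ_{e ∈ E(T)} diff'(e) = D - 1 (where diff' is computed with respect to f' and f_t). -/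
namespace TokenTools

open SimpleGraph Finset
open scoped Classical

set_option linter.unusedSectionVars false
set_option linter.unnecessarySeqFocus false

variable {V : Type*} [Fintype V] [DecidableEq V]

/-- Finset of vertices reachable from `x` in `T` minus the edge `s(x,y)`. -/
noncomputable def sideF (T : SimpleGraph V) (x y : V) : Finset V :=
  univ.filter (fun v => (T.deleteEdges {s(x,y)}).Reachable x v)

/-- Vertices in the `x`-side with `f`-color 1. -/
noncomputable def cntF (T : SimpleGraph V) (f : V → Fin 2) (x y : V) : Finset V :=
  (sideF T x y).filter (fun v => f v = 1)

/-- Neighbours of `x`. -/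
noncomputable def nbr (T : SimpleGraph V) (x : V) : Finset V :=
  univ.filter (fun w => T.Adj x w)

/-- Signed surplus of color-1 tokens on the `a`-side of the edge `s(a,b)`. -/
noncomputable def gZ (T : SimpleGraph V) (f0 ft : V → Fin 2) (a b : V) : ℤ :=
  ((cntF T f0 a b).card : ℤ) - ((cntF T ft a b).card : ℤ)

lemma mem_nbr {T : SimpleGraph V} {x w : V} : w ∈ nbr T x ↔ T.Adj x w := by simp [nbr]

lemma mem_sideF {T : SimpleGraph V} {x y v : V} :
    v ∈ sideF T x y ↔ (T.deleteEdges {s(x,y)}).Reachable x v := by simp [sideF]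

lemma mem_cntF {T : SimpleGraph V} {f : V → Fin 2} {x y v : V} :
    v ∈ cntF T f x y ↔ (T.deleteEdges {s(x,y)}).Reachable x v ∧ f v = 1 := by
  simp [cntF, sideF]

lemma deleteEdges_swap (T : SimpleGraph V) (x y : V) :
    T.deleteEdges {s(x,y)} = T.deleteEdges {s(y,x)} := by rw [Sym2.eq_swap]

lemma bridge {T : SimpleGraph V} (hT : T.IsTree) {x y : V} (h : T.Adj x y) :
    ¬ (T.deleteEdges {s(x,y)}).Reachable x y := by
  have hb := (isAcyclic_iff_forall_adj_isBridge.mp hT.IsAcyclic) h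
  exact isBridge_iff.mp hb

lemma bridge' {T : SimpleGraph V} (hT : T.IsTree) {x w : V} (h : T.Adj x w) :
    ¬ (T.deleteEdges {s(w,x)}).Reachable w x := by
  rw [← deleteEdges_swap]; exact fun hr => bridge hT h hr.symm

lemma cover {T : SimpleGraph V} (hT : T.IsTree) {x y : V} (h : T.Adj x y) (w : V) :
    (T.deleteEdges {s(x,y)}).Reachable x w ∨ (T.deleteEdges {s(x,y)}).Reachable y w := by
  obtain ⟨p⟩ := hT.isConnected.preconnected x w
  have key : ∀ (a b : V), T.Walk a b →
      ((T.deleteEdges {s(x,y)}).Reachable x a ∨ (T.deleteEdges {s(x,y)}).Reachable y a) →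
      ((T.deleteEdges {s(x,y)}).Reachable x b ∨ (T.deleteEdges {s(x,y)}).Reachable y b) := by
    intro a b p
    induction p with
    | nil => exact id
    | @cons a c b hac q ih =>
      intro hr
      apply ih
      by_cases he : s(a,c) = s(x,y)
      · rcases Sym2.eq_iff.mp he with ⟨rfl, rfl⟩ | ⟨rfl, rfl⟩
        · exact Or.inr (Reachable.refl _)
        · exact Or.inl (Reachable.refl _)
      · have hadj : (T.deleteEdges {s(x,y)}).Adj a c := by
          rw [SimpleGraph.deleteEdges_adj]
          exact ⟨hac, by simpa using he⟩
        rcases hr with hr | hr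
        · exact Or.inl (hr.trans hadj.reachable)
        · exact Or.inr (hr.trans hadj.reachable)
  exact key x w p (Or.inl (Reachable.refl _))

lemma reach_avoid {T : SimpleGraph V} (hT : T.IsTree) {x w : V} (h : T.Adj x w) {v : V}
    (hr : (T.deleteEdges {s(w,x)}).Reachable w v) :
    ∃ p : (T.deleteEdges {s(w,x)}).Walk w v, x ∉ p.support := by
  obtain ⟨p⟩ := hr
  exact ⟨p, fun hx => bridge' hT h ⟨p.takeUntil x hx⟩⟩

lemma transfer_avoid {T : SimpleGraph V} {S : Set (Sym2 V)} {x c : V} {a b : V}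
    (q : (T.deleteEdges S).Walk a b) (hx : x ∉ q.support) :
    (T.deleteEdges {s(x,c)}).Reachable a b := by
  refine ⟨q.transfer _ ?_⟩
  intro e he
  have heT := q.edges_subset_edgeSet he
  rw [edgeSet_deleteEdges] at heT
  rw [edgeSet_deleteEdges]
  refine ⟨heT.1, ?_⟩
  simp only [Set.mem_singleton_iff]
  rintro rfl
  exact hx (q.fst_mem_support_of_mem_edges he)

lemma not_mem_side {T : SimpleGraph V} (hT : T.IsTree) {x w : V} (hxw : T.Adj x w) :
    x ∉ sideF T w x := by
  rw [mem_sideF]; exact bridge' hT hxw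

lemma side_subset {T : SimpleGraph V} (hT : T.IsTree) {x y w : V} (hxy : T.Adj x y)
    (hxw : T.Adj x w) (hwy : w ≠ y) : sideF T w x ⊆ sideF T x y := by
  intro v hv
  rw [mem_sideF] at hv ⊢
  obtain ⟨p, hp⟩ := reach_avoid hT hxw hv
  have hq : (T.deleteEdges {s(x,y)}).Reachable w v := transfer_avoid p hp
  have hxw' : (T.deleteEdges {s(x,y)}).Adj x w := by
    rw [SimpleGraph.deleteEdges_adj]
    refine ⟨hxw, ?_⟩
    simp only [Set.mem_singleton_iff]
    intro hc
    rcases Sym2.eq_iff.mp hc with ⟨-, rfl⟩ | ⟨rfl, rfl⟩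
    · exact hwy rfl
    · exact T.loopless.irrefl _ hxy
  exact hxw'.reachable.trans hq

lemma branch_disjoint {T : SimpleGraph V} (hT : T.IsTree) {x w w' : V} (hxw : T.Adj x w)
    (hxw' : T.Adj x w') (hne : w ≠ w') : Disjoint (sideF T w x) (sideF T w' x) := by
  rw [Finset.disjoint_left]
  intro v hv hv'
  rw [mem_sideF] at hv hv'
  obtain ⟨p, hp⟩ := reach_avoid hT hxw hv
  obtain ⟨p', hp'⟩ := reach_avoid hT hxw' hv'
  have r1 : (T.deleteEdges {s(x,w')}).Reachable w v := transfer_avoid p hp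
  have r2 : (T.deleteEdges {s(x,w')}).Reachable w' v := transfer_avoid p' hp'
  have hadj : (T.deleteEdges {s(x,w')}).Adj x w := by
    rw [SimpleGraph.deleteEdges_adj]
    refine ⟨hxw, ?_⟩
    simp only [Set.mem_singleton_iff]
    intro hc
    rcases Sym2.eq_iff.mp hc with ⟨-, rfl⟩ | ⟨rfl, rfl⟩
    · exact hne rfl
    · exact T.loopless.irrefl _ hxw'
  exact bridge hT hxw' (hadj.reachable.trans (r1.trans r2.symm))

lemma side_cover {T : SimpleGraph V} (hT : T.IsTree) {x y v : V} (hxy : T.Adj x y)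
    (hv : v ∈ sideF T x y) (hvx : v ≠ x) :
    ∃ w, T.Adj x w ∧ w ≠ y ∧ v ∈ sideF T w x := by
  rw [mem_sideF] at hv
  obtain ⟨p0⟩ := hv
  have hp := p0.bypass_isPath
  generalize hq : p0.bypass = p at hp
  cases p with
  | nil => exact absurd rfl hvx.symm
  | @cons _ w _ hadj q =>
    have hxnq : x ∉ q.support := by
      have hnd := hp.support_nodup
      rw [Walk.support_cons, List.nodup_cons] at hnd
      exact hnd.1
    rw [SimpleGraph.deleteEdges_adj] at hadj
    have hwy : w ≠ y := by
      rintro rfl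
      exact hadj.2 rfl
    refine ⟨w, hadj.1, hwy, ?_⟩
    rw [mem_sideF, deleteEdges_swap T w x]
    exact transfer_avoid q hxnq

lemma self_mem_sideF {T : SimpleGraph V} {x y : V} : x ∈ sideF T x y :=
  mem_sideF.mpr (Reachable.refl _)

lemma side_eq_insert {T : SimpleGraph V} (hT : T.IsTree) {x y : V} (hxy : T.Adj x y) :
    sideF T x y = insert x (((nbr T x).erase y).biUnion (fun w => sideF T w x)) := by
  ext v
  simp only [mem_insert, mem_biUnion, mem_erase, mem_nbr]
  constructor
  · intro hv
    by_cases hvx : v = x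
    · exact Or.inl hvx
    · obtain ⟨w, h1, h2, h3⟩ := side_cover hT hxy hv hvx
      exact Or.inr ⟨w, ⟨h2, h1⟩, h3⟩
  · rintro (rfl | ⟨w, ⟨h2, h1⟩, h3⟩)
    · exact self_mem_sideF
    · exact side_subset hT hxy h1 h2 h3

lemma cnt_eq_sum {T : SimpleGraph V} (hT : T.IsTree) {x y : V} (hxy : T.Adj x y)
    (f : V → Fin 2) :
    (cntF T f x y).card =
      (if f x = 1 then 1 else 0) + ∑ w ∈ (nbr T x).erase y, (cntF T f w x).card := by
  have hdisj : ∀ w ∈ (nbr T x).erase y, ∀ w' ∈ (nbr T x).erase y, w ≠ w' →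
      Disjoint (cntF T f w x) (cntF T f w' x) := by
    intro w hw w' hw' hne
    rw [mem_erase, mem_nbr] at hw hw'
    exact (branch_disjoint hT hw.2 hw'.2 hne).mono (filter_subset _ _) (filter_subset _ _)
  have hxB : x ∉ ((nbr T x).erase y).biUnion (fun w => cntF T f w x) := by
    simp only [mem_biUnion, mem_erase, mem_nbr, not_exists]
    rintro w ⟨⟨-, hw2⟩, hc⟩
    exact not_mem_side hT hw2 (filter_subset _ _ hc)
  have key : cntF T f x y
      = (insert x (((nbr T x).erase y).biUnion (fun w => sideF T w x))).filter
          (fun v => f v = 1) := by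
    rw [cntF, side_eq_insert hT hxy]
  rw [key, filter_insert, filter_biUnion]
  by_cases hfx : f x = 1
  · rw [if_pos hfx, if_pos hfx, card_insert_of_notMem (by simpa [cntF] using hxB),
      card_biUnion (by intro w hw w' hw' hne; simpa [cntF, Function.onFun] using hdisj w hw w' hw' hne)]
    simp only [cntF]
    omega
  · rw [if_neg hfx, if_neg hfx, card_biUnion (by intro w hw w' hw' hne; simpa [cntF, Function.onFun] using hdisj w hw w' hw' hne), zero_add]
    simp only [cntF]

lemma cnt_add {T : SimpleGraph V} (hT : T.IsTree) {x y : V} (hxy : T.Adj x y)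
    (f : V → Fin 2) :
    (cntF T f x y).card + (cntF T f y x).card = (univ.filter (fun v => f v = 1)).card := by
  have hdisj : Disjoint (sideF T x y) (sideF T y x) := by
    rw [Finset.disjoint_left]
    intro v hvx hvy
    rw [mem_sideF] at hvx hvy
    rw [← deleteEdges_swap] at hvy
    exact bridge hT hxy (hvx.trans hvy.symm)
  have hun : sideF T x y ∪ sideF T y x = univ := by
    ext w
    simp only [mem_union, mem_univ, iff_true]
    rcases cover hT hxy w with h | h
    · exact Or.inl (mem_sideF.mpr h)
    · refine Or.inr (mem_sideF.mpr ?_)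
      rw [← deleteEdges_swap]; exact h
  rw [cntF, cntF, ← card_union_of_disjoint
    (hdisj.mono (filter_subset _ _) (filter_subset _ _)), ← filter_union, hun]

lemma natCard_setOf_eq (p : V → Prop) : Nat.card {v | p v} = (univ.filter p).card := by
  simp only [Nat.card_coe_set_eq, Set.ncard_eq_toFinset_card', Set.toFinset_setOf]

lemma card_filter_eq_natCard (p : V → Prop) [h : DecidablePred p] :
    (univ.filter p).card = Nat.card {v | p v} := by
  rw [natCard_setOf_eq]
  congr!

lemma natCard_cnt (T : SimpleGraph V) (f : V → Fin 2) (x y : V) :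
    Nat.card {v : V | (T.deleteEdges {s(x,y)}).Reachable x v ∧ f v = 1}
      = (cntF T f x y).card := by
  rw [natCard_setOf_eq]
  rw [cntF, sideF, filter_filter]
  congr!

lemma out_eq_pair {e : Sym2 V} {x y : V} (h : Quot.out e = (x, y)) : s(x, y) = e := by
  have := Quot.out_eq e; rw [h] at this; exact this

lemma diffE_eq {T : SimpleGraph V} {f g : V → Fin 2} {u v : V} (hT : T.IsTree)
    (huv : T.Adj u v)
    (hbal : (univ.filter (fun w => f w = 1)).card = (univ.filter (fun w => g w = 1)).card) :
    diffE T f g s(u,v) = Nat.dist (cntF T f u v).card (cntF T g u v).card := by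
  obtain ⟨x, y, hxy⟩ : ∃ x y, Quot.out (s(u,v)) = (x, y) := ⟨_, _, rfl⟩
  have hout : s(x,y) = s(u,v) := out_eq_pair hxy
  have h1 : diffE T f g s(u,v) = Nat.dist (cntF T f x y).card (cntF T g x y).card := by
    rw [diffE, hxy]
    rw [← hout, natCard_cnt, natCard_cnt]
  rw [h1]
  rcases Sym2.eq_iff.mp hout with ⟨rfl, rfl⟩ | ⟨rfl, rfl⟩
  · rfl
  · have hf := cnt_add hT huv f
    have hg := cnt_add hT huv g
    simp only [Nat.dist]
    omega

lemma card_preimage (σ : Equiv.Perm V) (S : Set V) :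
    Nat.card (σ ⁻¹' S : Set V) = Nat.card S := by
  rw [Nat.card_coe_set_eq, Nat.card_coe_set_eq]
  have h : σ ⁻¹' S = σ.symm '' S := by
    rw [Equiv.image_eq_preimage_symm, Equiv.symm_symm]
  rw [h, Set.ncard_image_of_injective S σ.symm.injective]

lemma swap_apply (f0 : V → Fin 2) (u v : V) (w : V) :
    (fun w => if w = u then f0 v else if w = v then f0 u else f0 w) w
      = f0 (Equiv.swap u v w) := by
  simp only [Equiv.swap_apply_def]
  split_ifs <;> rfl

lemma count_swap (f0 : V → Fin 2) (u v : V) :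
    Nat.card {w : V | (fun w => if w = u then f0 v else if w = v then f0 u else f0 w) w = 1}
      = Nat.card {w : V | f0 w = 1} := by
  have h : {w : V | (fun w => if w = u then f0 v else if w = v then f0 u else f0 w) w = 1}
      = (Equiv.swap u v) ⁻¹' {w : V | f0 w = 1} := by
    ext w
    simp only [Set.mem_setOf_eq, Set.mem_preimage, swap_apply]
  rw [h, card_preimage]

lemma diffE_other {T : SimpleGraph V} {f0 ft : V → Fin 2} {u v : V} {e : Sym2 V}
    (huv : T.Adj u v) (hne : s(u,v) ≠ e) :
    diffE T (fun w => if w = u then f0 v else if w = v then f0 u else f0 w) ft e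
      = diffE T f0 ft e := by
  rw [diffE, diffE]
  congr 1
  have hadj : (T.deleteEdges {e}).Adj u v := by
    rw [SimpleGraph.deleteEdges_adj]
    exact ⟨huv, by simpa using hne⟩
  have hR : ∀ w, (T.deleteEdges {e}).Reachable (Quot.out e).1 (Equiv.swap u v w)
      ↔ (T.deleteEdges {e}).Reachable (Quot.out e).1 w := by
    intro w
    by_cases hwu : w = u
    · subst hwu
      rw [Equiv.swap_apply_left]
      exact ⟨fun h => h.trans hadj.reachable.symm, fun h => h.trans hadj.reachable⟩
    · by_cases hwv : w = v
      · subst hwv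
        rw [Equiv.swap_apply_right]
        exact ⟨fun h => h.trans hadj.reachable, fun h => h.trans hadj.reachable.symm⟩
      · rw [Equiv.swap_apply_of_ne_of_ne hwu hwv]
  have h : {w : V | (T.deleteEdges {e}).Reachable (Quot.out e).1 w ∧
        (fun w => if w = u then f0 v else if w = v then f0 u else f0 w) w = 1}
      = (Equiv.swap u v) ⁻¹' {w : V | (T.deleteEdges {e}).Reachable (Quot.out e).1 w ∧
          f0 w = 1} := by
    ext w
    simp only [Set.mem_setOf_eq, Set.mem_preimage, swap_apply, hR]
  rw [h, card_preimage]

lemma cnt_swap_surplus {T : SimpleGraph V} (hT : T.IsTree) {f0 : V → Fin 2} {u v : V}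
    (huv : T.Adj u v) (h1 : f0 u = 1) (h2 : f0 v ≠ 1) :
    cntF T (fun w => if w = u then f0 v else if w = v then f0 u else f0 w) u v
      = (cntF T f0 u v).erase u := by
  have hbr := bridge hT huv
  ext w
  rw [mem_cntF, mem_erase, mem_cntF]
  by_cases hwu : w = u
  · subst hwu
    simp [h2]
  · by_cases hwv : w = v
    · subst hwv
      simp [hbr]
    · simp [hwu, hwv]

lemma gZ_anti {T : SimpleGraph V} {f0 ft : V → Fin 2} (hT : T.IsTree)
    (hsim : (univ.filter (fun v => f0 v = 1)).card = (univ.filter (fun v => ft v = 1)).card)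
    {x y : V} (hxy : T.Adj x y) : gZ T f0 ft x y + gZ T f0 ft y x = 0 := by
  have h0 := cnt_add hT hxy f0
  have h1 := cnt_add hT hxy ft
  unfold gZ
  omega

lemma gZ_loc {T : SimpleGraph V} {f0 ft : V → Fin 2} (hT : T.IsTree) {x y : V}
    (hxy : T.Adj x y) :
    gZ T f0 ft x y =
      (((if f0 x = 1 then 1 else 0) : ℤ) - ((if ft x = 1 then 1 else 0) : ℤ))
        + ∑ w ∈ (nbr T x).erase y, gZ T f0 ft w x := by
  have h0 := cnt_eq_sum hT hxy f0
  have h1 := cnt_eq_sum hT hxy ft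
  have c0 : ((cntF T f0 x y).card : ℤ)
      = (if f0 x = 1 then 1 else 0) + ∑ w ∈ (nbr T x).erase y, ((cntF T f0 w x).card : ℤ) := by
    exact_mod_cast congrArg (fun n : ℕ => (n : ℤ)) h0
  have c1 : ((cntF T ft x y).card : ℤ)
      = (if ft x = 1 then 1 else 0) + ∑ w ∈ (nbr T x).erase y, ((cntF T ft w x).card : ℤ) := by
    exact_mod_cast congrArg (fun n : ℕ => (n : ℤ)) h1
  unfold gZ
  rw [c0, c1, Finset.sum_sub_distrib]
  ring

lemma side_card_lt {T : SimpleGraph V} (hT : T.IsTree) {x y w : V} (hxy : T.Adj x y)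
    (hxw : T.Adj x w) (hwy : w ≠ y) : (sideF T w x).card < (sideF T x y).card := by
  apply card_lt_card
  rw [Finset.ssubset_iff_of_subset (side_subset hT hxy hxw hwy)]
  exact ⟨x, mem_sideF.mpr (Reachable.refl _), not_mem_side hT hxw⟩

/-- Main walk induction. -/
lemma walk_main {T : SimpleGraph V} {f0 ft : V → Fin 2} (hT : T.IsTree)
    (hsim : (univ.filter (fun v => f0 v = 1)).card = (univ.filter (fun v => ft v = 1)).card) :
    ∀ n : ℕ, ∀ x y : V, T.Adj x y → (sideF T y x).card ≤ n →
      ((0 < gZ T f0 ft x y ∧ f0 x = 1) ∨ (gZ T f0 ft x y < 0 ∧ f0 x ≠ 1)) →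
      ∃ u v, T.Adj u v ∧ f0 u = 1 ∧ f0 v ≠ 1 ∧
        (cntF T ft u v).card < (cntF T f0 u v).card := by
  intro n
  induction n with
  | zero =>
    intro x y hxy hcard _
    exfalso
    have : y ∈ sideF T y x := mem_sideF.mpr (Reachable.refl _)
    have := card_pos.mpr ⟨y, this⟩
    omega
  | succ n ih =>
    intro x y hxy hcard hcase
    have hanti := gZ_anti hT hsim hxy
    rcases hcase with ⟨hpos, hfx⟩ | ⟨hneg, hfx⟩
    · by_cases hfy : f0 y = 1
      · have hgyx : gZ T f0 ft y x < 0 := by omega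
        have hloc := gZ_loc (f0 := f0) (ft := ft) hT hxy.symm
        have hsum : ∑ w ∈ (nbr T y).erase x, gZ T f0 ft w y < 0 := by
          rw [hloc] at hgyx
          split_ifs at hgyx <;> simp_all <;> omega
        obtain ⟨w, hw, hgw⟩ : ∃ w ∈ (nbr T y).erase x, gZ T f0 ft w y < 0 := by
          by_contra hall
          push_neg at hall
          exact absurd (Finset.sum_nonneg fun i hi => hall i hi) (not_le.mpr hsum)
        rw [mem_erase, mem_nbr] at hw
        have hyw : T.Adj y w := hw.2
        have hgyw : 0 < gZ T f0 ft y w := by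
          have : gZ T f0 ft w y + gZ T f0 ft y w = 0 := gZ_anti hT hsim hyw.symm
          omega
        have hlt : (sideF T w y).card < (sideF T y x).card :=
          side_card_lt hT hxy.symm hyw hw.1
        exact ih y w hyw (by omega) (Or.inl ⟨hgyw, hfy⟩)
      · refine ⟨x, y, hxy, hfx, hfy, ?_⟩
        unfold gZ at hpos
        omega
    · by_cases hfy : f0 y = 1
      · refine ⟨y, x, hxy.symm, hfy, hfx, ?_⟩
        have : 0 < gZ T f0 ft y x := by omega
        unfold gZ at this
        omega
      · have hgyx : 0 < gZ T f0 ft y x := by omega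
        have hloc := gZ_loc (f0 := f0) (ft := ft) hT hxy.symm
        have hsum : 0 < ∑ w ∈ (nbr T y).erase x, gZ T f0 ft w y := by
          rw [hloc] at hgyx
          split_ifs at hgyx <;> simp_all <;> omega
        obtain ⟨w, hw, hgw⟩ : ∃ w ∈ (nbr T y).erase x, 0 < gZ T f0 ft w y := by
          by_contra hall
          push_neg at hall
          exact absurd (Finset.sum_nonpos fun i hi => hall i hi) (not_le.mpr hsum)
        rw [mem_erase, mem_nbr] at hw
        have hyw : T.Adj y w := hw.2
        have hgyw : gZ T f0 ft y w < 0 := by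
          have : gZ T f0 ft w y + gZ T f0 ft y w = 0 := gZ_anti hT hsim hyw.symm
          omega
        have hlt : (sideF T w y).card < (sideF T y x).card :=
          side_card_lt hT hxy.symm hyw hw.1
        exact ih y w hyw (by omega) (Or.inr ⟨hgyw, hfy⟩)

lemma exists_desired {T : SimpleGraph V} {f0 ft : V → Fin 2} (hT : T.IsTree)
    (hsim : (univ.filter (fun v => f0 v = 1)).card = (univ.filter (fun v => ft v = 1)).card)
    (hne : ∃ x y, T.Adj x y ∧ gZ T f0 ft x y ≠ 0) :
    ∃ u v, T.Adj u v ∧ f0 u = 1 ∧ f0 v ≠ 1 ∧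
      (cntF T ft u v).card < (cntF T f0 u v).card := by
  set P : Finset (V × V) :=
    (univ ×ˢ univ).filter (fun p : V × V => T.Adj p.1 p.2 ∧ gZ T f0 ft p.1 p.2 ≠ 0) with hP
  have hPne : P.Nonempty := by
    obtain ⟨x, y, h1, h2⟩ := hne
    exact ⟨(x, y), by simp [hP, h1, h2]⟩
  obtain ⟨p, hpmem, hpmin⟩ := P.exists_min_image (fun p => (sideF T p.1 p.2).card) hPne
  obtain ⟨x, y⟩ := p
  rw [hP, mem_filter] at hpmem
  obtain ⟨-, hxy0, hgxy0⟩ := hpmem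
  have hxy : T.Adj x y := hxy0
  have hgxy : gZ T f0 ft x y ≠ 0 := hgxy0
  clear hxy0 hgxy0
  have hz : ∀ w ∈ (nbr T x).erase y, gZ T f0 ft w x = 0 := by
    intro w hw
    by_contra hwne
    rw [mem_erase, mem_nbr] at hw
    have hmem : (w, x) ∈ P := by simp [hP, hw.2.symm, hwne]
    have hmin2 : (sideF T x y).card ≤ (sideF T w x).card := hpmin (w, x) hmem
    have hlt := side_card_lt hT hxy hw.2 hw.1
    omega
  have hloc := gZ_loc (f0 := f0) (ft := ft) hT hxy
  rw [Finset.sum_eq_zero hz, add_zero] at hloc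
  have hcase : (0 < gZ T f0 ft x y ∧ f0 x = 1) ∨ (gZ T f0 ft x y < 0 ∧ f0 x ≠ 1) := by
    by_cases h0 : f0 x = 1 <;> by_cases h1 : ft x = 1 <;> simp [h0, h1] at hloc <;>
      first
        | exact absurd hloc hgxy
        | exact Or.inl ⟨by omega, h0⟩
        | exact Or.inr ⟨by omega, h0⟩
  exact walk_main hT hsim (sideF T y x).card x y hxy le_rfl hcase

end TokenTools

/-- If `D = Σ_e diff(e) ≠ 0` on a tree, there is an edge `(u,v)` with
differently colored tokens whose swap decreases `D` by exactly one. -/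
theorem tree_exists_desired_edge {V : Type*} [Fintype V] [DecidableEq V]
    (T : SimpleGraph V) [Fintype T.edgeSet] (hT : T.IsTree) (f0 ft : V → Fin 2)
    (hsim : Nat.card {v : V | f0 v = 1} = Nat.card {v : V | ft v = 1})
    (hD : ∑ e ∈ T.edgeFinset, diffE T f0 ft e ≠ 0) :
    ∃ u v, T.Adj u v ∧ f0 u ≠ f0 v ∧
      ∑ e ∈ T.edgeFinset,
          diffE T (fun w => if w = u then f0 v else if w = v then f0 u else f0 w) ft e
        = (∑ e ∈ T.edgeFinset, diffE T f0 ft e) - 1 := by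
  classical
  open TokenTools Finset SimpleGraph in
  · have hsim' : (univ.filter (fun v => f0 v = 1)).card
        = (univ.filter (fun v => ft v = 1)).card := by
      rw [card_filter_eq_natCard, card_filter_eq_natCard]
      exact hsim
    -- find some edge where the two counts differ
    obtain ⟨e, heF, hene⟩ := Finset.exists_ne_zero_of_sum_ne_zero hD
    have heS : e ∈ T.edgeSet := SimpleGraph.mem_edgeFinset.mp heF
    obtain ⟨x, y, hxyout⟩ : ∃ x y, Quot.out e = (x, y) := ⟨_, _, rfl⟩
    have hout : s(x,y) = e := out_eq_pair hxyout
    have hxy : T.Adj x y := by rw [← mem_edgeSet, hout]; exact heS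
    have hgne : gZ T f0 ft x y ≠ 0 := by
      rw [← hout] at hene
      rw [diffE_eq hT hxy hsim'] at hene
      unfold gZ
      simp only [Nat.dist] at hene
      omega
    obtain ⟨u, v, hAdj, h1, h2, h3⟩ := exists_desired hT hsim' ⟨x, y, hxy, hgne⟩
    refine ⟨u, v, hAdj, ?_, ?_⟩
    · rw [h1]
      exact fun hc => h2 hc.symm
    · -- count bookkeeping for the swap
      have hbal' : (univ.filter
            (fun w => (fun w => if w = u then f0 v else if w = v then f0 u else f0 w) w = 1)).card
          = (univ.filter (fun w => ft w = 1)).card := by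
        rw [card_filter_eq_natCard, card_filter_eq_natCard, count_swap f0 u v,
          ← card_filter_eq_natCard, ← card_filter_eq_natCard]
        exact hsim'
      have hmemE : s(u,v) ∈ T.edgeFinset := SimpleGraph.mem_edgeFinset.mpr hAdj
      have hself : diffE T (fun w => if w = u then f0 v else if w = v then f0 u else f0 w) ft
          s(u,v) = diffE T f0 ft s(u,v) - 1 ∧ 1 ≤ diffE T f0 ft s(u,v) := by
        have e1 := diffE_eq (f := fun w => if w = u then f0 v else if w = v then f0 u else f0 w)
          (g := ft) hT hAdj hbal'
        have e2 := diffE_eq (f := f0) (g := ft) hT hAdj hsim'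
        have hcnt : (cntF T (fun w => if w = u then f0 v else if w = v then f0 u else f0 w)
            u v).card = (cntF T f0 u v).card - 1 := by
          rw [cnt_swap_surplus hT hAdj h1 h2]
          exact card_erase_of_mem (mem_cntF.mpr ⟨Reachable.refl _, h1⟩)
        rw [e1, e2, hcnt]
        simp only [Nat.dist]
        omega
      rw [← Finset.sum_erase_add T.edgeFinset _ hmemE,
        ← Finset.sum_erase_add T.edgeFinset (fun e => diffE T f0 ft e) hmemE]
      have hcongr : ∑ e ∈ T.edgeFinset.erase s(u,v),
            diffE T (fun w => if w = u then f0 v else if w = v then f0 u else f0 w) ft e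
          = ∑ e ∈ T.edgeFinset.erase s(u,v), diffE T f0 ft e := by
        refine Finset.sum_congr rfl fun e he => ?_
        exact diffE_other hAdj (Ne.symm (Finset.mem_erase.mp he).1)
      rw [hcongr]
      omega
end

section
/- Let T be a tree with 2-colored token-placements f_0 ≃ f_t. Then OPT(f_0, f_t) = Σ_{e ∈ E(T)} diff(e), where diff(e) is the absolute difference between the numbers of color-1 tokens on the side of e containing a fixed endpoint, under f_0 and under f_t. -/
open SimpleGraph Finset

namespace TokenSwap

set_option linter.unusedSectionVars false
set_option linter.unusedVariables false
attribute [local instance 10] Classical.propDecidable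

variable {V : Type*} [Fintype V] [DecidableEq V]

/-- indicator of color 1 -/
def ind (f : V → Fin 2) (v : V) : ℕ := if f v = 1 then 1 else 0

lemma ind_le_one (f : V → Fin 2) (v : V) : ind f v ≤ 1 := by
  unfold ind; split <;> omega

/-- number of color-1 tokens in `s` -/
def cnt (f : V → Fin 2) (s : Finset V) : ℕ := ∑ v ∈ s, ind f v

noncomputable def sideF (T : SimpleGraph V) (e : Sym2 V) (x : V) : Finset V :=
  Finset.univ.filter fun v => (T.deleteEdges {e}).Reachable x v

lemma mem_sideF {T : SimpleGraph V} {e : Sym2 V} {x v : V} :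
    v ∈ sideF T e x ↔ (T.deleteEdges {e}).Reachable x v := by
  simp [sideF]

lemma self_mem_sideF {T : SimpleGraph V} {e : Sym2 V} {x : V} : x ∈ sideF T e x :=
  mem_sideF.2 (Reachable.refl _)

section Tree

variable {T : SimpleGraph V}

lemma bridge_not_reach (hT : T.IsTree) {x y : V} (h : T.Adj x y) :
    ¬ (T.deleteEdges {s(x, y)}).Reachable x y := by
  have hb : T.IsBridge s(x, y) := by
    have := (isAcyclic_iff_forall_adj_isBridge).1 hT.IsAcyclic
    exact this h
  exact isBridge_iff.1 hb

lemma walk_del_or {G : SimpleGraph V} {x y u v : V} (p : G.Walk u v) :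
    (G.deleteEdges {s(x, y)}).Reachable u v ∨
      ((G.deleteEdges {s(x, y)}).Reachable u x ∧ (G.deleteEdges {s(x, y)}).Reachable y v) ∨
      ((G.deleteEdges {s(x, y)}).Reachable u y ∧ (G.deleteEdges {s(x, y)}).Reachable x v) := by
  induction p with
  | nil => exact Or.inl (Reachable.refl _)
  | @cons a b c hab q ih =>
    by_cases he : s(a, b) = s(x, y)
    · rw [Sym2.eq_iff] at he
      rcases he with ⟨rfl, rfl⟩ | ⟨rfl, rfl⟩
      · rcases ih with h | ⟨h1, h2⟩ | ⟨h1, h2⟩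
        · exact Or.inr (Or.inl ⟨Reachable.refl _, h⟩)
        · exact Or.inl (h1.symm.trans h2)
        · exact Or.inl h2
      · rcases ih with h | ⟨h1, h2⟩ | ⟨h1, h2⟩
        · exact Or.inr (Or.inr ⟨Reachable.refl _, h⟩)
        · exact Or.inl h2
        · exact Or.inl (h1.symm.trans h2)
    · have hadj : (G.deleteEdges {s(x, y)}).Adj a b := by
        rw [SimpleGraph.deleteEdges_adj]
        exact ⟨hab, by simpa using he⟩
      rcases ih with h | ⟨h1, h2⟩ | ⟨h1, h2⟩
      · exact Or.inl (hadj.reachable.trans h)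
      · exact Or.inr (Or.inl ⟨hadj.reachable.trans h1, h2⟩)
      · exact Or.inr (Or.inr ⟨hadj.reachable.trans h1, h2⟩)

lemma reach_or (hT : T.IsTree) {x y : V} (h : T.Adj x y) (v : V) :
    (T.deleteEdges {s(x, y)}).Reachable x v ∨ (T.deleteEdges {s(x, y)}).Reachable y v := by
  obtain ⟨p⟩ := hT.isConnected.preconnected x v
  rcases walk_del_or (x := x) (y := y) p with h1 | ⟨h1, h2⟩ | ⟨h1, h2⟩
  · exact Or.inl h1
  · exact Or.inr h2
  · exact Or.inl h2

lemma not_reach_both (hT : T.IsTree) {x y : V} (h : T.Adj x y) (v : V)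
    (h1 : (T.deleteEdges {s(x, y)}).Reachable x v)
    (h2 : (T.deleteEdges {s(x, y)}).Reachable y v) : False :=
  bridge_not_reach hT h (h1.trans h2.symm)

end Tree

section Tree2
variable {T : SimpleGraph V}

/-- a walk in `T - e` avoiding vertex `z` gives reachability in `T - e'` for any `e'` containing `z` -/
lemma reach_avoid {e : Sym2 V} {a w z : V} (p : (T.deleteEdges {e}).Walk a w)
    (hz : z ∉ p.support) (e' : Sym2 V) (hz' : z ∈ e') :
    (T.deleteEdges {e'}).Reachable a w := by
  refine ⟨p.transfer _ ?_⟩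
  intro ed hed
  have hT : ed ∈ T.edgeSet := by
    have := p.edges_subset_edgeSet hed
    rw [SimpleGraph.edgeSet_deleteEdges] at this
    exact this.1
  rw [SimpleGraph.edgeSet_deleteEdges]
  refine ⟨hT, ?_⟩
  simp only [Set.mem_singleton_iff]
  rintro rfl
  -- then z ∈ ed, so z ∈ p.support
  induction ed with
  | _ u v =>
    rcases Sym2.mem_iff.1 hz' with rfl | rfl
    · exact hz (p.fst_mem_support_of_mem_edges hed)
    · exact hz (p.snd_mem_support_of_mem_edges hed)

/-- the other endpoint is not on the side of `x` -/
lemma not_mem_sideF (hT : T.IsTree) {x y : V} (h : T.Adj x y) :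
    y ∉ sideF T s(x, y) x := by
  rw [mem_sideF]
  exact bridge_not_reach hT h

lemma not_mem_sideF' (hT : T.IsTree) {x y : V} (h : T.Adj x y) :
    x ∉ sideF T s(x, y) y := by
  rw [mem_sideF]
  intro hr
  exact bridge_not_reach hT h hr.symm

/-- coverage: every `w ≠ v0` lies on the side of some neighbor of `v0`. -/
lemma cover_at_vertex (hT : T.IsTree) (v0 w : V) (hw : w ≠ v0) :
    ∃ u, T.Adj v0 u ∧ w ∈ sideF T s(v0, u) u := by
  obtain ⟨p0⟩ := hT.isConnected.preconnected v0 w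
  have hp := p0.toPath.2
  set p : T.Walk v0 w := p0.toPath.1 with hpdef
  cases hq : p with
  | nil => exact absurd rfl hw
  | @cons _ u _ hadj q =>
    refine ⟨u, hadj, ?_⟩
    rw [mem_sideF]
    rw [hq] at hp
    rw [SimpleGraph.Walk.cons_isPath_iff] at hp
    have hv0 : v0 ∉ q.support := hp.2
    refine ⟨q.toDeleteEdges _ ?_⟩
    intro ed hed
    simp only [Set.mem_singleton_iff]
    rintro rfl
    exact hv0 (q.fst_mem_support_of_mem_edges hed)

/-- disjointness of the neighbor sides -/
lemma disjoint_at_vertex (hT : T.IsTree) {v0 u u' : V} (h : T.Adj v0 u) (h' : T.Adj v0 u')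
    (hne : u ≠ u') : Disjoint (sideF T s(v0, u) u) (sideF T s(v0, u') u') := by
  rw [Finset.disjoint_left]
  intro w hw hw'
  rw [mem_sideF] at hw hw'
  -- paths from u to w and u' to w avoiding v0
  obtain ⟨p0⟩ := hw
  obtain ⟨q0⟩ := hw'
  set p := p0.toPath.1 with hp
  set q := q0.toPath.1 with hqd
  have hpv : v0 ∉ p.support := by
    intro hmem
    have hr : (T.deleteEdges {s(v0, u)}).Reachable u v0 := ⟨p.takeUntil v0 hmem⟩
    exact bridge_not_reach hT h hr.symm
  have hqv : v0 ∉ q.support := by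
    intro hmem
    have hr : (T.deleteEdges {s(v0, u')}).Reachable u' v0 := ⟨q.takeUntil v0 hmem⟩
    exact bridge_not_reach hT h' hr.symm
  -- transfer to T
  have hpe : ∀ ed ∈ p.edges, ed ∈ T.edgeSet := by
    intro ed hed
    have := p.edges_subset_edgeSet hed
    rw [SimpleGraph.edgeSet_deleteEdges] at this
    exact this.1
  have hqe : ∀ ed ∈ q.edges, ed ∈ T.edgeSet := by
    intro ed hed
    have := q.edges_subset_edgeSet hed
    rw [SimpleGraph.edgeSet_deleteEdges] at this
    exact this.1
  set p' : T.Walk u w := p.transfer T hpe with hp'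
  set q' : T.Walk u' w := q.transfer T hqe with hq'
  have hps : p'.support = p.support := SimpleGraph.Walk.support_transfer _ _
  have hqs : q'.support = q.support := SimpleGraph.Walk.support_transfer _ _
  set c : T.Walk u u' := p'.append q'.reverse with hc
  have hcv : v0 ∉ c.support := by
    rw [hc]
    intro hmem
    rcases (SimpleGraph.Walk.mem_support_append_iff _ _).1 hmem with hm | hm
    · exact hpv (hps ▸ hm)
    · rw [SimpleGraph.Walk.support_reverse] at hm
      exact hqv (hqs ▸ (List.mem_reverse.1 hm))
  -- the path through v0
  have hu0 : u ≠ v0 := fun hh => (hh ▸ h.symm).ne rfl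
  have hu0' : u' ≠ v0 := fun hh => (hh ▸ h'.symm).ne rfl
  set P1 : T.Walk u u' := SimpleGraph.Walk.cons h.symm (SimpleGraph.Walk.cons h' SimpleGraph.Walk.nil) with hP1
  have hP1p : P1.IsPath := by
    rw [hP1]
    simp [SimpleGraph.Walk.cons_isPath_iff, hne, hu0]
    exact fun hh => hu0' hh.symm
  set P2 : T.Walk u u' := c.toPath.1 with hP2
  have hP2p : P2.IsPath := c.toPath.2
  have hP2v : v0 ∉ P2.support := fun hm => hcv (SimpleGraph.Walk.support_toPath_subset c hm)
  have := (hT.existsUnique_path u u').unique hP1p hP2p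
  apply hP2v
  rw [← this, hP1]
  simp

end Tree2

section Tree3
variable {T : SimpleGraph V}

/-- nesting: side of `u'` (for edge `u'u`) inside side of `u` (for edge `uv`), `u' ≠ v`. -/
lemma sideF_subset (hT : T.IsTree) {u v u' : V} (huv : T.Adj u v) (huu' : T.Adj u u')
    (hne : u' ≠ v) : sideF T s(u', u) u' ⊆ sideF T s(u, v) u := by
  intro w hw
  rw [mem_sideF] at hw ⊢
  obtain ⟨p0⟩ := hw
  set p := p0.toPath.1 with hp
  have hpu : u ∉ p.support := by
    intro hmem
    have hr : (T.deleteEdges {s(u', u)}).Reachable u' u := ⟨p.takeUntil u hmem⟩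
    have : s(u', u) = s(u, u') := Sym2.eq_swap
    rw [this] at hr
    exact bridge_not_reach hT huu' hr.symm
  have h1 : (T.deleteEdges {s(u, v)}).Reachable u' w :=
    reach_avoid p hpu s(u, v) (Sym2.mem_mk_left u v)
  have h2 : (T.deleteEdges {s(u, v)}).Adj u u' := by
    rw [SimpleGraph.deleteEdges_adj]
    refine ⟨huu', ?_⟩
    simp only [Set.mem_singleton_iff, Sym2.eq_iff]
    rintro (⟨-, rfl⟩ | ⟨rfl, -⟩)
    · exact hne rfl
    · exact huv.ne rfl
  exact h2.reachable.trans h1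

lemma sideF_compl (hT : T.IsTree) {x y : V} (h : T.Adj x y) :
    sideF T s(x, y) y = Finset.univ \ sideF T s(x, y) x := by
  ext v
  simp only [Finset.mem_sdiff, Finset.mem_univ, true_and, mem_sideF]
  constructor
  · intro hy hx
    exact not_reach_both hT h v hx hy
  · intro hx
    rcases reach_or hT h v with h1 | h1
    · exact absurd h1 hx
    · exact h1

/-- The star partition of `univ` at a vertex. -/
lemma univ_eq_star (hT : T.IsTree) (v0 : V) :
    Finset.univ = insert v0 ((T.neighborFinset v0).biUnion fun u => sideF T s(v0, u) u) := by
  ext w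
  simp only [Finset.mem_univ, Finset.mem_insert, Finset.mem_biUnion, true_iff,
    SimpleGraph.mem_neighborFinset]
  by_cases hw : w = v0
  · exact Or.inl hw
  · exact Or.inr (cover_at_vertex hT v0 w hw)

lemma cnt_univ_star (hT : T.IsTree) (f : V → Fin 2) (v0 : V) :
    cnt f Finset.univ = ind f v0 + ∑ u ∈ T.neighborFinset v0, cnt f (sideF T s(v0, u) u) := by
  unfold cnt
  rw [univ_eq_star hT v0]
  rw [Finset.sum_insert, Finset.sum_biUnion]
  · intro a ha b hb hab
    simp only [Finset.mem_coe, SimpleGraph.mem_neighborFinset] at ha hb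
    exact disjoint_at_vertex hT ha hb hab
  · simp only [Finset.mem_biUnion, SimpleGraph.mem_neighborFinset, not_exists]
    intro u hu
    exact not_mem_sideF' hT hu.1 hu.2

lemma cnt_split_edge (hT : T.IsTree) (f : V → Fin 2) {x y : V} (h : T.Adj x y) :
    cnt f Finset.univ = cnt f (sideF T s(x, y) x) + cnt f (sideF T s(x, y) y) := by
  rw [sideF_compl hT h]
  unfold cnt
  rw [← Finset.sum_sdiff (Finset.subset_univ (sideF T s(x, y) x))]
  ring

/-- edge version of the star partition count -/
lemma cnt_edge_expand (hT : T.IsTree) (f : V → Fin 2) {u v : V} (h : T.Adj u v) :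
    cnt f (sideF T s(u, v) u)
      = ind f u + ∑ u' ∈ (T.neighborFinset u).erase v, cnt f (sideF T s(u', u) u') := by
  have h1 := cnt_univ_star hT f u
  have h2 := cnt_split_edge hT f h
  have hv : v ∈ T.neighborFinset u := by rw [SimpleGraph.mem_neighborFinset]; exact h
  rw [← Finset.add_sum_erase _ _ hv] at h1
  have hsw : ∀ u' : V, sideF T s(u, u') u' = sideF T s(u', u) u' := by
    intro u'
    have : s(u, u') = s(u', u) := Sym2.eq_swap
    rw [this]
  have hsum : ∑ u' ∈ (T.neighborFinset u).erase v, cnt f (sideF T s(u', u) u')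
      = ∑ u' ∈ (T.neighborFinset u).erase v, cnt f (sideF T s(u, u') u') :=
    Finset.sum_congr rfl fun x _ => by rw [hsw]
  rw [hsum]
  omega

end Tree3

section Swap
variable {T : SimpleGraph V}

lemma cnt_comp_swap (f : V → Fin 2) (a b : V) (s : Finset V) (h : a ∈ s ↔ b ∈ s) :
    cnt (f ∘ Equiv.swap a b) s = cnt f s := by
  unfold cnt
  refine Finset.sum_nbij' (fun v => Equiv.swap a b v) (fun v => Equiv.swap a b v) ?_ ?_ ?_ ?_ ?_
  · intro v hv
    by_cases hva : v = a
    · subst hva; simpa using h.1 hv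
    by_cases hvb : v = b
    · subst hvb; simpa using h.2 hv
    · simpa [Equiv.swap_apply_of_ne_of_ne hva hvb] using hv
  · intro v hv
    by_cases hva : v = a
    · subst hva; simpa using h.1 hv
    by_cases hvb : v = b
    · subst hvb; simpa using h.2 hv
    · simpa [Equiv.swap_apply_of_ne_of_ne hva hvb] using hv
  · intro v _; exact Equiv.swap_apply_self _ _ _
  · intro v _; exact Equiv.swap_apply_self _ _ _
  · intro v _; rfl

lemma cnt_comp_swap_mem (f : V → Fin 2) {a b : V} (hab : a ≠ b) {s : Finset V}
    (ha : a ∈ s) (hb : b ∉ s) :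
    (cnt (f ∘ Equiv.swap a b) s : ℤ) = (cnt f s : ℤ) - ind f a + ind f b := by
  have key : cnt (f ∘ Equiv.swap a b) s = cnt f (insert b (s.erase a)) := by
    unfold cnt
    refine Finset.sum_nbij' (fun v => Equiv.swap a b v) (fun v => Equiv.swap a b v) ?_ ?_ ?_ ?_ ?_
    · intro v hv
      by_cases hva : v = a
      · subst hva; simpa using Finset.mem_insert_self _ _
      · have hvb : v ≠ b := fun hh => hb (hh ▸ hv)
        simpa [Equiv.swap_apply_of_ne_of_ne hva hvb] using
          Finset.mem_insert_of_mem (Finset.mem_erase.2 ⟨hva, hv⟩)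
    · intro v hv
      rcases Finset.mem_insert.1 hv with rfl | hv'
      · simpa using ha
      · have hva : v ≠ a := (Finset.mem_erase.1 hv').1
        have hvb : v ≠ b := fun hh => hb (hh ▸ (Finset.mem_erase.1 hv').2)
        simpa [Equiv.swap_apply_of_ne_of_ne hva hvb] using (Finset.mem_erase.1 hv').2
    · intro v _; exact Equiv.swap_apply_self _ _ _
    · intro v _; exact Equiv.swap_apply_self _ _ _
    · intro v _; rfl
  rw [key]
  unfold cnt
  rw [Finset.sum_insert (fun hh => hb (Finset.mem_of_mem_erase hh))]
  rw [← Finset.add_sum_erase _ (fun v => ind f v) ha]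
  push_cast
  ring

lemma fin2_cases (x : Fin 2) : x = 0 ∨ x = 1 := by omega

lemma swapStep_iff {G : SimpleGraph V} {f f' : V → Fin 2} :
    SwapStep G f f' ↔ ∃ a b, G.Adj a b ∧ f' = f ∘ Equiv.swap a b := by
  constructor
  · rintro ⟨a, b, hadj, h1, h2, h3⟩
    refine ⟨a, b, hadj, funext fun w => ?_⟩
    by_cases hwa : w = a
    · subst hwa; simp only [Function.comp_apply, Equiv.swap_apply_left]; exact h1
    by_cases hwb : w = b
    · subst hwb; simp only [Function.comp_apply, Equiv.swap_apply_right]; exact h2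
    · simp only [Function.comp_apply, Equiv.swap_apply_of_ne_of_ne hwa hwb]
      exact h3 w hwa hwb
  · rintro ⟨a, b, hadj, rfl⟩
    refine ⟨a, b, hadj, ?_, ?_, ?_⟩
    · simp
    · simp
    · intro w hwa hwb
      simp [Equiv.swap_apply_of_ne_of_ne hwa hwb]

end Swap

section CardBridge
variable {T : SimpleGraph V}

lemma natCard_setOf (P : V → Prop) [DecidablePred P] (f : V → Fin 2) :
    Nat.card {v : V | P v ∧ f v = 1} = cnt f (Finset.univ.filter P) := by
  rw [Nat.card_eq_fintype_card]
  rw [Fintype.card_subtype]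
  unfold cnt ind
  rw [Finset.card_filter]
  rw [Finset.sum_filter]
  apply Finset.sum_congr rfl
  intro v _
  by_cases h1 : P v <;> by_cases h2 : f v = 1 <;> simp [h1, h2]

lemma natCard_ones (f : V → Fin 2) :
    Nat.card {v : V | f v = 1} = cnt f Finset.univ := by
  have : {v : V | f v = 1} = {v : V | True ∧ f v = 1} := by ext v; simp
  rw [this, natCard_setOf]
  simp

lemma diffE_eq (f g : V → Fin 2) (e : Sym2 V) :
    diffE T f g e
      = Nat.dist (cnt f (sideF T e (Quot.out e).1)) (cnt g (sideF T e (Quot.out e).1)) := by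
  unfold diffE
  rw [natCard_setOf, natCard_setOf]
  congr 1 <;> · apply congrArg; ext v; simp [sideF]

end CardBridge

section Delta
variable {T : SimpleGraph V}

noncomputable def dl (T : SimpleGraph V) (f g : V → Fin 2) (x y : V) : ℤ :=
  (cnt f (sideF T s(x, y) x) : ℤ) - (cnt g (sideF T s(x, y) x) : ℤ)

lemma dl_antisymm (hT : T.IsTree) {f g : V → Fin 2}
    (htot : cnt f Finset.univ = cnt g Finset.univ) {x y : V} (h : T.Adj x y) :
    dl T f g y x = - dl T f g x y := by
  have h1 := cnt_split_edge hT f h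
  have h2 := cnt_split_edge hT g h
  unfold dl
  rw [show s(y, x) = s(x, y) from Sym2.eq_swap]
  omega

lemma dl_expand (hT : T.IsTree) {f g : V → Fin 2} {u v : V} (h : T.Adj u v) :
    dl T f g u v = ((ind f u : ℤ) - ind g u)
      + ∑ u' ∈ (T.neighborFinset u).erase v, dl T f g u' u := by
  have h1 := cnt_edge_expand hT f h
  have h2 := cnt_edge_expand hT g h
  unfold dl
  rw [h1, h2]
  push_cast
  rw [Finset.sum_sub_distrib]
  ring

lemma dl_vertex (hT : T.IsTree) {f g : V → Fin 2}
    (htot : cnt f Finset.univ = cnt g Finset.univ) (v0 : V) :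
    (ind f v0 : ℤ) - ind g v0 + ∑ u ∈ T.neighborFinset v0, dl T f g u v0 = 0 := by
  have h1 := cnt_univ_star hT f v0
  have h2 := cnt_univ_star hT g v0
  have hswap : ∀ u : V, dl T f g u v0
      = (cnt f (sideF T s(v0, u) u) : ℤ) - cnt g (sideF T s(v0, u) u) := by
    intro u
    unfold dl
    rw [show s(u, v0) = s(v0, u) from Sym2.eq_swap]
  simp only [hswap]
  rw [Finset.sum_sub_distrib]
  zify at h1 h2
  push_cast at h1 h2 ⊢
  omega

end Delta

section PhiSec
variable {T : SimpleGraph V}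

noncomputable def Phi (T : SimpleGraph V) [Fintype T.edgeSet] (f g : V → Fin 2) : ℕ :=
  ∑ e ∈ T.edgeFinset, diffE T f g e

lemma diffE_self (f : V → Fin 2) (e : Sym2 V) : diffE T f f e = 0 := Nat.dist_self _

lemma Phi_self [Fintype T.edgeSet] (f : V → Fin 2) : Phi T f f = 0 :=
  Finset.sum_eq_zero fun _ _ => diffE_self _ _

lemma side_iff_of_ne {a b : V} (hadj : T.Adj a b) {e : Sym2 V} (he : e ∈ T.edgeSet)
    (hne : s(a, b) ≠ e) (x : V) : a ∈ sideF T e x ↔ b ∈ sideF T e x := by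
  have hadj' : (T.deleteEdges {e}).Adj a b := by
    rw [SimpleGraph.deleteEdges_adj]
    exact ⟨hadj, by simpa using hne⟩
  simp only [mem_sideF]
  exact ⟨fun h => h.trans hadj'.reachable, fun h => h.trans hadj'.reachable.symm⟩

lemma diffE_swap_ne {a b : V} (hadj : T.Adj a b) {e : Sym2 V} (he : e ∈ T.edgeSet)
    (hne : e ≠ s(a, b)) (f g : V → Fin 2) :
    diffE T (f ∘ Equiv.swap a b) g e = diffE T f g e := by
  rw [diffE_eq, diffE_eq, cnt_comp_swap _ _ _ _ (side_iff_of_ne hadj he (Ne.symm hne) _)]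

lemma cnt_swap_e0 (hT : T.IsTree) {a b : V} (hadj : T.Adj a b) (f : V → Fin 2) :
    ∃ c d : V, ((c = a ∧ d = b) ∨ (c = b ∧ d = a)) ∧
      (cnt (f ∘ Equiv.swap a b) (sideF T s(a, b) (Quot.out s(a, b)).1) : ℤ)
        = cnt f (sideF T s(a, b) (Quot.out s(a, b)).1) - ind f c + ind f d := by
  have hmem : (Quot.out s(a, b)).1 ∈ s(a, b) := Sym2.out_fst_mem _
  rw [Sym2.mem_iff] at hmem
  rcases hmem with hx | hx
  · refine ⟨a, b, Or.inl ⟨rfl, rfl⟩, ?_⟩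
    rw [hx]
    exact cnt_comp_swap_mem f hadj.ne (self_mem_sideF) (not_mem_sideF hT hadj)
  · refine ⟨b, a, Or.inr ⟨rfl, rfl⟩, ?_⟩
    rw [hx]
    rw [show Equiv.swap a b = Equiv.swap b a from Equiv.swap_comm a b]
    have h1 : b ∈ sideF T s(a, b) b := self_mem_sideF
    have h2 : a ∉ sideF T s(a, b) b := not_mem_sideF' hT hadj
    exact cnt_comp_swap_mem f hadj.ne.symm h1 h2

lemma dist_step {p q m i j : ℕ} (h : (q : ℤ) = (p : ℤ) - i + j) (hi : i ≤ 1) (hj : j ≤ 1) :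
    Nat.dist p m ≤ Nat.dist q m + 1 := by
  simp only [Nat.dist]
  omega

lemma Phi_le_of_swapStep (hT : T.IsTree) [Fintype T.edgeSet] {f f' g : V → Fin 2}
    (h : SwapStep T f f') : Phi T f g ≤ Phi T f' g + 1 := by
  rw [swapStep_iff] at h
  obtain ⟨a, b, hadj, rfl⟩ := h
  have he0 : s(a, b) ∈ T.edgeFinset := by
    rw [SimpleGraph.mem_edgeFinset]; exact hadj
  unfold Phi
  rw [← Finset.add_sum_erase _ _ he0, ← Finset.add_sum_erase _ (fun e => diffE T (f ∘ Equiv.swap a b) g e) he0]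
  have hrest : ∑ e ∈ T.edgeFinset.erase s(a, b), diffE T f g e
      = ∑ e ∈ T.edgeFinset.erase s(a, b), diffE T (f ∘ Equiv.swap a b) g e := by
    refine Finset.sum_congr rfl fun e hme => ?_
    have h1 := (Finset.mem_erase.1 hme).1
    have h2 := SimpleGraph.mem_edgeFinset.1 (Finset.mem_erase.1 hme).2
    exact (diffE_swap_ne hadj h2 h1 f g).symm
  rw [hrest]
  have hkey : diffE T f g s(a, b) ≤ diffE T (f ∘ Equiv.swap a b) g s(a, b) + 1 := by
    obtain ⟨c, d, hcd, hval⟩ := cnt_swap_e0 hT hadj f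
    rw [diffE_eq, diffE_eq]
    exact dist_step hval (ind_le_one f c) (ind_le_one f d)
  omega

lemma Phi_swap_dec (hT : T.IsTree) [Fintype T.edgeSet] {f g : V → Fin 2} {a b : V}
    (htot : cnt f Finset.univ = cnt g Finset.univ)
    (hadj : T.Adj a b) (hfa : f a = 1) (hfb : f b = 0)
    (hexc : (cnt g (sideF T s(a, b) a) : ℤ) < cnt f (sideF T s(a, b) a)) :
    Phi T (f ∘ Equiv.swap a b) g + 1 = Phi T f g := by
  have he0 : s(a, b) ∈ T.edgeFinset := by
    rw [SimpleGraph.mem_edgeFinset]; exact hadj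
  have hia : ind f a = 1 := by simp [ind, hfa]
  have hib : ind f b = 0 := by simp [ind, hfb]
  unfold Phi
  rw [← Finset.add_sum_erase _ _ he0, ← Finset.add_sum_erase _ (fun e => diffE T f g e) he0]
  have hrest : ∑ e ∈ T.edgeFinset.erase s(a, b), diffE T (f ∘ Equiv.swap a b) g e
      = ∑ e ∈ T.edgeFinset.erase s(a, b), diffE T f g e := by
    refine Finset.sum_congr rfl fun e hme => ?_
    have h1 := (Finset.mem_erase.1 hme).1
    have h2 := SimpleGraph.mem_edgeFinset.1 (Finset.mem_erase.1 hme).2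
    exact diffE_swap_ne hadj h2 h1 f g
  rw [hrest]
  have hkey : diffE T (f ∘ Equiv.swap a b) g s(a, b) + 1 = diffE T f g s(a, b) := by
    have hmem : (Quot.out s(a, b)).1 ∈ s(a, b) := Sym2.out_fst_mem _
    rw [Sym2.mem_iff] at hmem
    have hsplitf := cnt_split_edge hT f hadj
    have hsplitg := cnt_split_edge hT g hadj
    rcases hmem with hx | hx
    · have hval : (cnt (f ∘ Equiv.swap a b) (sideF T s(a, b) a) : ℤ)
          = cnt f (sideF T s(a, b) a) - ind f a + ind f b :=
        cnt_comp_swap_mem f hadj.ne (self_mem_sideF) (not_mem_sideF hT hadj)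
      rw [diffE_eq, diffE_eq, hx]
      simp only [Nat.dist]
      omega
    · have hval : (cnt (f ∘ Equiv.swap a b) (sideF T s(a, b) b) : ℤ)
          = cnt f (sideF T s(a, b) b) - ind f b + ind f a := by
        rw [show Equiv.swap a b = Equiv.swap b a from Equiv.swap_comm a b]
        exact cnt_comp_swap_mem f hadj.ne.symm (self_mem_sideF) (not_mem_sideF' hT hadj)
      rw [diffE_eq, diffE_eq, hx]
      simp only [Nat.dist]
      omega
  omega

end PhiSec

section Select
variable {T : SimpleGraph V}

lemma exists_pos_dl (hT : T.IsTree) {f g : V → Fin 2}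
    (htot : cnt f Finset.univ = cnt g Finset.univ) (hne : f ≠ g) :
    ∃ a b, T.Adj a b ∧ 0 < dl T f g a b := by
  obtain ⟨v0, hv0⟩ := Function.ne_iff.1 hne
  have hstar := dl_vertex hT htot v0
  have hsum_cases : (∃ u ∈ T.neighborFinset v0, dl T f g u v0 < 0) ∨
      (∃ u ∈ T.neighborFinset v0, 0 < dl T f g u v0) := by
    rcases fin2_cases (f v0) with hf | hf <;> rcases fin2_cases (g v0) with hg | hg
    · exact absurd (hf.trans hg.symm) hv0
    · -- f v0 = 0, g v0 = 1 : sum = 1 > 0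
      right
      by_contra hcon
      push_neg at hcon
      have : ∑ u ∈ T.neighborFinset v0, dl T f g u v0 ≤ 0 :=
        Finset.sum_nonpos fun u hu => hcon u hu
      have hif : ind f v0 = 0 := by simp [ind, hf]
      have hig : ind g v0 = 1 := by simp [ind, hg]
      rw [hif, hig] at hstar
      omega
    · -- f v0 = 1, g v0 = 0 : sum = -1 < 0
      left
      by_contra hcon
      push_neg at hcon
      have : 0 ≤ ∑ u ∈ T.neighborFinset v0, dl T f g u v0 :=
        Finset.sum_nonneg fun u hu => hcon u hu
      have hif : ind f v0 = 1 := by simp [ind, hf]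
      have hig : ind g v0 = 0 := by simp [ind, hg]
      rw [hif, hig] at hstar
      omega
    · exact absurd (hf.trans hg.symm) hv0
  rcases hsum_cases with ⟨u, hu, hdl⟩ | ⟨u, hu, hdl⟩
  · rw [SimpleGraph.mem_neighborFinset] at hu
    refine ⟨v0, u, hu, ?_⟩
    have := dl_antisymm hT htot hu
    omega
  · rw [SimpleGraph.mem_neighborFinset] at hu
    exact ⟨u, v0, hu.symm, hdl⟩

lemma sideF_card_lt (hT : T.IsTree) {u v u' : V} (huv : T.Adj u v) (huu' : T.Adj u u')
    (hne : u' ≠ v) : (sideF T s(u', u) u').card < (sideF T s(u, v) u).card := by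
  apply Finset.card_lt_card
  constructor
  · exact sideF_subset hT huv huu' hne
  · intro hsub
    have h1 : u ∈ sideF T s(u, v) u := self_mem_sideF
    have h2 : u ∉ sideF T s(u', u) u' := not_mem_sideF hT huu'.symm
    exact h2 (hsub h1)

lemma exists_good (hT : T.IsTree) {f g : V → Fin 2}
    (htot : cnt f Finset.univ = cnt g Finset.univ) (hne : f ≠ g) :
    ∃ a b, T.Adj a b ∧ f a = 1 ∧ f b = 0 ∧
      (cnt g (sideF T s(a, b) a) : ℤ) < cnt f (sideF T s(a, b) a) := by
  classical
  obtain ⟨a0, b0, hadj0, hdl0⟩ := exists_pos_dl hT htot hne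
  -- stage 1: find a pair with f-value 0 on the deficit end
  have stage1 : ∃ a b, T.Adj a b ∧ 0 < dl T f g a b ∧ f b = 0 := by
    set S1 : Finset (V × V) :=
      Finset.univ.filter (fun p => T.Adj p.1 p.2 ∧ 0 < dl T f g p.1 p.2) with hS1
    have hmemS1 : ∀ p : V × V, p ∈ S1 ↔ T.Adj p.1 p.2 ∧ 0 < dl T f g p.1 p.2 := by
      intro p; simp [hS1]
    have hne1 : S1.Nonempty := ⟨(a0, b0), (hmemS1 _).2 ⟨hadj0, hdl0⟩⟩
    obtain ⟨p, hp, hmin⟩ := Finset.exists_min_image S1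
      (fun p => (sideF T s(p.1, p.2) p.2).card) hne1
    obtain ⟨hpadj, hpdl⟩ := (hmemS1 p).1 hp
    refine ⟨p.1, p.2, hpadj, hpdl, ?_⟩
    rcases fin2_cases (f p.2) with h | h
    · exact h
    · exfalso
      -- expand at (p.2, p.1)
      have hexp := dl_expand hT (f := f) (g := g) hpadj.symm
      have hanti := dl_antisymm hT htot hpadj
      have hdlneg : dl T f g p.2 p.1 < 0 := by omega
      have hif : ind f p.2 = 1 := by simp [ind, h]
      have hig : ind g p.2 ≤ 1 := ind_le_one g p.2
      have hsumneg : ∑ b' ∈ (T.neighborFinset p.2).erase p.1, dl T f g b' p.2 < 0 := by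
        zify at hif
        omega
      obtain ⟨b', hb', hdlb'⟩ : ∃ b' ∈ (T.neighborFinset p.2).erase p.1, dl T f g b' p.2 < 0 := by
        by_contra hcon
        push_neg at hcon
        exact absurd (Finset.sum_nonneg fun u hu => hcon u hu) (by omega)
      have hb'ne : b' ≠ p.1 := (Finset.mem_erase.1 hb').1
      have hb'adj : T.Adj p.2 b' := by
        have := (Finset.mem_erase.1 hb').2
        rwa [SimpleGraph.mem_neighborFinset] at this
      have hpos : 0 < dl T f g p.2 b' := by
        have := dl_antisymm hT htot hb'adj.symm
        omega
      have hnew : (p.2, b') ∈ S1 := (hmemS1 _).2 ⟨hb'adj, hpos⟩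
      have hge := hmin _ hnew
      dsimp only at hge
      have hlt : (sideF T s(b', p.2) b').card < (sideF T s(p.1, p.2) p.2).card := by
        have := sideF_card_lt hT (u := p.2) (v := p.1) (u' := b') hpadj.symm hb'adj hb'ne
        rw [show s(p.1, p.2) = s(p.2, p.1) from Sym2.eq_swap]
        exact this
      rw [show s(p.2, b') = s(b', p.2) from Sym2.eq_swap] at hge
      omega
  -- stage 2
  obtain ⟨a1, b1, hadj1, hdl1, hfb1⟩ := stage1
  set S2 : Finset (V × V) :=
    Finset.univ.filter (fun p => T.Adj p.1 p.2 ∧ 0 < dl T f g p.1 p.2 ∧ f p.2 = 0) with hS2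
  have hmemS2 : ∀ p : V × V, p ∈ S2 ↔ T.Adj p.1 p.2 ∧ 0 < dl T f g p.1 p.2 ∧ f p.2 = 0 := by
    intro p; simp [hS2]
  have hne2 : S2.Nonempty := ⟨(a1, b1), (hmemS2 _).2 ⟨hadj1, hdl1, hfb1⟩⟩
  obtain ⟨p, hp, hmin⟩ := Finset.exists_min_image S2
    (fun p => (sideF T s(p.1, p.2) p.1).card) hne2
  obtain ⟨hpadj, hpdl, hpf⟩ := (hmemS2 p).1 hp
  have hfa : f p.1 = 1 := by
    rcases fin2_cases (f p.1) with h | h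
    swap
    · exact h
    exfalso
    have hexp := dl_expand hT (f := f) (g := g) hpadj
    have hif : ind f p.1 = 0 := by simp [ind, h]
    have hig : (0 : ℤ) ≤ ind g p.1 := Int.ofNat_nonneg _
    have hsumpos : 0 < ∑ a' ∈ (T.neighborFinset p.1).erase p.2, dl T f g a' p.1 := by
      zify at hif
      omega
    obtain ⟨a', ha', hdla'⟩ : ∃ a' ∈ (T.neighborFinset p.1).erase p.2, 0 < dl T f g a' p.1 := by
      by_contra hcon
      push_neg at hcon
      exact absurd (Finset.sum_nonpos fun u hu => hcon u hu) (by omega)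
    have ha'ne : a' ≠ p.2 := (Finset.mem_erase.1 ha').1
    have ha'adj : T.Adj p.1 a' := by
      have := (Finset.mem_erase.1 ha').2
      rwa [SimpleGraph.mem_neighborFinset] at this
    have hnew : (a', p.1) ∈ S2 := (hmemS2 _).2 ⟨ha'adj.symm, hdla', h⟩
    have hge := hmin _ hnew
    dsimp only at hge
    have hlt : (sideF T s(a', p.1) a').card < (sideF T s(p.1, p.2) p.1).card :=
      sideF_card_lt hT hpadj ha'adj ha'ne
    omega
  refine ⟨p.1, p.2, hpadj, hfa, hpf, ?_⟩
  unfold dl at hpdl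
  omega

end Select

section ReachSec
variable {T : SimpleGraph V}

lemma reach_refl {G : SimpleGraph V} (f : V → Fin 2) : Reach G f f 0 :=
  ⟨fun _ => f, rfl, rfl, fun i hi => absurd hi (by omega)⟩

lemma reach_cons {G : SimpleGraph V} {f f1 f2 : V → Fin 2} {k : ℕ}
    (h : SwapStep G f f1) (hr : Reach G f1 f2 k) : Reach G f f2 (k + 1) := by
  obtain ⟨w, hw0, hwk, hws⟩ := hr
  refine ⟨fun i => if i = 0 then f else w (i - 1), by simp, by simp [hwk], ?_⟩
  intro i hi
  rcases Nat.eq_zero_or_pos i with rfl | hipos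
  · simpa [hw0] using h
  · have h1 : i ≠ 0 := by omega
    have h2 : i + 1 ≠ 0 := by omega
    simp only [h1, h2, if_false]
    have hgoal := hws (i - 1) (by omega)
    have heq : i - 1 + 1 = i := by omega
    rw [heq] at hgoal
    have heq2 : i + 1 - 1 = i := by omega
    rw [heq2]
    exact hgoal

lemma reach_tail {G : SimpleGraph V} {f f2 : V → Fin 2} {k : ℕ}
    (h : Reach G f f2 (k + 1)) : ∃ f1, SwapStep G f f1 ∧ Reach G f1 f2 k := by
  obtain ⟨w, h0, hk, hs⟩ := h
  refine ⟨w 1, by rw [← h0]; exact hs 0 (by omega), fun i => w (i + 1), rfl, hk, ?_⟩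
  intro i hi
  exact hs (i + 1) (by omega)

lemma reach_of_phi (hT : T.IsTree) [Fintype T.edgeSet] (g : V → Fin 2) :
    ∀ n (f : V → Fin 2), Phi T f g = n → cnt f Finset.univ = cnt g Finset.univ →
      Reach T f g (Phi T f g) := by
  intro n
  induction n using Nat.strong_induction_on with
  | _ n ih =>
    intro f hn htot
    by_cases hfg : f = g
    · subst hfg
      rw [Phi_self]
      exact reach_refl f
    · obtain ⟨a, b, hadj, hfa, hfb, hexc⟩ := exists_good hT htot hfg
      have hdec := Phi_swap_dec hT (f := f) (g := g) htot hadj hfa hfb hexc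
      have htot' : cnt (f ∘ Equiv.swap a b) Finset.univ = cnt g Finset.univ := by
        rw [cnt_comp_swap f a b _ (by simp)]
        exact htot
      have hlt : Phi T (f ∘ Equiv.swap a b) g < n := by omega
      have hr := ih _ hlt (f ∘ Equiv.swap a b) rfl htot'
      have hstep : SwapStep T f (f ∘ Equiv.swap a b) := swapStep_iff.2 ⟨a, b, hadj, rfl⟩
      have hreach := reach_cons hstep hr
      rw [← hdec]
      exact hreach

lemma phi_le_of_reach (hT : T.IsTree) [Fintype T.edgeSet] (g : V → Fin 2) :
    ∀ (k : ℕ) (f : V → Fin 2), Reach T f g k → Phi T f g ≤ k := by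
  intro k
  induction k with
  | zero =>
    intro f h
    obtain ⟨w, h0, hk, _⟩ := h
    have hfg : f = g := by rw [← h0, hk]
    subst hfg
    rw [Phi_self]
  | succ k ihk =>
    intro f h
    obtain ⟨f1, hstep, hr⟩ := reach_tail h
    have h1 := Phi_le_of_swapStep (g := g) hT hstep
    have h2 := ihk f1 hr
    omega

end ReachSec

end TokenSwap

/-- On a tree with two colors, the minimum number of swaps transforming `f0`
into `ft` equals `Σ_{e ∈ E(T)} diff(e)`. -/
theorem tree_opt_eq_sum_diff {V : Type*} [Fintype V] [DecidableEq V]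
    (T : SimpleGraph V) [Fintype T.edgeSet] (hT : T.IsTree) (f0 ft : V → Fin 2)
    (hsim : Nat.card {v : V | f0 v = 1} = Nat.card {v : V | ft v = 1}) :
    IsLeast {k : ℕ | Reach T f0 ft k} (∑ e ∈ T.edgeFinset, diffE T f0 ft e) := by
  have htot : TokenSwap.cnt f0 Finset.univ = TokenSwap.cnt ft Finset.univ := by
    rw [← TokenSwap.natCard_ones, ← TokenSwap.natCard_ones]
    exact hsim
  have hPhi : TokenSwap.Phi T f0 ft = ∑ e ∈ T.edgeFinset, diffE T f0 ft e := rfl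
  constructor
  · have := TokenSwap.reach_of_phi hT ft (TokenSwap.Phi T f0 ft) f0 rfl htot
    rw [hPhi] at this
    exact this
  · intro k hk
    have := TokenSwap.phi_le_of_reach hT ft k f0 hk
    rw [hPhi] at this
    exact this
end

section
/- Let G be the complete graph on n vertices with token-placements f_0 and f_t, and let CC be any vertex-disjoint cycle cover of the destination graph D(f_0, f_t). Then OPT(f_0, f_t) ≤ n - |CC|, where |CC| is the number of cycles in the cover (self-loops counted as cycles). -/
lemma TokenSwap.reach_cons_s11 {V C : Type*} {G : SimpleGraph V} {f0 f1 ft : V → C} {k : ℕ}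
    (h1 : SwapStep G f0 f1) (h2 : Reach G f1 ft k) : Reach G f0 ft (k + 1) := by
  obtain ⟨g, hg0, hgk, hstep⟩ := h2
  refine ⟨fun i => if i = 0 then f0 else g (i - 1), rfl, by simp [hgk], ?_⟩
  intro i hi
  match i with
  | 0 => simpa [hg0] using h1
  | (j+1) =>
    have := hstep j (by omega)
    simpa using this

namespace TokenSwap
open Equiv Equiv.Perm
section
set_option linter.unusedSectionVars false
variable {V : Type*} [Fintype V] [DecidableEq V] {C : Type*}
set_option linter.unusedSectionVars false
variable {V : Type*} [Fintype V] [DecidableEq V]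

lemma rel_iff (σ : Equiv.Perm V) (x y : V) :
    (MulAction.orbitRel (Subgroup.zpowers σ) V) x y ↔ σ.SameCycle y x := by
  rw [MulAction.orbitRel_apply, MulAction.mem_orbit_iff]
  constructor
  · rintro ⟨⟨g, k, rfl⟩, h⟩
    exact ⟨k, h⟩
  · rintro ⟨k, h⟩
    exact ⟨⟨σ ^ k, k, rfl⟩, h⟩

lemma step1 (π : Equiv.Perm V) (u : V) (hu : π u ≠ u) :
    ∀ z : V, z ≠ π u →
      π.SameCycle z ((π * Equiv.swap u (π u)) z) ∧ (π * Equiv.swap u (π u)) z ≠ π u := by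
  have hπa : π (π u) ≠ π u := fun h => hu (π.injective h)
  intro z hz
  rcases eq_or_ne z u with rfl | hzu
  · refine ⟨⟨2, ?_⟩, ?_⟩
    · simp [Equiv.swap_apply_left, pow_succ, zpow_ofNat]
    · simp [Equiv.swap_apply_left, hπa]
  · have h : (π * Equiv.swap u (π u)) z = π z := by
      simp [Equiv.swap_apply_of_ne_of_ne hzu hz]
    rw [h]
    exact ⟨⟨1, by simp⟩, fun h => hzu (π.injective h)⟩

lemma claim1 (π : Equiv.Perm V) (u : V) (hu : π u ≠ u) :
    ∀ (i : ℕ) (x : V), x ≠ π u →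
      π.SameCycle x (((π * Equiv.swap u (π u)) ^ i) x) ∧
        ((π * Equiv.swap u (π u)) ^ i) x ≠ π u := by
  intro i
  induction i with
  | zero => intro x hx; simpa using ⟨Equiv.Perm.SameCycle.refl _ _, hx⟩
  | succ n ih =>
    intro x hx
    obtain ⟨s1, s2⟩ := step1 π u hu x hx
    have h' := ih ((π * Equiv.swap u (π u)) x) s2
    have key : ((π * Equiv.swap u (π u)) ^ (n+1)) x
        = ((π * Equiv.swap u (π u)) ^ n) ((π * Equiv.swap u (π u)) x) := by
      rw [pow_succ, Equiv.Perm.mul_apply]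
    rw [key]
    exact ⟨s1.trans h'.1, h'.2⟩

lemma claim2 (π : Equiv.Perm V) (u : V) (hu : π u ≠ u) :
    ∀ (i : ℕ) (x : V), x ≠ π u → (π ^ i) x ≠ π u →
      (π * Equiv.swap u (π u)).SameCycle x ((π ^ i) x) := by
  have hπa : π (π u) ≠ π u := fun h => hu (π.injective h)
  intro i
  induction i using Nat.strong_induction_on with
  | _ i ih =>
    match i with
    | 0 => intro x hx hy; exact ⟨0, by simp⟩
    | 1 =>
      intro x hx hy
      rcases eq_or_ne x u with rfl | hxu
      · simp at hy
      · refine ⟨1, ?_⟩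
        simp [Equiv.swap_apply_of_ne_of_ne hxu hx]
    | (n+2) =>
      intro x hx hy
      rcases eq_or_ne x u with rfl | hxu
      · have key : ((π : Equiv.Perm V) ^ (n+2)) x = (π ^ n) (π (π x)) := by
          rw [pow_succ, pow_succ, Equiv.Perm.mul_apply, Equiv.Perm.mul_apply]
        have h1 : (π * Equiv.swap x (π x)).SameCycle x (π (π x)) := by
          refine ⟨1, ?_⟩; simp [Equiv.swap_apply_left]
        have h2 := ih n (by omega) (π (π x)) hπa (by rw [← key]; exact hy)
        rw [key]
        exact h1.trans h2
      · have hπx : π x ≠ π u := fun h => hxu (π.injective h)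
        have h1 : (π * Equiv.swap u (π u)).SameCycle x (π x) := by
          refine ⟨1, ?_⟩
          simp [Equiv.swap_apply_of_ne_of_ne hxu hx]
        have key : ((π : Equiv.Perm V) ^ (n+2)) x = (π ^ (n+1)) (π x) := by
          rw [pow_succ, Equiv.Perm.mul_apply]
        have h2 := ih (n+1) (by omega) (π x) hπx (by rw [← key]; exact hy)
        rw [key]
        exact h1.trans h2

lemma sc_to (π : Equiv.Perm V) (u : V) (hu : π u ≠ u) {x y : V}
    (hx : x ≠ π u) (hy : y ≠ π u) (h : π.SameCycle x y) :
    (π * Equiv.swap u (π u)).SameCycle x y := by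
  obtain ⟨i, _, rfl⟩ := h.exists_pow_eq'
  exact claim2 π u hu i x hx hy

lemma sc_from (π : Equiv.Perm V) (u : V) (hu : π u ≠ u) {x y : V}
    (hx : x ≠ π u) (h : (π * Equiv.swap u (π u)).SameCycle x y) :
    π.SameCycle x y ∧ y ≠ π u := by
  obtain ⟨i, _, rfl⟩ := h.exists_pow_eq'
  exact claim1 π u hu i x hx

lemma mk_eq_mk_iff (σ : Equiv.Perm V) (x y : V) :
    (Quotient.mk (MulAction.orbitRel (Subgroup.zpowers σ) V) x =
      Quotient.mk (MulAction.orbitRel (Subgroup.zpowers σ) V) y) ↔ σ.SameCycle y x := by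
  rw [Quotient.eq]
  exact rel_iff σ x y

lemma card_orbits_succ_le (π : Equiv.Perm V) (u : V) (hu : π u ≠ u) :
    Nat.card (Quotient (MulAction.orbitRel (Subgroup.zpowers π) V)) + 1 ≤
      Nat.card (Quotient (MulAction.orbitRel
        (Subgroup.zpowers (π * Equiv.swap u (π u))) V)) := by
  set a := π u with ha
  have hua : u ≠ a := fun h => hu h.symm
  set π' := π * Equiv.swap u a with hπ'
  have hfix : π' a = a := by
    rw [hπ', Equiv.Perm.mul_apply, Equiv.swap_apply_right]
  -- the map on representatives
  have hrep : ∀ x : V, (if x = a then u else x) ≠ a ∧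
      π.SameCycle (if x = a then u else x) x := by
    intro x
    rcases eq_or_ne x a with rfl | hxa
    · simpa [hua] using ⟨1, ha.symm⟩
    · rw [if_neg hxa]
      exact ⟨hxa, Equiv.Perm.SameCycle.refl _ _⟩
  let G : Quotient (MulAction.orbitRel (Subgroup.zpowers π) V) →
      Quotient (MulAction.orbitRel (Subgroup.zpowers π') V) :=
    Quotient.map' (fun x => if x = a then u else x) (by
      intro x y hxy
      have hxy' : π.SameCycle y x := (rel_iff π x y).mp hxy
      show MulAction.orbitRel (Subgroup.zpowers π') V _ _
      have h1 := hrep x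
      have h2 := hrep y
      have : π.SameCycle (if y = a then u else y) (if x = a then u else x) :=
        (h2.2.trans hxy').trans h1.2.symm
      have := sc_to π u hu h2.1 h1.1 this
      exact (rel_iff π' _ _).mpr this)
  have hGinj : Function.Injective G := by
    intro q1 q2
    induction q1 using Quotient.ind with | _ x =>
    induction q2 using Quotient.ind with | _ y =>
    intro h
    have h' : (Quotient.mk (MulAction.orbitRel (Subgroup.zpowers π') V)
        (if x = a then u else x)) = Quotient.mk _ (if y = a then u else y) := h
    have hsc := (mk_eq_mk_iff π' _ _).mp h'
    have := (sc_from π u hu (hrep y).1 hsc).1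
    have hxy : π.SameCycle x y := ((hrep x).2.symm.trans this.symm).trans (hrep y).2
    exact (mk_eq_mk_iff π x y).mpr hxy.symm
  have hnotin : ∀ q, G q ≠ Quotient.mk (MulAction.orbitRel (Subgroup.zpowers π') V) a := by
    intro q
    induction q using Quotient.ind with | _ x =>
    intro h
    have h' : (Quotient.mk (MulAction.orbitRel (Subgroup.zpowers π') V)
        (if x = a then u else x)) = Quotient.mk _ a := h
    have hsc := (mk_eq_mk_iff π' _ _).mp h'
    obtain ⟨k, hk⟩ := hsc
    rw [Equiv.Perm.zpow_apply_eq_self_of_apply_eq_self hfix k] at hk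
    exact (hrep x).1 hk.symm
  -- build injection from Option
  let F : Option (Quotient (MulAction.orbitRel (Subgroup.zpowers π) V)) →
      Quotient (MulAction.orbitRel (Subgroup.zpowers π') V) :=
    fun o => o.elim (Quotient.mk _ a) G
  have hFinj : Function.Injective F := by
    rintro (_ | q1) (_ | q2) h
    · rfl
    · exact absurd h.symm (hnotin q2)
    · exact absurd h (hnotin q1)
    · rw [hGinj h]
  have hcard := Nat.card_le_card_of_injective F hFinj
  have : Nat.card (Option (Quotient (MulAction.orbitRel (Subgroup.zpowers π) V)))
      = Nat.card (Quotient (MulAction.orbitRel (Subgroup.zpowers π) V)) + 1 := by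
    have : Fintype (Quotient (MulAction.orbitRel (Subgroup.zpowers π) V)) :=
      Fintype.ofFinite _
    simp [Nat.card_eq_fintype_card]
  omega
set_option linter.unusedSectionVars false
variable {V : Type*} [Fintype V] [DecidableEq V] {C : Type*}

lemma card_orb_le (σ : Equiv.Perm V) :
    Nat.card (Quotient (MulAction.orbitRel (Subgroup.zpowers σ) V)) ≤ Fintype.card V := by
  rw [← Nat.card_eq_fintype_card]
  exact Nat.card_le_card_of_surjective _ Quotient.exists_rep

lemma main_aux (ft : V → C) (d : ℕ) : ∀ (π : Equiv.Perm V) (f0 : V → C),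
    Fintype.card V - Nat.card (Quotient (MulAction.orbitRel (Subgroup.zpowers π) V)) ≤ d →
    (∀ v, f0 v = ft (π v)) →
    ∃ k ≤ Fintype.card V - Nat.card (Quotient (MulAction.orbitRel (Subgroup.zpowers π) V)),
      Reach (⊤ : SimpleGraph V) f0 ft k := by
  induction d with
  | zero =>
    intro π f0 hd hf
    rcases eq_or_ne π 1 with rfl | hπ1
    · refine ⟨0, Nat.zero_le _, fun _ => f0, rfl, ?_, by omega⟩
      funext v; simpa using hf v
    · exfalso
      obtain ⟨u, hu⟩ : ∃ u, π u ≠ u := by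
        by_contra h; push_neg at h; exact hπ1 (Equiv.ext h)
      have h1 := card_orbits_succ_le π u hu
      have h2 := card_orb_le (π * Equiv.swap u (π u))
      omega
  | succ d ih =>
    intro π f0 hd hf
    rcases eq_or_ne π 1 with rfl | hπ1
    · refine ⟨0, Nat.zero_le _, fun _ => f0, rfl, ?_, by omega⟩
      funext v; simpa using hf v
    · obtain ⟨u, hu⟩ : ∃ u, π u ≠ u := by
        by_contra h; push_neg at h; exact hπ1 (Equiv.ext h)
      set π' := π * Equiv.swap u (π u) with hπ'
      have h1 := card_orbits_succ_le π u hu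
      rw [← hπ'] at h1
      have h2 := card_orb_le π'
      set f1 : V → C := fun v => f0 (Equiv.swap u (π u) v) with hf1
      have hf1t : ∀ v, f1 v = ft (π' v) := by
        intro v
        rw [hf1, hπ']
        simp only [Equiv.Perm.mul_apply]
        exact hf _
      obtain ⟨k, hk, hreach⟩ := ih π' f1 (by omega) hf1t
      have hswap : SwapStep (⊤ : SimpleGraph V) f0 f1 := by
        refine ⟨u, π u, ?_, ?_, ?_, ?_⟩
        · exact fun h => hu h.symm
        · simp [hf1]
        · simp [hf1]
        · intro w hw1 hw2
          simp [hf1, Equiv.swap_apply_of_ne_of_ne hw1 hw2]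
      exact ⟨k + 1, by omega, reach_cons_s11 hswap hreach⟩
end
end TokenSwap

/-- On the complete graph, for any vertex-disjoint cycle cover of the destination
graph (encoded as a permutation `π` with `f0 v = ft (π v)` for all `v`; its
cycles are the orbits of `π`, self-loops being fixed points),
`OPT(f0, ft) ≤ n - |CC|`. -/
theorem opt_le_card_sub_cycle_cover {V : Type*} [Fintype V] {C : Type*}
    (f0 ft : V → C) (π : Equiv.Perm V) (hπ : ∀ v, f0 v = ft (π v)) :
    ∃ k ≤ Fintype.card V -
        Nat.card (Quotient (MulAction.orbitRel (Subgroup.zpowers π) V)),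
      Reach (⊤ : SimpleGraph V) f0 ft k := by
  have : DecidableEq V := Classical.decEq V
  obtain ⟨k, hk, hr⟩ := TokenSwap.main_aux ft _ π f0 le_rfl hπ
  exact ⟨k, hk, hr⟩
end

section
/- If A is a cycle in a cycle cover of the destination graph D(f_0, f_t) (on a complete graph, colors drawn from a set of c colors) that maximizes the number of cycles, then A contains at most c vertices. -/
open Equiv Equiv.Perm MulAction

/-- Membership in an orbit of `zpowers σ` is the same as `SameCycle`. -/
lemma mem_orbit_zpowers_iff_sameCycle {V : Type*} {σ : Equiv.Perm V} {x y : V} :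
    y ∈ MulAction.orbit (Subgroup.zpowers σ) x ↔ σ.SameCycle x y := by
  constructor
  · rintro ⟨⟨g, k, rfl⟩, rfl⟩
    exact ⟨k, rfl⟩
  · rintro ⟨k, hk⟩
    exact ⟨⟨σ ^ k, k, rfl⟩, hk⟩

/-- Splitting lemma: multiplying by a transposition of two points on the same
cycle separates them into different cycles. -/
lemma not_sameCycle_mul_swap {V : Type*} [Fintype V] [DecidableEq V] (π : Equiv.Perm V) (u w : V)
    (huw : u ≠ w) (h : π.SameCycle u w) : ¬ (π * Equiv.swap u w).SameCycle u w := by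
  classical
  intro hc
  set σ := π * Equiv.swap u w with hσdef
  have hσu : σ u = π w := by simp [hσdef, Equiv.Perm.mul_apply]
  have hσ : ∀ x, x ≠ u → x ≠ w → σ x = π x := by
    intro x hxu hxw
    simp [hσdef, Equiv.Perm.mul_apply, Equiv.swap_apply_of_ne_of_ne hxu hxw]
  -- minimal positive m with σ^m u = w
  have hex : ∃ n : ℕ, 0 < n ∧ (σ ^ n) u = w := by
    obtain ⟨i, hi0, _, hiu⟩ := hc.exists_pow_eq''
    exact ⟨i, hi0, hiu⟩
  set m := Nat.find hex with hmdef
  obtain ⟨hm0, hmw⟩ : 0 < m ∧ (σ ^ m) u = w := Nat.find_spec hex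
  have hmin : ∀ i, i < m → ¬(0 < i ∧ (σ ^ i) u = w) := fun i hi => Nat.find_min hex hi
  have claim1 : ∀ i, 0 < i → i < m → (σ ^ i) u ≠ w := by
    intro i hi0 him hiw
    exact hmin i him ⟨hi0, hiw⟩
  have claim2 : ∀ i, 0 < i → i < m → (σ ^ i) u ≠ u := by
    intro i hi0 him hiu
    have hsub : (σ ^ (m - i)) u = w := by
      have : σ ^ m = σ ^ (m - i) * σ ^ i := by
        rw [← pow_add, Nat.sub_add_cancel him.le]
      rw [← hmw, this, Equiv.Perm.mul_apply, hiu]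
    exact hmin (m - i) (by omega) ⟨by omega, hsub⟩
  have key : ∀ i : ℕ, 0 < i → i ≤ m → (σ ^ i) u = (π ^ i) w := by
    intro i
    induction i with
    | zero => intro h0; exact absurd h0 (lt_irrefl 0)
    | succ n ih =>
      intro _ hle
      rcases Nat.eq_zero_or_pos n with h0 | hn
      · subst h0; simpa using hσu
      · have hnm : n < m := by omega
        have h1 := ih hn hnm.le
        have hneu := claim2 n hn hnm
        have hnew := claim1 n hn hnm
        calc (σ ^ (n + 1)) u = σ ((σ ^ n) u) := by
              rw [pow_succ' σ n, Equiv.Perm.mul_apply]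
          _ = π ((σ ^ n) u) := hσ _ hneu hnew
          _ = π ((π ^ n) w) := by rw [h1]
          _ = (π ^ (n + 1)) w := by rw [pow_succ' π n, Equiv.Perm.mul_apply]
  have hπm : (π ^ m) w = w := by rw [← key m hm0 le_rfl, hmw]
  -- u is in the π-orbit of w
  obtain ⟨n, _, hnu⟩ := (h.symm).exists_pow_eq'
  have hqm : ∀ q : ℕ, (π ^ (q * m)) w = w := by
    intro q
    induction q with
    | zero => simp
    | succ k ihk =>
      rw [Nat.succ_mul, pow_add, Equiv.Perm.mul_apply, hπm, ihk]
  have hr : (π ^ (n % m)) w = u := by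
    have : π ^ n = π ^ (n % m) * π ^ (n / m * m) := by
      rw [← pow_add, Nat.mod_add_div' n m]
    rw [← hnu, this, Equiv.Perm.mul_apply, hqm]
  have hrm : n % m < m := Nat.mod_lt _ hm0
  rcases Nat.eq_zero_or_pos (n % m) with h0 | hpos
  · rw [h0] at hr; simp at hr; exact huw hr.symm
  · have := key (n % m) hpos hrm.le
    rw [hr] at this
    exact claim2 (n % m) hpos hrm this

/-- Every point is on the same `π`-cycle as its image under `π * swap u w`,
provided `u` and `w` are on the same `π`-cycle. -/
lemma sameCycle_of_mul_swap_step {V : Type*} [DecidableEq V] (π : Equiv.Perm V) {u w : V}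
    (h : π.SameCycle u w) (x : V) : π.SameCycle x ((π * Equiv.swap u w) x) := by
  classical
  by_cases hxu : x = u
  · have h1 : (π * Equiv.swap u w) x = π w := by
      rw [hxu]; simp [Equiv.Perm.mul_apply]
    rw [h1, hxu]
    exact Equiv.Perm.sameCycle_apply_right.mpr h
  · by_cases hxw : x = w
    · have h1 : (π * Equiv.swap u w) x = π u := by
        rw [hxw]; simp [Equiv.Perm.mul_apply]
      rw [h1, hxw]
      exact Equiv.Perm.sameCycle_apply_right.mpr h.symm
    · have h1 : (π * Equiv.swap u w) x = π x := by
        simp [Equiv.Perm.mul_apply, Equiv.swap_apply_of_ne_of_ne hxu hxw]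
      rw [h1]
      exact Equiv.Perm.sameCycle_apply_right.mpr (Equiv.Perm.SameCycle.refl π x)

lemma sameCycle_of_mul_swap {V : Type*} [Fintype V] [DecidableEq V] (π : Equiv.Perm V) {u w : V}
    (h : π.SameCycle u w) {x y : V}
    (hxy : (π * Equiv.swap u w).SameCycle x y) : π.SameCycle x y := by
  classical
  obtain ⟨n, -, hn⟩ := hxy.exists_pow_eq'
  subst hn
  clear hxy
  induction n with
  | zero => simpa using Equiv.Perm.SameCycle.refl π x
  | succ k ihk =>
    have : ((π * Equiv.swap u w) ^ (k + 1)) x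
        = (π * Equiv.swap u w) (((π * Equiv.swap u w) ^ k) x) := by
      rw [pow_succ' _ k, Equiv.Perm.mul_apply]
    rw [this]
    exact ihk.trans (sameCycle_of_mul_swap_step π h _)

/-- In an optimal (cycle-number maximizing) cycle cover of the destination graph
`D(f0, ft)` on a complete graph with `c` colors — encoded as a permutation `π`
with `f0 v = ft (π v)` whose orbits are the cycles — every cycle contains at
most `c` vertices. -/
theorem optimal_cycle_cover_cycle_le_colors {V : Type*} [Fintype V] (c : ℕ)
    (f0 ft : V → Fin c) (π : Equiv.Perm V) (hπ : ∀ v, f0 v = ft (π v))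
    (hopt : ∀ π' : Equiv.Perm V, (∀ v, f0 v = ft (π' v)) →
      Nat.card (Quotient (MulAction.orbitRel (Subgroup.zpowers π') V)) ≤
      Nat.card (Quotient (MulAction.orbitRel (Subgroup.zpowers π) V))) :
    ∀ v : V, Nat.card (MulAction.orbit (Subgroup.zpowers π) v) ≤ c := by
  classical
  intro v
  by_contra hlt
  push_neg at hlt
  -- pigeonhole: two distinct points of the orbit with the same color
  have hcard : Fintype.card (Fin c) < Fintype.card (MulAction.orbit (Subgroup.zpowers π) v) := by
    rw [Fintype.card_fin, ← Nat.card_eq_fintype_card]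
    exact hlt
  obtain ⟨u, w, hne, hfeq⟩ :=
    Fintype.exists_ne_map_eq_of_card_lt
      (fun x : (MulAction.orbit (Subgroup.zpowers π) v) => f0 x) hcard
  have hneV : (u : V) ≠ (w : V) := fun hh => hne (Subtype.ext hh)
  have hu : π.SameCycle v u := mem_orbit_zpowers_iff_sameCycle.mp u.2
  have hw : π.SameCycle v w := mem_orbit_zpowers_iff_sameCycle.mp w.2
  have huw : π.SameCycle (u : V) (w : V) := hu.symm.trans hw
  set π' := π * Equiv.swap (u : V) (w : V) with hπ'def
  have hvalid : ∀ x, f0 x = ft (π' x) := by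
    intro x
    by_cases hxu : x = (u : V)
    · have h1 : π' x = π (w : V) := by
        rw [hπ'def, hxu]; simp [Equiv.Perm.mul_apply]
      rw [h1, ← hπ (w : V), hxu]
      exact hfeq
    · by_cases hxw : x = (w : V)
      · have h1 : π' x = π (u : V) := by
          rw [hπ'def, hxw]; simp [Equiv.Perm.mul_apply]
        rw [h1, ← hπ (u : V), hxw]
        exact hfeq.symm
      · have h1 : π' x = π x := by
          simp [hπ'def, Equiv.Perm.mul_apply, Equiv.swap_apply_of_ne_of_ne hxu hxw]
        rw [h1]
        exact hπ x
  -- the natural surjection between orbit quotients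
  letI : Fintype (Quotient (MulAction.orbitRel (Subgroup.zpowers π') V)) :=
    Fintype.ofFinite _
  letI : Fintype (Quotient (MulAction.orbitRel (Subgroup.zpowers π) V)) :=
    Fintype.ofFinite _
  have hrel : ∀ x y : V, (MulAction.orbitRel (Subgroup.zpowers π') V).r x y →
      (MulAction.orbitRel (Subgroup.zpowers π) V).r (id x) (id y) := by
    intro x y hxy
    have : x ∈ MulAction.orbit (Subgroup.zpowers π') y := hxy
    have hsc : π'.SameCycle y x := mem_orbit_zpowers_iff_sameCycle.mp this
    have : π.SameCycle y x := sameCycle_of_mul_swap π huw hsc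
    exact mem_orbit_zpowers_iff_sameCycle.mpr this
  set g : Quotient (MulAction.orbitRel (Subgroup.zpowers π') V) →
      Quotient (MulAction.orbitRel (Subgroup.zpowers π) V) :=
    Quotient.map' id hrel with hgdef
  have hsurj : Function.Surjective g := by
    intro q
    obtain ⟨x, rfl⟩ := Quotient.exists_rep q
    exact ⟨Quotient.mk'' x, rfl⟩
  have hninj : ¬ Function.Injective g := by
    intro hinj
    have hgu : g (Quotient.mk'' (u : V)) = g (Quotient.mk'' (w : V)) := by
      rw [hgdef]
      simp only [Quotient.map'_mk'']
      apply Quotient.sound'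
      exact mem_orbit_zpowers_iff_sameCycle.mpr huw.symm
    have := hinj hgu
    have hsc : π'.SameCycle (w : V) (u : V) :=
      mem_orbit_zpowers_iff_sameCycle.mp (Quotient.exact' this)
    exact not_sameCycle_mul_swap π (u : V) (w : V) hneV huw hsc.symm
  have hstrict : Fintype.card (Quotient (MulAction.orbitRel (Subgroup.zpowers π) V)) <
      Fintype.card (Quotient (MulAction.orbitRel (Subgroup.zpowers π') V)) :=
    Fintype.card_lt_of_surjective_not_injective g hsurj hninj
  have hle := hopt π' hvalid
  rw [Nat.card_eq_fintype_card, Nat.card_eq_fintype_card] at hle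
  omega
end

section
/- Let f and f' be token-placements on the complete graph K_n that are adjacent via a swap on edge (u,v), and let f_t be a target placement. Then for the potential φ(g) = n - (maximum number of cycles in a cycle cover of D(g, f_t)), we have φ(f') ≥ φ(f) - 1. -/
open Equiv Equiv.Perm MulAction

section Aux

variable {V : Type*} [DecidableEq V]

/-- The orbit relation of `zpowers π` is `SameCycle`. -/
lemma orbitRel_iff_sameCycle (π : Equiv.Perm V) (x y : V) :
    MulAction.orbitRel (Subgroup.zpowers π) V x y ↔ π.SameCycle x y := by
  rw [MulAction.orbitRel_apply, MulAction.mem_orbit_iff]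
  constructor
  · rintro ⟨⟨g, n, rfl⟩, hg⟩
    exact Equiv.Perm.SameCycle.symm ⟨n, hg⟩
  · rintro ⟨n, hn⟩
    refine ⟨⟨π ^ (-n), -n, rfl⟩, ?_⟩
    show (π ^ (-n)) y = x
    rw [← hn, ← Equiv.Perm.mul_apply, ← zpow_add]
    simp

lemma pow_mul_swap_eq (π : Equiv.Perm V) (u v x : V)
    (hu : ¬π.SameCycle x u) (hv : ¬π.SameCycle x v) :
    ∀ n : ℕ, ((π * Equiv.swap u v) ^ n) x = (π ^ n) x := by
  intro n
  induction n with
  | zero => simp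
  | succ n ih =>
    have h1 : (π ^ n) x ≠ u := fun h => hu ⟨(n : ℤ), by rwa [zpow_natCast]⟩
    have h2 : (π ^ n) x ≠ v := fun h => hv ⟨(n : ℤ), by rwa [zpow_natCast]⟩
    rw [pow_succ', pow_succ', Equiv.Perm.mul_apply, Equiv.Perm.mul_apply, ih,
      Equiv.Perm.mul_apply, Equiv.swap_apply_of_ne_of_ne h1 h2]

lemma sameCycle_mul_swap_iff [Finite V] (π : Equiv.Perm V) (u v x y : V)
    (hu : ¬π.SameCycle x u) (hv : ¬π.SameCycle x v) :
    (π * Equiv.swap u v).SameCycle x y ↔ π.SameCycle x y := by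
  constructor
  · intro h
    obtain ⟨i, -, hi⟩ := h.exists_pow_eq'
    exact ⟨(i : ℤ), by rw [zpow_natCast, ← pow_mul_swap_eq π u v x hu hv i]; exact hi⟩
  · intro h
    obtain ⟨i, -, hi⟩ := h.exists_pow_eq'
    exact ⟨(i : ℤ), by rw [zpow_natCast, pow_mul_swap_eq π u v x hu hv i]; exact hi⟩

/-- Multiplying by a swap decreases the number of orbits by at most one. -/
lemma key_card_le [Fintype V] (π : Equiv.Perm V) (u v : V) :
    Nat.card (Quotient (MulAction.orbitRel (Subgroup.zpowers π) V)) ≤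
      Nat.card (Quotient (MulAction.orbitRel
        (Subgroup.zpowers (π * Equiv.swap u v)) V)) + 1 := by
  classical
  set π' := π * Equiv.swap u v with hπ'
  set Q' := Quotient (MulAction.orbitRel (Subgroup.zpowers π') V)
  -- the lifted map
  set g : V → Q' ⊕ Unit := fun x =>
    if π.SameCycle x u then Sum.inr ()
    else if π.SameCycle x v then Sum.inl (Quotient.mk _ u)
    else Sum.inl (Quotient.mk _ x) with hg
  have hwd : ∀ a b : V, MulAction.orbitRel (Subgroup.zpowers π) V a b → g a = g b := by
    intro a b hab
    rw [orbitRel_iff_sameCycle] at hab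
    have h1 : π.SameCycle a u ↔ π.SameCycle b u := ⟨hab.symm.trans, hab.trans⟩
    have h2 : π.SameCycle a v ↔ π.SameCycle b v := ⟨hab.symm.trans, hab.trans⟩
    by_cases hau : π.SameCycle a u
    · simp [hg, hau, h1.mp hau]
    · by_cases hav : π.SameCycle a v
      · simp [hg, hau, hav, h1.not.mp hau, h2.mp hav]
      · have hbu := h1.not.mp hau
        have hbv := h2.not.mp hav
        have : (Quotient.mk _ a : Q') = Quotient.mk _ b :=
          Quotient.sound ((orbitRel_iff_sameCycle π' a b).mpr
            ((sameCycle_mul_swap_iff π u v a b hau hav).mpr hab))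
        simp [hg, hau, hav, hbu, hbv, this]
  set F : Quotient (MulAction.orbitRel (Subgroup.zpowers π) V) → Q' ⊕ Unit :=
    Quotient.lift g hwd with hF
  have hinj : Function.Injective F := by
    rintro ⟨a⟩ ⟨b⟩ hab
    replace hab : g a = g b := hab
    refine Quotient.sound ((orbitRel_iff_sameCycle π a b).mpr ?_)
    by_cases hau : π.SameCycle a u <;> by_cases hbu : π.SameCycle b u <;>
      by_cases hav : π.SameCycle a v <;> by_cases hbv : π.SameCycle b v <;>
      simp only [hg, hau, hbu, hav, hbv, if_true, if_false, reduceIte, reduceCtorEq,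
        Sum.inl.injEq] at hab ⊢ <;>
      first
        | exact hau.trans hbu.symm
        | exact hav.trans hbv.symm
        | exact absurd ((sameCycle_mul_swap_iff π u v b u hbu hbv).mp
            ((orbitRel_iff_sameCycle π' u b).mp (Quotient.exact hab)).symm) hbu
        | exact absurd ((sameCycle_mul_swap_iff π u v a u hau hav).mp
            ((orbitRel_iff_sameCycle π' a u).mp (Quotient.exact hab))) hau
        | exact (sameCycle_mul_swap_iff π u v a b hau hav).mp
            ((orbitRel_iff_sameCycle π' a b).mp (Quotient.exact hab))
  calc Nat.card (Quotient (MulAction.orbitRel (Subgroup.zpowers π) V))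
      ≤ Nat.card (Q' ⊕ Unit) := Nat.card_le_card_of_injective F hinj
    _ = Nat.card Q' + 1 := by rw [Nat.card_sum]; simp

end Aux

/-- The maximum number of cycles over all cycle covers of the destination graph
`D(g, ft)`, a cycle cover being encoded as a permutation `π` with
`g v = ft (π v)` for all `v`, whose cycles are the orbits of `π`. -/
noncomputable def maxCycles {V C : Type*} (g ft : V → C) : ℕ :=
  sSup {m : ℕ | ∃ π : Equiv.Perm V, (∀ v, g v = ft (π v)) ∧
    m = Nat.card (Quotient (MulAction.orbitRel (Subgroup.zpowers π) V))}

/-- For the potential `φ(g) = n - maxCycles(g, ft)` on the complete graph `K_n`,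
a single swap decreases the potential by at most one: `φ(f') ≥ φ(f) - 1`. -/
theorem potential_decreases_by_at_most_one {V : Type*} [Fintype V] [DecidableEq V] {C : Type*}
    (f f' ft : V → C) (u v : V) (huv : u ≠ v)
    (hex : ∃ π : Equiv.Perm V, ∀ w, f w = ft (π w))
    (hswap : f' = fun w => if w = u then f v else if w = v then f u else f w) :
    (Fintype.card V - maxCycles f ft) - 1 ≤ Fintype.card V - maxCycles f' ft := by
  classical
  suffices h : maxCycles f' ft ≤ maxCycles f ft + 1 by omega
  refine csSup_le' ?_
  rintro m ⟨π', hcov, rfl⟩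
  set σ := Equiv.swap u v with hσ
  have hcovf : ∀ w, f w = ft ((π' * σ) w) := by
    intro w
    have h0 : (π' * σ) w = π' (σ w) := rfl
    rw [h0, ← hcov (σ w), hswap]
    rcases eq_or_ne w u with rfl | hwu
    · simp [hσ, Equiv.swap_apply_left, huv.symm]
    · rcases eq_or_ne w v with rfl | hwv
      · simp [hσ, Equiv.swap_apply_right]
      · simp [hσ, Equiv.swap_apply_of_ne_of_ne hwu hwv, hwu, hwv]
  have hbdd : BddAbove {m : ℕ | ∃ π : Equiv.Perm V, (∀ v, f v = ft (π v)) ∧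
      m = Nat.card (Quotient (MulAction.orbitRel (Subgroup.zpowers π) V))} := by
    refine ⟨Fintype.card V, ?_⟩
    rintro m ⟨π, -, rfl⟩
    calc Nat.card (Quotient (MulAction.orbitRel (Subgroup.zpowers π) V))
        ≤ Nat.card V := Nat.card_le_card_of_surjective _ Quotient.exists_rep
      _ = Fintype.card V := Nat.card_eq_fintype_card
  have hmem : Nat.card (Quotient (MulAction.orbitRel (Subgroup.zpowers (π' * σ)) V)) ∈
      {m : ℕ | ∃ π : Equiv.Perm V, (∀ v, f v = ft (π v)) ∧
      m = Nat.card (Quotient (MulAction.orbitRel (Subgroup.zpowers π) V))} :=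
    ⟨π' * σ, hcovf, rfl⟩
  have h1 := le_csSup hbdd hmem
  have h2 := key_card_le π' u v
  exact h2.trans (Nat.add_le_add_right h1 1)
end

section
/- For the complete graph K_n with token-placements f_0 and f_t having the same color multiset, OPT(f_0, f_t) = n - m*, where m* is the maximum number of cycles over all vertex-disjoint cycle covers of the destination graph D(f_0, f_t). -/
open Equiv Equiv.Perm

namespace TokenSwapAux

variable {V : Type*} [Fintype V] [DecidableEq V]

/-- The same-cycle setoid of a permutation. -/
def scSetoid (π : Equiv.Perm V) : Setoid V :=
  ⟨π.SameCycle, ⟨Equiv.Perm.SameCycle.refl π, fun h => h.symm, fun h h' => h.trans h'⟩⟩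

/-- number of cycles of a permutation -/
noncomputable def nc (π : Equiv.Perm V) : ℕ := Nat.card (Quotient (scSetoid π))

lemma nc_eq_orbit (π : Equiv.Perm V) :
    Nat.card (Quotient (MulAction.orbitRel (Subgroup.zpowers π) V)) = nc π := by
  refine Nat.card_congr (Quotient.congrRight fun a b => ?_)
  rw [MulAction.orbitRel_apply, MulAction.mem_orbit_iff]
  constructor
  · rintro ⟨⟨g, hg⟩, h⟩
    obtain ⟨k, rfl⟩ := Subgroup.mem_zpowers_iff.mp hg
    exact (show π.SameCycle b a from ⟨k, h⟩).symm
  · rintro ⟨i, hi⟩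
    exact ⟨⟨π ^ (-i), Subgroup.mem_zpowers_iff.mpr ⟨-i, rfl⟩⟩, by
      show (π ^ (-i)) b = a
      rw [← hi]; simp⟩

lemma nc_le_card (π : Equiv.Perm V) : nc π ≤ Fintype.card V := by
  rw [← Nat.card_eq_fintype_card]
  exact Nat.card_le_card_of_surjective (Quotient.mk (scSetoid π))
    (fun q => Quotient.inductionOn q fun x => ⟨x, rfl⟩)

lemma nc_one : nc (1 : Equiv.Perm V) = Fintype.card V := by
  rw [← Nat.card_eq_fintype_card]
  refine Nat.card_congr (Equiv.ofBijective (Quotient.mk (scSetoid 1)) ⟨fun x y h => ?_,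
    fun q => Quotient.inductionOn q fun x => ⟨x, rfl⟩⟩).symm
  exact (Equiv.Perm.sameCycle_one.mp (Quotient.exact h))

lemma nc_inv (π : Equiv.Perm V) : nc π⁻¹ = nc π :=
  Nat.card_congr (Quotient.congrRight fun _ _ => Equiv.Perm.sameCycle_inv)

/-- key structural lemma: cycles of `swap a b * σ` refine the merge of cycles of `σ`
at `a` and `b`. -/
lemma sc_swap_mul {σ : Equiv.Perm V} {a b x y : V}
    (h : (Equiv.swap a b * σ).SameCycle x y) :
    σ.SameCycle x y ∨ (σ.SameCycle x a ∧ σ.SameCycle b y) ∨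
      (σ.SameCycle x b ∧ σ.SameCycle a y) := by
  obtain ⟨n, -, rfl⟩ := h.exists_pow_eq'
  clear h
  induction n with
  | zero =>
    simp only [pow_zero, Equiv.Perm.one_apply]
    exact Or.inl (Equiv.Perm.SameCycle.refl σ x)
  | succ n ih =>
    rw [pow_succ', Equiv.Perm.mul_apply]
    set z := ((Equiv.swap a b * σ) ^ n) x with hz
    have hzz : σ.SameCycle z (σ z) := ⟨1, by simp⟩
    rw [Equiv.Perm.mul_apply]
    rcases eq_or_ne (σ z) a with ha | ha
    · rw [ha, Equiv.swap_apply_left]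
      have hza : σ.SameCycle z a := ha ▸ hzz
      rcases ih with h1 | ⟨h1, h2⟩ | ⟨h1, h2⟩
      · exact Or.inr (Or.inl ⟨h1.trans hza, Equiv.Perm.SameCycle.refl _ _⟩)
      · exact Or.inl (h1.trans ((h2.trans hza).symm))
      · exact Or.inl h1
    rcases eq_or_ne (σ z) b with hb | hb
    · rw [hb, Equiv.swap_apply_right]
      have hzb : σ.SameCycle z b := hb ▸ hzz
      rcases ih with h1 | ⟨h1, h2⟩ | ⟨h1, h2⟩
      · exact Or.inr (Or.inr ⟨h1.trans hzb, Equiv.Perm.SameCycle.refl _ _⟩)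
      · exact Or.inl h1
      · exact Or.inl (h1.trans ((h2.trans hzb).symm))
    · rw [Equiv.swap_apply_of_ne_of_ne ha hb]
      rcases ih with h1 | ⟨h1, h2⟩ | ⟨h1, h2⟩
      · exact Or.inl (h1.trans hzz)
      · exact Or.inr (Or.inl ⟨h1, h2.trans hzz⟩)
      · exact Or.inr (Or.inr ⟨h1, h2.trans hzz⟩)

end TokenSwapAux
section B
open Equiv Equiv.Perm TokenSwapAux
variable {V : Type*} [Fintype V] [DecidableEq V]

set_option linter.unusedSectionVars false

lemma nc_le_swap_mul_add_one (σ : Equiv.Perm V) (a b : V) :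
    nc σ ≤ nc (Equiv.swap a b * σ) + 1 := by
  classical
  set σ' := Equiv.swap a b * σ with hσ'def
  have hσ : σ = Equiv.swap a b * σ' := by rw [hσ'def, swap_mul_self_mul]
  have fwd : ∀ {x y}, σ.SameCycle x y → σ'.SameCycle x y ∨
      (σ'.SameCycle x a ∧ σ'.SameCycle b y) ∨ (σ'.SameCycle x b ∧ σ'.SameCycle a y) := by
    intro x y h; rw [hσ] at h; exact sc_swap_mul h
  have bwd : ∀ {x y}, σ'.SameCycle x y → σ.SameCycle x y ∨
      (σ.SameCycle x a ∧ σ.SameCycle b y) ∨ (σ.SameCycle x b ∧ σ.SameCycle a y) := by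
    intro x y h; exact sc_swap_mul h
  have toCond : ∀ {x}, σ.SameCycle x a ∨ σ.SameCycle x b →
      σ'.SameCycle a x ∨ σ'.SameCycle b x := by
    rintro x (h | h)
    · rcases fwd h with h1 | ⟨h1, h2⟩ | ⟨h1, h2⟩
      exacts [Or.inl h1.symm, Or.inl h1.symm, Or.inr h1.symm]
    · rcases fwd h with h1 | ⟨h1, h2⟩ | ⟨h1, h2⟩
      exacts [Or.inr h1.symm, Or.inl h1.symm, Or.inr h1.symm]
  have fromCond : ∀ {x}, σ'.SameCycle a x ∨ σ'.SameCycle b x →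
      σ.SameCycle a x ∨ σ.SameCycle b x := by
    rintro x (h | h)
    · rcases bwd h with h1 | ⟨h1, h2⟩ | ⟨h1, h2⟩
      exacts [Or.inl h1, Or.inr h2, Or.inl h2]
    · rcases bwd h with h1 | ⟨h1, h2⟩ | ⟨h1, h2⟩
      exacts [Or.inr h1, Or.inr h2, Or.inl h2]
  set F : V → Quotient (scSetoid σ') ⊕ Unit := fun x =>
    if σ'.SameCycle a x ∨ σ'.SameCycle b x then
      (if σ.SameCycle a x then Sum.inl ⟦a⟧ else Sum.inr ()) else Sum.inl ⟦x⟧ with hF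
  have hwd : ∀ x y, σ.SameCycle x y → F x = F y := by
    intro x y hxy
    have hc2 : σ.SameCycle a x ↔ σ.SameCycle a y :=
      ⟨fun h => h.trans hxy, fun h => h.trans hxy.symm⟩
    have inner : (if σ.SameCycle a x then (Sum.inl (⟦a⟧ : Quotient (scSetoid σ')) : _ ⊕ Unit)
        else Sum.inr ()) = (if σ.SameCycle a y then Sum.inl ⟦a⟧ else Sum.inr ()) := by
      by_cases h2 : σ.SameCycle a x
      · rw [if_pos h2, if_pos (hc2.mp h2)]
      · rw [if_neg h2, if_neg (fun hh => h2 (hc2.mpr hh))]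
    rcases fwd hxy with h1 | ⟨h1, h2⟩ | ⟨h1, h2⟩
    · have hc : (σ'.SameCycle a x ∨ σ'.SameCycle b x) ↔ (σ'.SameCycle a y ∨ σ'.SameCycle b y) :=
        or_congr ⟨fun h => h.trans h1, fun h => h.trans h1.symm⟩
          ⟨fun h => h.trans h1, fun h => h.trans h1.symm⟩
      by_cases h : σ'.SameCycle a x ∨ σ'.SameCycle b x
      · rw [hF]; dsimp only; rw [if_pos h, if_pos (hc.mp h)]; exact inner
      · rw [hF]; dsimp only; rw [if_neg h, if_neg (fun hh => h (hc.mpr hh))]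
        exact congrArg Sum.inl (Quotient.sound h1)
    · rw [hF]; dsimp only
      rw [if_pos (Or.inl h1.symm), if_pos (Or.inr h2)]; exact inner
    · rw [hF]; dsimp only
      rw [if_pos (Or.inr h1.symm), if_pos (Or.inl h2)]; exact inner
  have hinj : ∀ x y, F x = F y → σ.SameCycle x y := by
    intro x y h
    by_cases hx : σ'.SameCycle a x ∨ σ'.SameCycle b x <;>
      by_cases hy : σ'.SameCycle a y ∨ σ'.SameCycle b y
    · rw [hF] at h; dsimp only at h; rw [if_pos hx, if_pos hy] at h
      by_cases hax : σ.SameCycle a x <;> by_cases hay : σ.SameCycle a y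
      · exact hax.symm.trans hay
      · rw [if_pos hax, if_neg hay] at h; exact absurd h (by simp)
      · rw [if_neg hax, if_pos hay] at h; exact absurd h (by simp)
      · have hbx : σ.SameCycle b x := (fromCond hx).resolve_left hax
        have hby : σ.SameCycle b y := (fromCond hy).resolve_left hay
        exact hbx.symm.trans hby
    · rw [hF] at h; dsimp only at h; rw [if_pos hx, if_neg hy] at h
      by_cases hax : σ.SameCycle a x
      · rw [if_pos hax] at h
        exact absurd (Or.inl (Quotient.exact (Sum.inl.inj h))) hy
      · rw [if_neg hax] at h; exact absurd h (by simp)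
    · rw [hF] at h; dsimp only at h; rw [if_neg hx, if_pos hy] at h
      by_cases hay : σ.SameCycle a y
      · rw [if_pos hay] at h
        exact absurd (Or.inl (Quotient.exact (Sum.inl.inj h)).symm) hx
      · rw [if_neg hay] at h; exact absurd h (by simp)
    · rw [hF] at h; dsimp only at h; rw [if_neg hx, if_neg hy] at h
      have hxy : σ'.SameCycle x y := Quotient.exact (Sum.inl.inj h)
      rcases bwd hxy with h1 | ⟨h1, h2⟩ | ⟨h1, h2⟩
      · exact h1
      · exact absurd (toCond (Or.inl h1)) hx
      · exact absurd (toCond (Or.inr h1)) hx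
  have hlift : Function.Injective (Quotient.lift F hwd :
      Quotient (scSetoid σ) → Quotient (scSetoid σ') ⊕ Unit) := by
    intro q1 q2
    induction q1 using Quotient.inductionOn with | _ x =>
    induction q2 using Quotient.inductionOn with | _ y =>
    exact fun h => Quotient.sound (hinj x y h)
  have hcard := Nat.card_le_card_of_injective (Quotient.lift F hwd) hlift
  have h3 : Nat.card Unit = 1 := Nat.card_unique
  rw [Nat.card_sum, h3] at hcard
  exact hcard

lemma nc_add_one_le_swap_mul {σ : Equiv.Perm V} {a : V} (ha : σ a ≠ a) :
    nc σ + 1 ≤ nc (Equiv.swap a (σ a) * σ) := by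
  classical
  set σ' := Equiv.swap a (σ a) * σ with hσ'def
  have hsca : σ.SameCycle a (σ a) := ⟨1, rfl⟩
  have hsub : ∀ {x y}, σ'.SameCycle x y → σ.SameCycle x y := by
    intro x y h
    rcases sc_swap_mul h with h1 | ⟨h1, h2⟩ | ⟨h1, h2⟩
    · exact h1
    · exact h1.trans (hsca.trans h2)
    · exact h1.trans (hsca.symm.trans h2)
  set q : Quotient (scSetoid σ') → Quotient (scSetoid σ) :=
    Quotient.lift (fun x => (⟦x⟧ : Quotient (scSetoid σ)))
      (fun x y h => Quotient.sound (hsub h)) with hq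
  have hsurj : Function.Surjective q := by
    intro c; induction c using Quotient.inductionOn with | _ x => exact ⟨⟦x⟧, rfl⟩
  have hninj : ¬ Function.Injective q := by
    intro hinj
    have h1 : q ⟦a⟧ = q ⟦σ a⟧ := Quotient.sound hsca
    have h2 := Quotient.exact (hinj h1)
    obtain ⟨i, hi⟩ := h2
    have hfix : σ' a = a := by
      rw [hσ'def]; simp [Equiv.Perm.mul_apply, Equiv.swap_apply_right]
    rw [Equiv.Perm.zpow_apply_eq_self_of_apply_eq_self hfix i] at hi
    exact ha hi.symm
  haveI : Fintype (Quotient (scSetoid σ')) := Fintype.ofFinite _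
  haveI : Fintype (Quotient (scSetoid σ)) := Fintype.ofFinite _
  have hlt := Fintype.card_lt_of_surjective_not_injective q hsurj hninj
  have e1 : nc σ = Fintype.card (Quotient (scSetoid σ)) := Nat.card_eq_fintype_card
  have e2 : nc σ' = Fintype.card (Quotient (scSetoid σ')) := Nat.card_eq_fintype_card
  omega

end B

section D
open Equiv Equiv.Perm TokenSwapAux
variable {V : Type*} [Fintype V] [DecidableEq V] {C : Type*}

set_option linter.unusedSectionVars false

lemma exists_swap_list (σ : Equiv.Perm V) :
    ∃ l : List (Equiv.Perm V), (∀ τ ∈ l, τ.IsSwap) ∧ l.prod = σ ∧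
      l.length + nc σ ≤ Fintype.card V := by
  suffices H : ∀ n (σ : Equiv.Perm V), σ.support.card = n →
      ∃ l : List (Equiv.Perm V), (∀ τ ∈ l, τ.IsSwap) ∧ l.prod = σ ∧
        l.length + nc σ ≤ Fintype.card V from H _ σ rfl
  intro n
  induction n using Nat.strong_induction_on with
  | _ n ih =>
    intro σ hn
    rcases eq_or_ne σ 1 with rfl | hσ1
    · exact ⟨[], by simp, by simp, by simp [nc_one]⟩
    · obtain ⟨a, ha⟩ : ∃ a, σ a ≠ a := by
        by_contra h; push_neg at h; exact hσ1 (Equiv.ext h)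
      obtain ⟨l, hl1, hl2, hl3⟩ :=
        ih _ (hn ▸ Equiv.Perm.card_support_swap_mul ha) (Equiv.swap a (σ a) * σ) rfl
      refine ⟨Equiv.swap a (σ a) :: l, ?_, ?_, ?_⟩
      · intro τ hτ
        rcases List.mem_cons.mp hτ with rfl | hτ
        · exact ⟨a, σ a, fun h => ha h.symm, rfl⟩
        · exact hl1 τ hτ
      · rw [List.prod_cons, hl2, swap_mul_self_mul]
      · have h1 := nc_add_one_le_swap_mul ha
        simp only [List.length_cons]
        omega

lemma reach_list (f : V → C) (l : List (Equiv.Perm V)) (hl : ∀ τ ∈ l, τ.IsSwap) :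
    Reach (⊤ : SimpleGraph V) f (fun v => f (l.prod v)) l.length := by
  refine ⟨fun i => fun v => f ((l.take i).prod v), by simp, by simp, ?_⟩
  intro i hi
  obtain ⟨u, v, huv, hτ⟩ := hl (l[i]'hi) (List.getElem_mem hi)
  refine ⟨u, v, (SimpleGraph.top_adj u v).mpr huv, ?_, ?_, ?_⟩
  · show f ((l.take (i + 1)).prod u) = f ((l.take i).prod v)
    rw [List.prod_take_succ l i hi, hτ, Equiv.Perm.mul_apply, Equiv.swap_apply_left]
  · show f ((l.take (i + 1)).prod v) = f ((l.take i).prod u)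
    rw [List.prod_take_succ l i hi, hτ, Equiv.Perm.mul_apply, Equiv.swap_apply_right]
  · intro w hwu hwv
    show f ((l.take (i + 1)).prod w) = f ((l.take i).prod w)
    rw [List.prod_take_succ l i hi, hτ, Equiv.Perm.mul_apply,
      Equiv.swap_apply_of_ne_of_ne hwu hwv]

lemma reach_bound {f0 ft : V → C} {k : ℕ} (h : Reach (⊤ : SimpleGraph V) f0 ft k) :
    ∃ π : Equiv.Perm V, (∀ v, f0 v = ft (π v)) ∧ Fintype.card V ≤ nc π + k := by
  obtain ⟨g, h0, hk, hstep⟩ := h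
  have main : ∀ i, i ≤ k →
      ∃ ρ : Equiv.Perm V, g i = (fun v => f0 (ρ v)) ∧ Fintype.card V ≤ nc ρ + i := by
    intro i
    induction i with
    | zero => exact fun _ => ⟨1, by simpa using h0, by simp [nc_one]⟩
    | succ i ih =>
      intro hik
      obtain ⟨ρ, hρ, hcard⟩ := ih (le_of_lt (Nat.lt_of_succ_le hik))
      obtain ⟨u, v, huv, e1, e2, e3⟩ := hstep i (Nat.lt_of_succ_le hik)
      have hne : u ≠ v := huv.ne
      refine ⟨ρ * Equiv.swap u v, ?_, ?_⟩
      · funext w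
        by_cases hw : w = u
        · subst hw; rw [e1, hρ]
          simp [Equiv.Perm.mul_apply, Equiv.swap_apply_left]
        by_cases hw2 : w = v
        · subst hw2; rw [e2, hρ]
          simp [Equiv.Perm.mul_apply, Equiv.swap_apply_right]
        · rw [e3 w hw hw2, hρ]
          simp [Equiv.Perm.mul_apply, Equiv.swap_apply_of_ne_of_ne hw hw2]
      · have heq : ρ * Equiv.swap u v = Equiv.swap (ρ u) (ρ v) * ρ :=
          Equiv.mul_swap_eq_swap_mul ρ u v
        have h1 : nc ρ ≤ nc (Equiv.swap (ρ u) (ρ v) * ρ) + 1 := nc_le_swap_mul_add_one ρ _ _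
        rw [← heq] at h1
        omega
  obtain ⟨ρ, hρ, hcard⟩ := main k le_rfl
  refine ⟨ρ⁻¹, ?_, by rw [nc_inv]; exact hcard⟩
  intro v
  rw [hk] at hρ
  rw [hρ]
  simp

end D

theorem opt_eq_card_sub_max_cycles' {V : Type*} [Fintype V] {C : Type*}
    (f0 ft : V → C) (hex : ∃ π : Equiv.Perm V, ∀ v, f0 v = ft (π v)) :
    IsLeast {k : ℕ | Reach (⊤ : SimpleGraph V) f0 ft k}
      (Fintype.card V - sSup {m : ℕ | ∃ π : Equiv.Perm V, (∀ v, f0 v = ft (π v)) ∧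
    m = Nat.card (Quotient (MulAction.orbitRel (Subgroup.zpowers π) V))}) := by
  classical
  open TokenSwapAux in
  set n := Fintype.card V with hn
  set S := {m : ℕ | ∃ π : Equiv.Perm V, (∀ v, f0 v = ft (π v)) ∧
    m = Nat.card (Quotient (MulAction.orbitRel (Subgroup.zpowers π) V))} with hS
  have hbdd : ∀ m ∈ S, m ≤ n := by
    rintro m ⟨π, -, rfl⟩
    rw [TokenSwapAux.nc_eq_orbit]
    exact TokenSwapAux.nc_le_card π
  obtain ⟨π0, hπ0⟩ := hex
  have hne : S.Nonempty := ⟨_, π0, hπ0, rfl⟩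
  have hmem : sSup S ∈ S := Nat.sSup_mem hne ⟨n, fun m hm => hbdd m hm⟩
  have hlb : ∀ k, Reach (⊤ : SimpleGraph V) f0 ft k → n - sSup S ≤ k := by
    intro k hk
    obtain ⟨π, hπ, hcard⟩ := reach_bound hk
    have hmemπ : TokenSwapAux.nc π ∈ S := ⟨π, hπ, (TokenSwapAux.nc_eq_orbit π).symm⟩
    have hle : TokenSwapAux.nc π ≤ sSup S := le_csSup ⟨n, fun m hm => hbdd m hm⟩ hmemπ
    omega
  constructor
  · obtain ⟨π, hπ, hncπ⟩ := hmem
    rw [TokenSwapAux.nc_eq_orbit] at hncπ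
    obtain ⟨l, hl1, hl2, hl3⟩ := exists_swap_list π⁻¹
    have hreach : Reach (⊤ : SimpleGraph V) f0 (fun v => f0 (l.prod v)) l.length :=
      reach_list f0 l hl1
    have hft : (fun v => f0 (l.prod v)) = ft := by
      funext v
      rw [hl2]
      rw [hπ (π⁻¹ v)]
      simp
    rw [hft] at hreach
    have h1 := hlb _ hreach
    rw [TokenSwapAux.nc_inv] at hl3
    have hfin : l.length = n - sSup S := by omega
    show Reach (⊤ : SimpleGraph V) f0 ft (n - sSup S)
    rwa [← hfin]
  · intro k hk
    exact hlb k hk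

/-- On the complete graph `K_n`, with `f0` and `ft` having the same color
multiset, `OPT(f0, ft) = n - m*`, where `m*` is the maximum number of cycles
over all cycle covers of the destination graph `D(f0, ft)`. -/
theorem opt_eq_card_sub_max_cycles {V : Type*} [Fintype V] {C : Type*}
    (f0 ft : V → C) (hex : ∃ π : Equiv.Perm V, ∀ v, f0 v = ft (π v)) :
    IsLeast {k : ℕ | Reach (⊤ : SimpleGraph V) f0 ft k}
      (Fintype.card V - maxCycles f0 ft) := by
  classical
  exact opt_eq_card_sub_max_cycles' f0 ft hex
end

section
/- In the 3-Dimensional Matching reduction graph, if T' ⊆ T is a perfect 3-dimensional matching (|T'| = m covering all of X ∪ Y ∪ Z), then the token-placement f_0 (with f_0 = 2 on X, 3 on Y, 1 on Z, 1 on T) can be transformed into f_t (with f_t = 1 on X, 2 on Y, 3 on Z, 1 on T) using exactly 3m swaps. -/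
/-- The base adjacency relation of the 3DM reduction graph: a triple `t ∈ T` is
adjacent to an element `w ∈ X ⊕ Y ⊕ Z` iff `w` is a coordinate of `t`. -/
def tdmRel {X Y Z : Type*} (T : Finset (X × Y × Z)) :
    ({t // t ∈ T} ⊕ (X ⊕ Y ⊕ Z)) → ({t // t ∈ T} ⊕ (X ⊕ Y ⊕ Z)) → Prop
  | Sum.inl t, Sum.inr (Sum.inl x) => t.1.1 = x
  | Sum.inl t, Sum.inr (Sum.inr (Sum.inl y)) => t.1.2.1 = y
  | Sum.inl t, Sum.inr (Sum.inr (Sum.inr z)) => t.1.2.2 = z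
  | _, _ => False

/-- The initial token-placement of the reduction: `2` on `X`, `3` on `Y`,
`1` on `Z` and `1` on `T`. -/
def tdmF0 {X Y Z : Type*} (T : Finset (X × Y × Z)) :
    ({t // t ∈ T} ⊕ (X ⊕ Y ⊕ Z)) → ℕ :=
  Sum.elim (fun _ => 1) (Sum.elim (fun _ => 2) (Sum.elim (fun _ => 3) fun _ => 1))

/-- The target token-placement of the reduction: `1` on `X`, `2` on `Y`,
`3` on `Z` and `1` on `T`. -/
def tdmFt {X Y Z : Type*} (T : Finset (X × Y × Z)) :
    ({t // t ∈ T} ⊕ (X ⊕ Y ⊕ Z)) → ℕ :=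
  Sum.elim (fun _ => 1) (Sum.elim (fun _ => 1) (Sum.elim (fun _ => 2) fun _ => 3))

open Classical in
/-- Intermediate placement once the triples in `S` have been resolved. -/
noncomputable def tdmMid {X Y Z : Type*} (T S : Finset (X × Y × Z)) :
    ({t // t ∈ T} ⊕ (X ⊕ Y ⊕ Z)) → ℕ :=
  Sum.elim (fun _ => 1)
    (Sum.elim (fun x => if ∃ t ∈ S, t.1 = x then 1 else 2)
      (Sum.elim (fun y => if ∃ t ∈ S, t.2.1 = y then 2 else 3)
        (fun z => if ∃ t ∈ S, t.2.2 = z then 3 else 1)))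

lemma reach_zero {V C : Type*} (G : SimpleGraph V) (f : V → C) : Reach G f f 0 :=
  ⟨fun _ => f, rfl, rfl, fun i hi => absurd hi (Nat.not_lt_zero i)⟩

lemma reach_snoc {V C : Type*} {G : SimpleGraph V} {f f' f'' : V → C} {k : ℕ}
    (h : Reach G f f' k) (h2 : SwapStep G f' f'') : Reach G f f'' (k + 1) := by
  obtain ⟨g, h0, hk, hs⟩ := h
  refine ⟨fun i => if i ≤ k then g i else f'', by simp [h0], by simp, ?_⟩
  intro i hi
  rcases lt_or_eq_of_le (Nat.lt_succ_iff.mp hi) with hlt | heq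
  · have h1 : i ≤ k := Nat.le_of_lt hlt
    have h2' : i + 1 ≤ k := Nat.succ_le_of_lt hlt
    simpa [h1, h2'] using hs i hlt
  · subst heq
    simpa [hk] using h2

lemma swapStep_update {V C : Type*} [DecidableEq V] {G : SimpleGraph V} (f : V → C)
    {u v : V} (h : G.Adj u v) :
    SwapStep G f (Function.update (Function.update f u (f v)) v (f u)) := by
  refine ⟨u, v, h, ?_, ?_, ?_⟩
  · rw [Function.update_of_ne h.ne, Function.update_self]
  · rw [Function.update_self]
  · intro w hwu hwv
    rw [Function.update_of_ne hwv, Function.update_of_ne hwu]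

open Classical in
lemma tdmMid_inl {X Y Z : Type*} (T S : Finset (X × Y × Z)) (t : {t // t ∈ T}) :
    tdmMid T S (Sum.inl t) = 1 := rfl

open Classical in
lemma tdmMid_x {X Y Z : Type*} (T S : Finset (X × Y × Z)) (x : X) :
    tdmMid T S (Sum.inr (Sum.inl x)) = if ∃ t ∈ S, t.1 = x then 1 else 2 := rfl

open Classical in
lemma tdmMid_y {X Y Z : Type*} (T S : Finset (X × Y × Z)) (y : Y) :
    tdmMid T S (Sum.inr (Sum.inr (Sum.inl y))) = if ∃ t ∈ S, t.2.1 = y then 2 else 3 := rfl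

open Classical in
lemma tdmMid_z {X Y Z : Type*} (T S : Finset (X × Y × Z)) (z : Z) :
    tdmMid T S (Sum.inr (Sum.inr (Sum.inr z))) = if ∃ t ∈ S, t.2.2 = z then 3 else 1 := rfl

lemma tdm_key {X Y Z : Type*} (T : Finset (X × Y × Z)) (S : Finset (X × Y × Z)) :
    S ⊆ T →
    (∀ a ∈ S, ∀ b ∈ S, a.1 = b.1 → a = b) →
    (∀ a ∈ S, ∀ b ∈ S, a.2.1 = b.2.1 → a = b) →
    (∀ a ∈ S, ∀ b ∈ S, a.2.2 = b.2.2 → a = b) →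
    Reach (SimpleGraph.fromRel (tdmRel T)) (tdmF0 T) (tdmMid T S) (3 * S.card) := by
  classical
  induction S using Finset.induction_on with
  | empty =>
    intro _ _ _ _
    have : tdmMid T (∅ : Finset (X × Y × Z)) = tdmF0 T := by
      funext w
      rcases w with t | x | y | z
      · rfl
      · rw [tdmMid_x, if_neg (by simp)]; rfl
      · rw [tdmMid_y, if_neg (by simp)]; rfl
      · rw [tdmMid_z, if_neg (by simp)]; rfl
    rw [this]
    simpa using reach_zero _ _
  | @insert a S ha ih =>
    intro hS h1 h2 h3
    have hST : S ⊆ T := fun b hb => hS (Finset.mem_insert_of_mem hb)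
    have haT : a ∈ T := hS (Finset.mem_insert_self a S)
    have prev := ih hST
      (fun b hb c hc => h1 b (Finset.mem_insert_of_mem hb) c (Finset.mem_insert_of_mem hc))
      (fun b hb c hc => h2 b (Finset.mem_insert_of_mem hb) c (Finset.mem_insert_of_mem hc))
      (fun b hb c hc => h3 b (Finset.mem_insert_of_mem hb) c (Finset.mem_insert_of_mem hc))
    -- the coordinates of `a` are not yet covered by `S`
    have hux : ¬ ∃ t ∈ S, t.1 = a.1 := by
      rintro ⟨t, ht, hteq⟩
      exact ha (h1 t (Finset.mem_insert_of_mem ht) a (Finset.mem_insert_self a S) hteq ▸ ht)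
    have huy : ¬ ∃ t ∈ S, t.2.1 = a.2.1 := by
      rintro ⟨t, ht, hteq⟩
      exact ha (h2 t (Finset.mem_insert_of_mem ht) a (Finset.mem_insert_self a S) hteq ▸ ht)
    have huz : ¬ ∃ t ∈ S, t.2.2 = a.2.2 := by
      rintro ⟨t, ht, hteq⟩
      exact ha (h3 t (Finset.mem_insert_of_mem ht) a (Finset.mem_insert_self a S) hteq ▸ ht)
    set G := SimpleGraph.fromRel (tdmRel T) with hG
    set c : ({t // t ∈ T} ⊕ (X ⊕ Y ⊕ Z)) := Sum.inl ⟨a, haT⟩ with hc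
    set vx : ({t // t ∈ T} ⊕ (X ⊕ Y ⊕ Z)) := Sum.inr (Sum.inl a.1) with hvx
    set vy : ({t // t ∈ T} ⊕ (X ⊕ Y ⊕ Z)) := Sum.inr (Sum.inr (Sum.inl a.2.1)) with hvy
    set vz : ({t // t ∈ T} ⊕ (X ⊕ Y ⊕ Z)) := Sum.inr (Sum.inr (Sum.inr a.2.2)) with hvz
    have adjx : G.Adj c vx := by
      rw [hG, hc, hvx]
      exact (SimpleGraph.fromRel_adj _ _ _).mpr ⟨by simp, Or.inl rfl⟩
    have adjy : G.Adj c vy := by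
      rw [hG, hc, hvy]
      exact (SimpleGraph.fromRel_adj _ _ _).mpr ⟨by simp, Or.inl rfl⟩
    have adjz : G.Adj c vz := by
      rw [hG, hc, hvz]
      exact (SimpleGraph.fromRel_adj _ _ _).mpr ⟨by simp, Or.inl rfl⟩
    set M := tdmMid T S with hM
    set f1 := Function.update (Function.update M c (M vx)) vx (M c) with hf1
    set f2 := Function.update (Function.update f1 c (f1 vy)) vy (f1 c) with hf2
    set f3 := Function.update (Function.update f2 c (f2 vz)) vz (f2 c) with hf3
    have step1 : SwapStep G M f1 := swapStep_update M adjx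
    have step2 : SwapStep G f1 f2 := swapStep_update f1 adjy
    have step3 : SwapStep G f2 f3 := swapStep_update f2 adjz
    have hcx : c ≠ vx := by rw [hc, hvx]; simp
    have hcy : c ≠ vy := by rw [hc, hvy]; simp
    have hcz : c ≠ vz := by rw [hc, hvz]; simp
    have hxy : vx ≠ vy := by rw [hvx, hvy]; simp
    have hxz : vx ≠ vz := by rw [hvx, hvz]; simp
    have hyz : vy ≠ vz := by rw [hvy, hvz]; simp
    have hfinal : f3 = tdmMid T (insert a S) := by
      funext w
      rcases w with t | x | y | z
      · -- T-side vertices: always 1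
        by_cases hta : (Sum.inl t : ({t // t ∈ T} ⊕ (X ⊕ Y ⊕ Z))) = c
        · rw [hta]
          have e1 : f3 c = f2 vz := by
            rw [hf3, Function.update_of_ne hcz, Function.update_self]
          have e2 : f2 vz = f1 vz := by
            rw [hf2, Function.update_of_ne (Ne.symm hyz), Function.update_of_ne (Ne.symm hcz)]
          have e3 : f1 vz = M vz := by
            rw [hf1, Function.update_of_ne (Ne.symm hxz), Function.update_of_ne (Ne.symm hcz)]
          rw [e1, e2, e3, hM, hvz, hc, tdmMid_z, tdmMid_inl, if_neg huz]
        · have n1 : (Sum.inl t : ({t // t ∈ T} ⊕ (X ⊕ Y ⊕ Z))) ≠ vx := by rw [hvx]; simp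
          have n2 : (Sum.inl t : ({t // t ∈ T} ⊕ (X ⊕ Y ⊕ Z))) ≠ vy := by rw [hvy]; simp
          have n3 : (Sum.inl t : ({t // t ∈ T} ⊕ (X ⊕ Y ⊕ Z))) ≠ vz := by rw [hvz]; simp
          have h3' : f3 (Sum.inl t) = M (Sum.inl t) := by
            rw [hf3, Function.update_of_ne n3, Function.update_of_ne hta,
              hf2, Function.update_of_ne n2, Function.update_of_ne hta,
              hf1, Function.update_of_ne n1, Function.update_of_ne hta]
          rw [h3', hM, tdmMid_inl, tdmMid_inl]
      · -- X-side
        by_cases hxa : x = a.1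
        · have hveq : (Sum.inr (Sum.inl x) : ({t // t ∈ T} ⊕ (X ⊕ Y ⊕ Z))) = vx := by
            rw [hvx, hxa]
          rw [hveq]
          have e1 : f3 vx = f1 vx := by
            rw [hf3, Function.update_of_ne hxz, Function.update_of_ne (Ne.symm hcx),
              hf2, Function.update_of_ne hxy, Function.update_of_ne (Ne.symm hcx)]
          have e2 : f1 vx = M c := by rw [hf1, Function.update_self]
          rw [e1, e2, hM, hc, hvx, tdmMid_inl, tdmMid_x,
            if_pos ⟨a, Finset.mem_insert_self a S, rfl⟩]
        · have n0 : (Sum.inr (Sum.inl x) : ({t // t ∈ T} ⊕ (X ⊕ Y ⊕ Z))) ≠ vx := by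
            rw [hvx]; simp [hxa]
          have n1 : (Sum.inr (Sum.inl x) : ({t // t ∈ T} ⊕ (X ⊕ Y ⊕ Z))) ≠ vy := by
            rw [hvy]; simp
          have n2 : (Sum.inr (Sum.inl x) : ({t // t ∈ T} ⊕ (X ⊕ Y ⊕ Z))) ≠ vz := by
            rw [hvz]; simp
          have n3 : (Sum.inr (Sum.inl x) : ({t // t ∈ T} ⊕ (X ⊕ Y ⊕ Z))) ≠ c := by
            rw [hc]; simp
          have h3' : f3 (Sum.inr (Sum.inl x)) = M (Sum.inr (Sum.inl x)) := by
            rw [hf3, Function.update_of_ne n2, Function.update_of_ne n3,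
              hf2, Function.update_of_ne n1, Function.update_of_ne n3,
              hf1, Function.update_of_ne n0, Function.update_of_ne n3]
          rw [h3', hM, tdmMid_x, tdmMid_x]
          have hiff : (∃ t ∈ insert a S, t.1 = x) ↔ (∃ t ∈ S, t.1 = x) := by
            constructor
            · rintro ⟨t, ht, hteq⟩
              rcases Finset.mem_insert.mp ht with rfl | ht'
              · exact absurd hteq.symm hxa
              · exact ⟨t, ht', hteq⟩
            · rintro ⟨t, ht, hteq⟩; exact ⟨t, Finset.mem_insert_of_mem ht, hteq⟩
          exact if_congr hiff.symm rfl rfl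
      · -- Y-side
        by_cases hya : y = a.2.1
        · have hveq : (Sum.inr (Sum.inr (Sum.inl y)) : ({t // t ∈ T} ⊕ (X ⊕ Y ⊕ Z))) = vy := by
            rw [hvy, hya]
          rw [hveq]
          have e1 : f3 vy = f2 vy := by
            rw [hf3, Function.update_of_ne hyz, Function.update_of_ne (Ne.symm hcy)]
          have e2 : f2 vy = f1 c := by rw [hf2, Function.update_self]
          have e3 : f1 c = M vx := by
            rw [hf1, Function.update_of_ne hcx, Function.update_self]
          rw [e1, e2, e3, hM, hvx, hvy, tdmMid_x, tdmMid_y, if_neg hux,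
            if_pos ⟨a, Finset.mem_insert_self a S, rfl⟩]
        · have n0 : (Sum.inr (Sum.inr (Sum.inl y)) : ({t // t ∈ T} ⊕ (X ⊕ Y ⊕ Z))) ≠ vy := by
            rw [hvy]; simp [hya]
          have n1 : (Sum.inr (Sum.inr (Sum.inl y)) : ({t // t ∈ T} ⊕ (X ⊕ Y ⊕ Z))) ≠ vx := by
            rw [hvx]; simp
          have n2 : (Sum.inr (Sum.inr (Sum.inl y)) : ({t // t ∈ T} ⊕ (X ⊕ Y ⊕ Z))) ≠ vz := by
            rw [hvz]; simp
          have n3 : (Sum.inr (Sum.inr (Sum.inl y)) : ({t // t ∈ T} ⊕ (X ⊕ Y ⊕ Z))) ≠ c := by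
            rw [hc]; simp
          have h3' : f3 (Sum.inr (Sum.inr (Sum.inl y))) = M (Sum.inr (Sum.inr (Sum.inl y))) := by
            rw [hf3, Function.update_of_ne n2, Function.update_of_ne n3,
              hf2, Function.update_of_ne n0, Function.update_of_ne n3,
              hf1, Function.update_of_ne n1, Function.update_of_ne n3]
          rw [h3', hM, tdmMid_y, tdmMid_y]
          have hiff : (∃ t ∈ insert a S, t.2.1 = y) ↔ (∃ t ∈ S, t.2.1 = y) := by
            constructor
            · rintro ⟨t, ht, hteq⟩
              rcases Finset.mem_insert.mp ht with rfl | ht'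
              · exact absurd hteq.symm hya
              · exact ⟨t, ht', hteq⟩
            · rintro ⟨t, ht, hteq⟩; exact ⟨t, Finset.mem_insert_of_mem ht, hteq⟩
          exact if_congr hiff.symm rfl rfl
      · -- Z-side
        by_cases hza : z = a.2.2
        · have hveq : (Sum.inr (Sum.inr (Sum.inr z)) : ({t // t ∈ T} ⊕ (X ⊕ Y ⊕ Z))) = vz := by
            rw [hvz, hza]
          rw [hveq]
          have e1 : f3 vz = f2 c := by rw [hf3, Function.update_self]
          have e2 : f2 c = f1 vy := by
            rw [hf2, Function.update_of_ne hcy, Function.update_self]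
          have e3 : f1 vy = M vy := by
            rw [hf1, Function.update_of_ne (Ne.symm hxy), Function.update_of_ne (Ne.symm hcy)]
          rw [e1, e2, e3, hM, hvy, hvz, tdmMid_y, tdmMid_z, if_neg huy,
            if_pos ⟨a, Finset.mem_insert_self a S, rfl⟩]
        · have n0 : (Sum.inr (Sum.inr (Sum.inr z)) : ({t // t ∈ T} ⊕ (X ⊕ Y ⊕ Z))) ≠ vz := by
            rw [hvz]; simp [hza]
          have n1 : (Sum.inr (Sum.inr (Sum.inr z)) : ({t // t ∈ T} ⊕ (X ⊕ Y ⊕ Z))) ≠ vx := by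
            rw [hvx]; simp
          have n2 : (Sum.inr (Sum.inr (Sum.inr z)) : ({t // t ∈ T} ⊕ (X ⊕ Y ⊕ Z))) ≠ vy := by
            rw [hvy]; simp
          have n3 : (Sum.inr (Sum.inr (Sum.inr z)) : ({t // t ∈ T} ⊕ (X ⊕ Y ⊕ Z))) ≠ c := by
            rw [hc]; simp
          have h3' : f3 (Sum.inr (Sum.inr (Sum.inr z))) = M (Sum.inr (Sum.inr (Sum.inr z))) := by
            rw [hf3, Function.update_of_ne n0, Function.update_of_ne n3,
              hf2, Function.update_of_ne n2, Function.update_of_ne n3,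
              hf1, Function.update_of_ne n1, Function.update_of_ne n3]
          rw [h3', hM, tdmMid_z, tdmMid_z]
          have hiff : (∃ t ∈ insert a S, t.2.2 = z) ↔ (∃ t ∈ S, t.2.2 = z) := by
            constructor
            · rintro ⟨t, ht, hteq⟩
              rcases Finset.mem_insert.mp ht with rfl | ht'
              · exact absurd hteq.symm hza
              · exact ⟨t, ht', hteq⟩
            · rintro ⟨t, ht, hteq⟩; exact ⟨t, Finset.mem_insert_of_mem ht, hteq⟩
          exact if_congr hiff.symm rfl rfl
    have hcard' : 3 * (insert a S).card = 3 * S.card + 1 + 1 + 1 := by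
      rw [Finset.card_insert_of_notMem ha]; ring
    rw [hcard', ← hfinal]
    exact reach_snoc (reach_snoc (reach_snoc prev step1) step2) step3

lemma tdm_inj_aux {A : Type*} {W : Type*} [Fintype W] (m : ℕ) (T' : Finset A)
    (hcard : T'.card = m) (p : A → W) (hW : Fintype.card W = m)
    (hsurj : ∀ w : W, ∃ t ∈ T', p t = w) :
    ∀ a ∈ T', ∀ b ∈ T', p a = p b → a = b := by
  classical
  have himg : T'.image p = Finset.univ := by
    apply Finset.eq_univ_iff_forall.mpr
    intro w
    obtain ⟨t, ht, hpt⟩ := hsurj w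
    exact Finset.mem_image.mpr ⟨t, ht, hpt⟩
  have hcardimg : (T'.image p).card = T'.card := by
    rw [himg, Finset.card_univ, hW, hcard]
  have := Finset.card_image_iff.mp hcardimg
  intro a ha b hb hab
  exact this (Finset.mem_coe.mpr ha) (Finset.mem_coe.mpr hb) hab

/-- If `T' ⊆ T` is a perfect 3-dimensional matching, then in the reduction graph
the initial placement can be transformed into the target one by exactly `3m`
swaps. -/
theorem tdm_matching_gives_3m_swaps {X Y Z : Type*}
    [Fintype X] [Fintype Y] [Fintype Z] (m : ℕ)
    (hX : Fintype.card X = m) (hY : Fintype.card Y = m) (hZ : Fintype.card Z = m)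
    (T T' : Finset (X × Y × Z)) (hsub : T' ⊆ T) (hcard : T'.card = m)
    (hx : ∀ x : X, ∃ t ∈ T', t.1 = x)
    (hy : ∀ y : Y, ∃ t ∈ T', t.2.1 = y)
    (hz : ∀ z : Z, ∃ t ∈ T', t.2.2 = z) :
    Reach (SimpleGraph.fromRel (tdmRel T)) (tdmF0 T) (tdmFt T) (3 * m) := by
  classical
  have h1 := tdm_inj_aux m T' hcard (fun t => t.1) hX hx
  have h2 := tdm_inj_aux m T' hcard (fun t => t.2.1) hY hy
  have h3 := tdm_inj_aux m T' hcard (fun t => t.2.2) hZ hz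
  have key := tdm_key T T' hsub h1 h2 h3
  have hmid : tdmMid T T' = tdmFt T := by
    funext w
    rcases w with t | x | y | z
    · rfl
    · rw [tdmMid_x, if_pos (hx x)]; rfl
    · rw [tdmMid_y, if_pos (hy y)]; rfl
    · rw [tdmMid_z, if_pos (hz z)]; rfl
  rw [← hcard, ← hmid]
  exact key
end

section
/- In the 3-Dimensional Matching reduction, any swapping sequence from f_0 to f_t has length at least 3m; moreover, if a swapping sequence of length exactly 3m exists, then the set T' of vertices in T whose tokens are ever moved has size exactly m and forms a perfect 3-dimensional matching. -/
namespace TDM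

variable {X Y Z : Type*}

def colA : (X ⊕ Y ⊕ Z) → ℕ := Sum.elim (fun _ => 1) (Sum.elim (fun _ => 2) fun _ => 3)
def colB : (X ⊕ Y ⊕ Z) → ℕ := Sum.elim (fun _ => 2) (Sum.elim (fun _ => 3) fun _ => 1)

def pw : (X ⊕ Y ⊕ Z) → ℕ → ℤ
  | Sum.inl _, c => if c = 1 then -2 else if c = 3 then -1 else 0
  | Sum.inr (Sum.inl _), c => if c = 2 then -2 else if c = 1 then -1 else 0
  | Sum.inr (Sum.inr _), c => if c = 3 then -2 else if c = 2 then -1 else 0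

lemma pw_le (w : X ⊕ Y ⊕ Z) (c : ℕ) : pw w c ≤ 0 := by
  rcases w with x | y | z <;> simp only [pw] <;> split_ifs <;> omega

lemma pw_ge (w : X ⊕ Y ⊕ Z) (c : ℕ) : -2 ≤ pw w c := by
  rcases w with x | y | z <;> simp only [pw] <;> split_ifs <;> omega

lemma pw_colA (w : X ⊕ Y ⊕ Z) : pw w (colA w) = -2 := by
  rcases w with x | y | z <;> rfl

lemma pw_colB (w : X ⊕ Y ⊕ Z) : pw w (colB w) = 0 := by
  rcases w with x | y | z <;> rfl

lemma colA_ne_colB (w : X ⊕ Y ⊕ Z) : colA w ≠ colB w := by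
  rcases w with x | y | z <;> simp [colA, colB]

lemma eq_colA_of_pw {w : X ⊕ Y ⊕ Z} {c : ℕ} (h : pw w c = -2) : c = colA w := by
  rcases w with x | y | z <;>
    simp only [pw, colA, Sum.elim_inl, Sum.elim_inr] at h ⊢ <;>
    split_ifs at h <;> omega

lemma eq_colB_of_pw {w : X ⊕ Y ⊕ Z} {c : ℕ} (hc : c = 1 ∨ c = 2 ∨ c = 3)
    (h : pw w c = 0) : c = colB w := by
  rcases w with x | y | z <;>
    simp only [pw, colB, Sum.elim_inl, Sum.elim_inr] at h ⊢ <;>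
    split_ifs at h <;> omega

lemma colB_of_colA_one {w : X ⊕ Y ⊕ Z} (h : colA w = 1) : colB w = 2 := by
  rcases w with x | y | z <;> simp_all [colA, colB]

lemma colA_of_colB_one {w : X ⊕ Y ⊕ Z} (h : colB w = 1) : colA w = 3 := by
  rcases w with x | y | z <;> simp_all [colA, colB]

lemma adj_struct {T : Finset (X × Y × Z)}
    {u v : {t // t ∈ T} ⊕ (X ⊕ Y ⊕ Z)}
    (h : (SimpleGraph.fromRel (tdmRel T)).Adj u v) :
    ∃ t w, tdmRel T (Sum.inl t) (Sum.inr w) ∧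
      ((u = Sum.inl t ∧ v = Sum.inr w) ∨ (u = Sum.inr w ∧ v = Sum.inl t)) := by
  rw [SimpleGraph.fromRel_adj] at h
  obtain ⟨-, h | h⟩ := h
  · rcases u with t | w <;> rcases v with t' | w'
    · exact h.elim
    · exact ⟨t, w', h, Or.inl ⟨rfl, rfl⟩⟩
    · exact h.elim
    · exact h.elim
  · rcases u with t | w <;> rcases v with t' | w'
    · exact h.elim
    · exact h.elim
    · exact ⟨t', w, h, Or.inr ⟨rfl, rfl⟩⟩
    · exact h.elim

variable [Fintype X] [Fintype Y] [Fintype Z]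

def Φ (T : Finset (X × Y × Z)) (f : ({t // t ∈ T} ⊕ (X ⊕ Y ⊕ Z)) → ℕ) : ℤ :=
  ∑ w : X ⊕ Y ⊕ Z, pw w (f (Sum.inr w))

lemma Φ_f0 (T : Finset (X × Y × Z)) : Φ T (tdmF0 T) = 0 :=
  Finset.sum_eq_zero (by rintro (x | y | z) _ <;> rfl)

lemma Φ_ft (T : Finset (X × Y × Z)) :
    Φ T (tdmFt T) = -2 * ((Fintype.card X : ℤ) + Fintype.card Y + Fintype.card Z) := by
  unfold Φ
  have h : ∀ w : X ⊕ Y ⊕ Z, pw w ((tdmFt T) (Sum.inr w)) = -2 := by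
    rintro (x | y | z) <;> rfl
  rw [Finset.sum_congr rfl (fun w _ => h w), Finset.sum_const, Finset.card_univ,
    Fintype.card_sum, Fintype.card_sum]
  ring

lemma Φ_swap {T : Finset (X × Y × Z)} {f f' : ({t // t ∈ T} ⊕ (X ⊕ Y ⊕ Z)) → ℕ}
    {t : {t // t ∈ T}} {w : X ⊕ Y ⊕ Z}
    (h1 : f' (Sum.inr w) = f (Sum.inl t))
    (hoth : ∀ v, v ≠ Sum.inl t → v ≠ Sum.inr w → f' v = f v) :
    Φ T f' = Φ T f + (pw w (f (Sum.inl t)) - pw w (f (Sum.inr w))) := by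
  have key : ∀ w' : X ⊕ Y ⊕ Z, w' ≠ w → f' (Sum.inr w') = f (Sum.inr w') := by
    intro w' hw'
    exact hoth _ (by simp) (by simp [hw'])
  have hsum : Φ T f' - Φ T f
      = ∑ w' : X ⊕ Y ⊕ Z, (pw w' (f' (Sum.inr w')) - pw w' (f (Sum.inr w'))) := by
    rw [Φ, Φ, ← Finset.sum_sub_distrib]
  have h2 : ∑ w' : X ⊕ Y ⊕ Z, (pw w' (f' (Sum.inr w')) - pw w' (f (Sum.inr w')))
      = pw w (f' (Sum.inr w)) - pw w (f (Sum.inr w)) := by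
    refine Finset.sum_eq_single_of_mem w (Finset.mem_univ w) ?_
    intro w' _ hw'
    rw [key w' hw']
    ring
  rw [h1] at h2
  linarith [hsum, h2]

end TDM

open TDM

/-- In the 3DM reduction, every swapping sequence from the initial to the target
placement has length at least `3m`; and if it has length exactly `3m`, then the
set `T'` of triples of `T` whose tokens are ever moved has size exactly `m` and
forms a perfect 3-dimensional matching. -/
theorem tdm_lower_bound_and_matching {X Y Z : Type*}
    [Fintype X] [Fintype Y] [Fintype Z] (m : ℕ)
    (hX : Fintype.card X = m) (hY : Fintype.card Y = m) (hZ : Fintype.card Z = m)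
    (T : Finset (X × Y × Z)) (k : ℕ)
    (g : ℕ → ({t // t ∈ T} ⊕ (X ⊕ Y ⊕ Z)) → ℕ)
    (hg0 : g 0 = tdmF0 T) (hgk : g k = tdmFt T)
    (hstep : ∀ i < k, SwapStep (SimpleGraph.fromRel (tdmRel T)) (g i) (g (i + 1))) :
    3 * m ≤ k ∧
    (k = 3 * m →
      {t : {t // t ∈ T} | ∃ i < k, g (i + 1) (Sum.inl t) ≠ g i (Sum.inl t)}.ncard = m ∧
      (∀ x : X, ∃ t : {t // t ∈ T},
        (∃ i < k, g (i + 1) (Sum.inl t) ≠ g i (Sum.inl t)) ∧ t.1.1 = x) ∧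
      (∀ y : Y, ∃ t : {t // t ∈ T},
        (∃ i < k, g (i + 1) (Sum.inl t) ≠ g i (Sum.inl t)) ∧ t.1.2.1 = y) ∧
      (∀ z : Z, ∃ t : {t // t ∈ T},
        (∃ i < k, g (i + 1) (Sum.inl t) ≠ g i (Sum.inl t)) ∧ t.1.2.2 = z)) := by
  classical
  have stepdec : ∀ i, i < k → ∃ t w, tdmRel T (Sum.inl t) (Sum.inr w) ∧
      g (i+1) (Sum.inl t) = g i (Sum.inr w) ∧
      g (i+1) (Sum.inr w) = g i (Sum.inl t) ∧
      (∀ v, v ≠ Sum.inl t → v ≠ Sum.inr w → g (i+1) v = g i v) ∧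
      Φ T (g (i+1)) = Φ T (g i) + (pw w (g i (Sum.inl t)) - pw w (g i (Sum.inr w))) := by
    intro i hi
    obtain ⟨u, v, hadj, hu, hv, hoth⟩ := hstep i hi
    obtain ⟨t, w, hrel, hc⟩ := adj_struct hadj
    rcases hc with ⟨rfl, rfl⟩ | ⟨rfl, rfl⟩
    · exact ⟨t, w, hrel, hu, hv, fun v h1 h2 => hoth v h1 h2,
        Φ_swap hv (fun v h1 h2 => hoth v h1 h2)⟩
    · exact ⟨t, w, hrel, hv, hu, fun v h1 h2 => hoth v h2 h1,
        Φ_swap hu (fun v h1 h2 => hoth v h2 h1)⟩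
  have hP0 : Φ T (g 0) = 0 := by rw [hg0]; exact Φ_f0 T
  have hPk : Φ T (g k) = -(6 * (m : ℤ)) := by
    rw [hgk, Φ_ft, hX, hY, hZ]; push_cast; ring
  have hdec : ∀ i, i < k → Φ T (g i) - 2 ≤ Φ T (g (i+1)) := by
    intro i hi
    obtain ⟨t, w, -, -, -, -, hP⟩ := stepdec i hi
    have b1 := pw_ge w (g i (Sum.inl t))
    have b2 := pw_le w (g i (Sum.inr w))
    linarith
  have hlow : ∀ n, n ≤ k → -2 * (n : ℤ) ≤ Φ T (g n) := by
    intro n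
    induction n with
    | zero => intro _; simp [hP0]
    | succ n ih =>
      intro h
      have h1 := ih (by omega)
      have h2 := hdec n (by omega)
      push_cast
      linarith
  have hmain : 3 * m ≤ k := by
    have h := hlow k le_rfl
    rw [hPk] at h
    have : (3 * m : ℤ) ≤ k := by linarith
    exact_mod_cast this
  refine ⟨hmain, ?_⟩
  intro hk
  -- every step is tight
  have tele : ∑ i ∈ Finset.range k, (Φ T (g (i+1)) - Φ T (g i)) = Φ T (g k) - Φ T (g 0) :=
    Finset.sum_range_sub (fun n => Φ T (g n)) k
  have hzero : ∀ i ∈ Finset.range k, (2 : ℤ) + (Φ T (g (i+1)) - Φ T (g i)) = 0 := by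
    have hnn : ∀ i ∈ Finset.range k, (0:ℤ) ≤ 2 + (Φ T (g (i+1)) - Φ T (g i)) := by
      intro i hi
      have := hdec i (Finset.mem_range.mp hi)
      linarith
    have hsum : ∑ i ∈ Finset.range k, ((2:ℤ) + (Φ T (g (i+1)) - Φ T (g i))) = 0 := by
      rw [Finset.sum_add_distrib, tele, Finset.sum_const, Finset.card_range, hPk, hP0, hk]
      push_cast; ring
    exact fun i hi => (Finset.sum_eq_zero_iff_of_nonneg hnn).mp hsum i hi
  have hexact : ∀ i, i < k → Φ T (g (i+1)) = Φ T (g i) - 2 := by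
    intro i hi
    have := hzero i (Finset.mem_range.mpr hi)
    linarith
  -- colours stay in {1,2,3}
  have inv : ∀ i, i ≤ k → ∀ v, g i v = 1 ∨ g i v = 2 ∨ g i v = 3 := by
    intro i
    induction i with
    | zero =>
      intro _ v
      rw [hg0]
      rcases v with t | x | y | z <;> simp [tdmF0]
    | succ n ih =>
      intro hn v
      obtain ⟨u, v', hadj, hu, hv, hoth⟩ := hstep n (by omega)
      by_cases h1 : v = u
      · subst h1; rw [hu]; exact ih (by omega) v'
      by_cases h2 : v = v'
      · subst h2; rw [hv]; exact ih (by omega) u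
      · rw [hoth v h1 h2]; exact ih (by omega) v
  have tightH : ∀ i : Fin k, ∃ t w, tdmRel T (Sum.inl t) (Sum.inr w) ∧
      g i.1 (Sum.inl t) = colA w ∧ g i.1 (Sum.inr w) = colB w ∧
      g (i.1+1) (Sum.inl t) = colB w ∧ g (i.1+1) (Sum.inr w) = colA w ∧
      ∀ v, v ≠ Sum.inl t → v ≠ Sum.inr w → g (i.1+1) v = g i.1 v := by
    intro i
    obtain ⟨t, w, hrel, hs1, hs2, hoth, hP⟩ := stepdec i.1 i.isLt
    have hE := hexact i.1 i.isLt
    have b1 := pw_ge w (g i.1 (Sum.inl t))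
    have b2 := pw_le w (g i.1 (Sum.inr w))
    have b3 := pw_le w (g i.1 (Sum.inl t))
    have b4 := pw_ge w (g i.1 (Sum.inr w))
    have hA : pw w (g i.1 (Sum.inl t)) = -2 := by linarith
    have hB : pw w (g i.1 (Sum.inr w)) = 0 := by linarith
    have hcA := eq_colA_of_pw hA
    have hcB := eq_colB_of_pw (inv i.1 (le_of_lt i.isLt) _) hB
    exact ⟨t, w, hrel, hcA, hcB, by rw [hs1, hcB], by rw [hs2, hcA], hoth⟩
  choose tau sig hrel hgA hgB hgA' hgB' hothF using tightH
  have tchg : ∀ i : Fin k, g (i.1+1) (Sum.inl (tau i)) ≠ g i.1 (Sum.inl (tau i)) := by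
    intro i
    rw [hgA i, hgA' i]
    exact (colA_ne_colB (sig i)).symm
  have wchg : ∀ i : Fin k, g (i.1+1) (Sum.inr (sig i)) ≠ g i.1 (Sum.inr (sig i)) := by
    intro i
    rw [hgB i, hgB' i]
    exact colA_ne_colB (sig i)
  have chg : ∀ (i : Fin k) v, g (i.1+1) v ≠ g i.1 v →
      v = Sum.inl (tau i) ∨ v = Sum.inr (sig i) := by
    intro i v h
    by_contra hc
    push_neg at hc
    exact h (hothF i v hc.1 hc.2)
  have constg : ∀ (v) (a b : ℕ), a ≤ b →
      (∀ l, a ≤ l → l < b → g (l+1) v = g l v) → g b v = g a v := by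
    intro v a b hab h
    induction b, hab using Nat.le_induction with
    | base => rfl
    | succ n hn ih =>
      rw [h n hn (Nat.lt_succ_self n)]
      exact ih (fun l hl hl' => h l hl (by omega))
  -- each non-T vertex is touched by at most one step
  have mainσ : ∀ i j : Fin k, (i : ℕ) < (j : ℕ) → sig i ≠ sig j := by
    intro i j hij hs
    set F := (Finset.Ioo (i:ℕ) k).filter
      (fun l => g (l+1) (Sum.inr (sig i)) ≠ g l (Sum.inr (sig i))) with hFdef
    have hjF : (j:ℕ) ∈ F := by
      simp only [hFdef, Finset.mem_filter, Finset.mem_Ioo]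
      exact ⟨⟨hij, j.isLt⟩, by rw [hs]; exact wchg j⟩
    have hne : F.Nonempty := ⟨j, hjF⟩
    set l := F.min' hne with hl
    have hlF : l ∈ F := F.min'_mem hne
    have hlm : ((i:ℕ) < l ∧ l < k) ∧ g (l+1) (Sum.inr (sig i)) ≠ g l (Sum.inr (sig i)) := by
      simpa [hFdef, Finset.mem_filter, Finset.mem_Ioo] using hlF
    have hlk : l < k := hlm.1.2
    have hσl : sig ⟨l, hlk⟩ = sig i := by
      rcases chg ⟨l, hlk⟩ (Sum.inr (sig i)) hlm.2 with h | h
      · exact absurd h (by simp)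
      · exact (Sum.inr.inj h).symm
    have hconst : g l (Sum.inr (sig i)) = g ((i:ℕ)+1) (Sum.inr (sig i)) := by
      apply constg _ _ _ (by omega)
      intro l' h1 h2
      by_contra hc
      have hmem : l' ∈ F := by
        simp only [hFdef, Finset.mem_filter, Finset.mem_Ioo]
        exact ⟨⟨by omega, by omega⟩, hc⟩
      have := F.min'_le _ hmem
      omega
    have e1 : g l (Sum.inr (sig i)) = colB (sig i) := by
      have := hgB ⟨l, hlk⟩
      rw [hσl] at this
      exact this
    have e2 : g ((i:ℕ)+1) (Sum.inr (sig i)) = colA (sig i) := hgB' i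
    exact colA_ne_colB (sig i) (by rw [← e2, ← hconst, e1])
  have injσ : Function.Injective sig := by
    intro i j hij
    by_contra hne
    have hne' : (i:ℕ) ≠ (j:ℕ) := fun h => hne (Fin.ext h)
    rcases lt_or_gt_of_ne hne' with h | h
    · exact mainσ i j h hij
    · exact mainσ j i h hij.symm
  have surjσ : Function.Surjective sig := by
    have hcard : Fintype.card (Fin k) = Fintype.card (X ⊕ Y ⊕ Z) := by
      simp only [Fintype.card_fin, Fintype.card_sum, hX, hY, hZ, hk]
      ring
    exact ((Fintype.bijective_iff_injective_and_card sig).mpr ⟨injσ, hcard⟩).2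
  have tmem : ∀ i : Fin k, ∃ i' < k,
      g (i'+1) (Sum.inl (tau i)) ≠ g i' (Sum.inl (tau i)) :=
    fun i => ⟨i.1, i.isLt, tchg i⟩
  -- the moved set is the image of tau
  have hset : {t : {t // t ∈ T} | ∃ i < k, g (i + 1) (Sum.inl t) ≠ g i (Sum.inl t)}
      = ↑(Finset.image tau Finset.univ) := by
    ext t
    simp only [Set.mem_setOf_eq, Finset.coe_image, Finset.coe_univ, Set.image_univ,
      Set.mem_range]
    constructor
    · rintro ⟨i, hik, hne⟩
      rcases chg ⟨i, hik⟩ (Sum.inl t) hne with h | h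
      · exact ⟨⟨i, hik⟩, (Sum.inl.inj h).symm⟩
      · exact absurd h (by simp)
    · rintro ⟨i, rfl⟩
      exact tmem i
  -- lower bound on the image
  choose ixf hixf using fun x : X => surjσ (Sum.inl x)
  have hfX : ∀ x : X, (tau (ixf x)).1.1 = x := by
    intro x
    have h := hrel (ixf x)
    rw [hixf x] at h
    exact h
  have hge : m ≤ (Finset.image tau Finset.univ).card := by
    calc m = Fintype.card X := hX.symm
      _ = (Finset.univ : Finset X).card := (Finset.card_univ).symm
      _ ≤ (Finset.image tau Finset.univ).card := by
          refine Finset.card_le_card_of_injOn (fun x : X => tau (ixf x))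
            (fun x _ => Finset.mem_image_of_mem tau (Finset.mem_univ _)) ?_
          intro x _ x' _ h
          have h' : tau (ixf x) = tau (ixf x') := h
          rw [← hfX x, ← hfX x', h']
  -- upper bound on the image
  have hcov : Finset.range k = (Finset.image tau Finset.univ).biUnion
      (fun t => (Finset.range k).filter
        (fun l => g (l+1) (Sum.inl t) ≠ g l (Sum.inl t))) := by
    ext l
    simp only [Finset.mem_biUnion, Finset.mem_filter, Finset.mem_range, Finset.mem_image,
      Finset.mem_univ, true_and]
    constructor
    · intro hl
      exact ⟨tau ⟨l, hl⟩, ⟨⟨l, hl⟩, rfl⟩, hl, tchg ⟨l, hl⟩⟩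
    · rintro ⟨t, -, hl, -⟩
      exact hl
  have hdisj : ∀ t1 ∈ Finset.image tau Finset.univ, ∀ t2 ∈ Finset.image tau Finset.univ,
      t1 ≠ t2 → Disjoint
        ((Finset.range k).filter (fun l => g (l+1) (Sum.inl t1) ≠ g l (Sum.inl t1)))
        ((Finset.range k).filter (fun l => g (l+1) (Sum.inl t2) ≠ g l (Sum.inl t2))) := by
    intro t1 _m1 t2 _m2 hne
    refine Finset.disjoint_left.mpr ?_
    intro l h1 h2
    simp only [Finset.mem_filter, Finset.mem_range] at h1 h2
    have e1 := chg ⟨l, h1.1⟩ _ h1.2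
    have e2 := chg ⟨l, h2.1⟩ _ h2.2
    rcases e1 with h | h
    · rcases e2 with h' | h'
      · exact hne (by rw [Sum.inl.inj h, Sum.inl.inj h'])
      · exact absurd h' (by simp)
    · exact absurd h (by simp)
  have hksum : k = ∑ t ∈ Finset.image tau Finset.univ,
      ((Finset.range k).filter (fun l => g (l+1) (Sum.inl t) ≠ g l (Sum.inl t))).card := by
    rw [← Finset.card_biUnion hdisj, ← hcov, Finset.card_range]
  have h3 : ∀ t ∈ Finset.image tau Finset.univ,
      3 ≤ ((Finset.range k).filter
        (fun l => g (l+1) (Sum.inl t) ≠ g l (Sum.inl t))).card := by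
    intro t ht
    obtain ⟨i0, -, hi0⟩ := Finset.mem_image.mp ht
    subst hi0
    set F := (Finset.range k).filter
      (fun l => g (l+1) (Sum.inl (tau i0)) ≠ g l (Sum.inl (tau i0))) with hFdef
    have hmemF : ∀ l, l ∈ F ↔ l < k ∧ g (l+1) (Sum.inl (tau i0)) ≠ g l (Sum.inl (tau i0)) := by
      intro l
      simp [hFdef, Finset.mem_filter, Finset.mem_range]
    have hFne : F.Nonempty := ⟨i0.1, (hmemF _).mpr ⟨i0.isLt, tchg i0⟩⟩
    set a := F.min' hFne with ha
    set b := F.max' hFne with hb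
    have haF := F.min'_mem hFne
    have hbF := F.max'_mem hFne
    have hak : a < k := ((hmemF a).mp haF).1
    have hbk : b < k := ((hmemF b).mp hbF).1
    -- the tau index at each step of F agrees
    have hτ : ∀ l (hlk : l < k), l ∈ F → tau ⟨l, hlk⟩ = tau i0 := by
      intro l hlk hlF
      rcases chg ⟨l, hlk⟩ _ ((hmemF l).mp hlF).2 with h | h
      · exact (Sum.inl.inj h).symm
      · exact absurd h (by simp)
    -- before a
    have ha0 : g a (Sum.inl (tau i0)) = 1 := by
      have hc : g a (Sum.inl (tau i0)) = g 0 (Sum.inl (tau i0)) := by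
        apply constg _ _ _ (Nat.zero_le a)
        intro l hl hl'
        by_contra hcn
        have : l ∈ F := (hmemF l).mpr ⟨by omega, hcn⟩
        have := F.min'_le _ this
        omega
      rw [hc, hg0]
      rfl
    have haA : colA (sig ⟨a, hak⟩) = 1 := by
      have h := hgA ⟨a, hak⟩
      rw [hτ a hak haF] at h
      rw [← h]
      exact ha0
    have ha1 : g (a+1) (Sum.inl (tau i0)) = 2 := by
      have h := hgA' ⟨a, hak⟩
      rw [hτ a hak haF] at h
      rw [h]
      exact colB_of_colA_one haA
    -- after b
    have hb1 : g (b+1) (Sum.inl (tau i0)) = 1 := by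
      have hc : g k (Sum.inl (tau i0)) = g (b+1) (Sum.inl (tau i0)) := by
        apply constg _ _ _ (by omega)
        intro l hl hl'
        by_contra hcn
        have : l ∈ F := (hmemF l).mpr ⟨by omega, hcn⟩
        have := F.le_max' _ this
        omega
      rw [← hc, hgk]
      rfl
    have hbB : colB (sig ⟨b, hbk⟩) = 1 := by
      have h := hgA' ⟨b, hbk⟩
      rw [hτ b hbk hbF] at h
      rw [← h]
      exact hb1
    have hb0 : g b (Sum.inl (tau i0)) = 3 := by
      have h := hgA ⟨b, hbk⟩
      rw [hτ b hbk hbF] at h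
      rw [h]
      exact colA_of_colB_one hbB
    have hab : a < b := by
      have hne2 : a ≠ b := by
        intro h
        rw [h] at ha1
        omega
      exact lt_of_le_of_ne (F.min'_le b hbF) hne2
    -- a middle step exists
    by_contra hcard
    push_neg at hcard
    have habne : a ≠ b := Nat.ne_of_lt hab
    have hsub : ({a, b} : Finset ℕ) ⊆ F := by
      intro l hl
      rcases Finset.mem_insert.mp hl with rfl | hl
      · exact haF
      · rw [Finset.mem_singleton.mp hl]; exact hbF
    have hFeq : ({a, b} : Finset ℕ) = F := by
      apply Finset.eq_of_subset_of_card_le hsub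
      rw [Finset.card_pair habne]
      omega
    have hmid : g b (Sum.inl (tau i0)) = g (a+1) (Sum.inl (tau i0)) := by
      apply constg _ _ _ (by omega)
      intro l hl hl'
      by_contra hcn
      have hlF : l ∈ F := (hmemF l).mpr ⟨by omega, hcn⟩
      rw [← hFeq] at hlF
      rcases Finset.mem_insert.mp hlF with rfl | hlF
      · omega
      · rw [Finset.mem_singleton.mp hlF] at hl'
        omega
    rw [hb0, ha1] at hmid
    omega
  have hle : (Finset.image tau Finset.univ).card ≤ m := by
    have hsum : 3 * (Finset.image tau Finset.univ).card
        ≤ ∑ t ∈ Finset.image tau Finset.univ,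
          ((Finset.range k).filter
            (fun l => g (l+1) (Sum.inl t) ≠ g l (Sum.inl t))).card := by
      calc 3 * (Finset.image tau Finset.univ).card
          = ∑ _t ∈ Finset.image tau Finset.univ, 3 := by
            rw [Finset.sum_const, smul_eq_mul]; ring
        _ ≤ _ := Finset.sum_le_sum h3
    omega
  refine ⟨?_, ?_, ?_, ?_⟩
  · rw [hset, Set.ncard_coe_finset]
    omega
  · intro x
    obtain ⟨i, hi⟩ := surjσ (Sum.inl x)
    refine ⟨tau i, tmem i, ?_⟩
    have h := hrel i
    rw [hi] at h
    exact h
  · intro y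
    obtain ⟨i, hi⟩ := surjσ (Sum.inr (Sum.inl y))
    refine ⟨tau i, tmem i, ?_⟩
    have h := hrel i
    rw [hi] at h
    exact h
  · intro z
    obtain ⟨i, hi⟩ := surjσ (Sum.inr (Sum.inr z))
    refine ⟨tau i, tmem i, ?_⟩
    have h := hrel i
    rw [hi] at h
    exact h
end

section
/- Let G be a graph of maximum degree at most 2 (so each component is a path or a cycle), and let f_0, f_t be token-placements with colors from {1,...,c}. On a path component, a shortest swapping sequence induces a unique order-preserving matching between the color-i tokens of f_0 and the color-i target positions of f_t for each color i. -/
lemma swap_lt {n : ℕ} {s t p q : Fin n} (hst : (s : ℕ) + 1 = (t : ℕ))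
    (hpq : p < q) (hns : ¬(p = s ∧ q = t)) :
    Equiv.swap s t p < Equiv.swap s t q := by
  have hstne : s ≠ t := by intro h; rw [h] at hst; omega
  have key : ∀ x : Fin n, ((Equiv.swap s t x : Fin n) : ℕ) =
      if (x : ℕ) = (s : ℕ) then (t : ℕ) else if (x : ℕ) = (t : ℕ) then (s : ℕ) else (x : ℕ) := by
    intro x
    rcases eq_or_ne x s with rfl | hxs
    · simp [Equiv.swap_apply_left]
    · rcases eq_or_ne x t with rfl | hxt
      · simp [Equiv.swap_apply_right, Fin.val_ne_of_ne hstne,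
          (Fin.val_ne_of_ne (Ne.symm hstne))]
      · rw [Equiv.swap_apply_of_ne_of_ne hxs hxt,
          if_neg (fun h => hxs (Fin.val_injective h)),
          if_neg (fun h => hxt (Fin.val_injective h))]
  have hns' : ¬((p : ℕ) = (s : ℕ) ∧ (q : ℕ) = (t : ℕ)) := by
    intro ⟨h1, h2⟩
    exact hns ⟨Fin.val_injective h1, Fin.val_injective h2⟩
  have hpq' : (p : ℕ) < (q : ℕ) := hpq
  rw [Fin.lt_def, key p, key q]
  split_ifs <;> omega

lemma rank_lemma {n c : ℕ} (f0 ft : Fin n → Fin c) (σ : Equiv.Perm (Fin n))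
    (h1 : ∀ v, ft (σ v) = f0 v)
    (h2 : ∀ a b : Fin n, a < b → f0 a = f0 b → σ a < σ b) (v : Fin n) :
    (Finset.univ.filter fun w => w < σ v ∧ ft w = f0 v).card =
      (Finset.univ.filter fun a => a < v ∧ f0 a = f0 v).card := by
  apply Finset.card_bij' (fun w _ => σ.symm w) (fun a _ => σ a)
  · intro w hw
    simp only [Finset.mem_filter, Finset.mem_univ, true_and] at hw ⊢
    obtain ⟨hw1, hw2⟩ := hw
    have hcol : f0 (σ.symm w) = f0 v := by
      have := h1 (σ.symm w); rw [Equiv.apply_symm_apply] at this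
      rw [← this, hw2]
    refine ⟨?_, hcol⟩
    rcases lt_trichotomy (σ.symm w) v with h | h | h
    · exact h
    · exfalso
      have hw : w = σ v := by rw [← h, Equiv.apply_symm_apply]
      rw [hw] at hw1; exact lt_irrefl _ hw1
    · exfalso
      have := h2 v (σ.symm w) h hcol.symm
      rw [Equiv.apply_symm_apply] at this
      exact absurd hw1 (not_lt.mpr this.le)
  · intro a ha
    simp only [Finset.mem_filter, Finset.mem_univ, true_and] at ha ⊢
    exact ⟨h2 a v ha.1 ha.2, (h1 a).trans ha.2⟩
  · intro w _; exact Equiv.apply_symm_apply σ w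
  · intro a _; exact Equiv.symm_apply_apply σ a

lemma perm_unique {n c : ℕ} (f0 ft : Fin n → Fin c) (σ τ : Equiv.Perm (Fin n))
    (hσ1 : ∀ v, ft (σ v) = f0 v)
    (hσ2 : ∀ a b : Fin n, a < b → f0 a = f0 b → σ a < σ b)
    (hτ1 : ∀ v, ft (τ v) = f0 v)
    (hτ2 : ∀ a b : Fin n, a < b → f0 a = f0 b → τ a < τ b) : σ = τ := by
  have key : ∀ (σ' τ' : Equiv.Perm (Fin n)),
      (∀ v, ft (σ' v) = f0 v) → (∀ a b : Fin n, a < b → f0 a = f0 b → σ' a < σ' b) →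
      (∀ v, ft (τ' v) = f0 v) → (∀ a b : Fin n, a < b → f0 a = f0 b → τ' a < τ' b) →
      ∀ v : Fin n, ¬ (σ' v < τ' v) := by
    intro σ' τ' h1 h2 h3 h4 v hlt
    have hr : (Finset.univ.filter fun w => w < σ' v ∧ ft w = f0 v).card =
        (Finset.univ.filter fun w => w < τ' v ∧ ft w = f0 v).card := by
      rw [rank_lemma f0 ft σ' h1 h2 v, rank_lemma f0 ft τ' h3 h4 v]
    have hsub : insert (σ' v) (Finset.univ.filter fun w => w < σ' v ∧ ft w = f0 v) ⊆
        (Finset.univ.filter fun w => w < τ' v ∧ ft w = f0 v) := by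
      intro x hx
      simp only [Finset.mem_insert, Finset.mem_filter, Finset.mem_univ, true_and] at hx ⊢
      rcases hx with rfl | ⟨hx1, hx2⟩
      · exact ⟨hlt, h1 v⟩
      · exact ⟨hx1.trans hlt, hx2⟩
    have hnotmem : σ' v ∉ (Finset.univ.filter fun w => w < σ' v ∧ ft w = f0 v) := by
      simp
    have := Finset.card_le_card hsub
    rw [Finset.card_insert_of_notMem hnotmem] at this
    omega
  ext v
  rcases lt_trichotomy (σ v) (τ v) with h | h | h
  · exact absurd h (key σ τ hσ1 hσ2 hτ1 hτ2 v)
  · exact congrArg Fin.val h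
  · exact absurd h (key τ σ hτ1 hτ2 hσ1 hσ2 v)



/-- On a path, a shortest swapping sequence from `f0` to `ft` induces a unique
matching between the color-`i` tokens of `f0` and the color-`i` target positions
of `ft` for each color `i`, and this matching is order-preserving: the induced
permutation `π` (obtained by tracking tokens along the sequence, which never
swaps two same-colored tokens) sends the `j`-th token of each color to the
`j`-th target position of that color. -/
theorem path_shortest_sequence_order_preserving_matching (n c k : ℕ)
    (f0 ft : Fin n → Fin c) (g : ℕ → Fin n → Fin c)
    (hg0 : g 0 = f0) (hgk : g k = ft)
    (hstep : ∀ i < k, SwapStep (SimpleGraph.pathGraph n) (g i) (g (i + 1)))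
    (hmin : ∀ k', Reach (SimpleGraph.pathGraph n) f0 ft k' → k ≤ k') :
    ∃! π : Equiv.Perm (Fin n),
      ((∀ v, ft (π v) = f0 v) ∧
        (∀ u v : Fin n, u < v → f0 u = f0 v → π u < π v)) ∧
      ∃ h : ℕ → Equiv.Perm (Fin n), h 0 = Equiv.refl (Fin n) ∧ h k = π ∧
        (∀ i ≤ k, ∀ v, g i (h i v) = f0 v) ∧
        (∀ i < k, ∃ u w : Fin n, (SimpleGraph.pathGraph n).Adj u w ∧
          h (i + 1) = (h i).trans (Equiv.swap u w)) := by
  have hstep' := hstep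
  simp only [SwapStep] at hstep
  choose u v hadj hu hv hw using hstep
  -- the step relation pointwise
  have hgswap : ∀ i (hik : i < k), ∀ x, g (i+1) (Equiv.swap (u i hik) (v i hik) x) = g i x := by
    intro i hik x
    rcases eq_or_ne x (u i hik) with rfl | hxu
    · rw [Equiv.swap_apply_left]; exact hv i hik
    · rcases eq_or_ne x (v i hik) with rfl | hxv
      · rw [Equiv.swap_apply_right]; exact hu i hik
      · rw [Equiv.swap_apply_of_ne_of_ne hxu hxv]; exact hw i hik x hxu hxv
  -- distinct colors at each swap
  have hcol : ∀ i (hik : i < k), g i (u i hik) ≠ g i (v i hik) := by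
    intro i hik hEq
    have hgg : g (i + 1) = g i := by
      funext x
      rcases eq_or_ne x (u i hik) with rfl | hxu
      · rw [hu i hik, hEq]
      · rcases eq_or_ne x (v i hik) with rfl | hxv
        · rw [hv i hik, hEq]
        · exact hw i hik x hxu hxv
    have hreach : Reach (SimpleGraph.pathGraph n) f0 ft (k - 1) := by
      refine ⟨fun j => if j ≤ i then g j else g (j + 1), by simp [hg0], ?_, ?_⟩
      · by_cases h : k - 1 ≤ i
        · have hi : i = k - 1 := by omega
          have hik1 : i + 1 = k := by omega
          simp only [if_pos h]
          rw [← hi, ← hgg, hik1, hgk]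
        · simp only [if_neg h]
          have : k - 1 + 1 = k := by omega
          rw [this, hgk]
      · intro j hj
        by_cases hja : j + 1 ≤ i
        · simp only [if_pos (by omega : j ≤ i), if_pos hja]
          exact hstep' j (by omega)
        · by_cases hji : j ≤ i
          · have hji' : j = i := by omega
            simp only [if_pos hji, if_neg hja]
            rw [hji', ← hgg]
            exact hstep' (i + 1) (by omega)
          · simp only [if_neg hji, if_neg (by omega : ¬ j + 1 ≤ i)]
            exact hstep' (j + 1) (by omega)
    have := hmin (k - 1) hreach
    omega
  -- the token-tracking permutations
  let H : ℕ → Equiv.Perm (Fin n) := fun i =>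
    Nat.rec (Equiv.refl (Fin n))
      (fun i ih => if hik : i < k then ih.trans (Equiv.swap (u i hik) (v i hik)) else ih) i
  have hH0 : H 0 = Equiv.refl (Fin n) := rfl
  have hHsucc : ∀ i (hik : i < k),
      H (i + 1) = (H i).trans (Equiv.swap (u i hik) (v i hik)) := by
    intro i hik
    show (if hik : i < k then _ else _) = _
    rw [dif_pos hik]
  -- combined invariant
  have hinv : ∀ i, i ≤ k → (∀ x, g i (H i x) = f0 x) ∧
      (∀ a b : Fin n, a < b → f0 a = f0 b → H i a < H i b) := by
    intro i
    induction i with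
    | zero => intro _; refine ⟨fun x => by rw [hH0]; simp [hg0], fun a b hab _ => by
        rw [hH0]; simpa using hab⟩
    | succ i ih =>
      intro hik1
      have hik : i < k := by omega
      obtain ⟨ih1, ih2⟩ := ih (by omega)
      constructor
      · intro x
        rw [hHsucc i hik]
        simp only [Equiv.trans_apply]
        rw [hgswap i hik]
        exact ih1 x
      · intro a b hab hcolab
        rw [hHsucc i hik]
        simp only [Equiv.trans_apply]
        have hplt := ih2 a b hab hcolab
        have hgpq : g i (H i a) = g i (H i b) := by rw [ih1 a, ih1 b, hcolab]
        have hadj' := (SimpleGraph.pathGraph_adj).mp (hadj i hik)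
        rcases hadj' with hcase | hcase
        · refine swap_lt hcase hplt ?_
          rintro ⟨h1, h2⟩
          rw [h1, h2] at hgpq
          exact hcol i hik hgpq
        · rw [Equiv.swap_comm]
          refine swap_lt hcase hplt ?_
          rintro ⟨h1, h2⟩
          rw [h1, h2] at hgpq
          exact hcol i hik hgpq.symm
  obtain ⟨hinv1, hinv2⟩ := hinv k le_rfl
  refine ⟨H k, ⟨⟨fun x => by rw [← hgk]; exact hinv1 x, hinv2⟩,
    H, hH0, rfl, fun i hik x => (hinv i hik).1 x,
    fun i hik => ⟨u i hik, v i hik, hadj i hik, hHsucc i hik⟩⟩, ?_⟩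
  rintro π ⟨⟨hπ1, hπ2⟩, -⟩
  exact perm_unique f0 ft π (H k) hπ1 hπ2 (fun x => by rw [← hgk]; exact hinv1 x) hinv2
end
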